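/- arXiv:math/0406246 — 14 statements merged into one kernel-verified Lean document; each statement's English description precedes it below -/
import Mathlib

section
/- For distinct points z1=(x1,y1), z2=(x2,y2), z3=(x3,y3) in Z^2, the tristance d3(z1,z2,z3) equals (max{x1,x2,x3} - min{x1,x2,x3}) + (max{y1,y2,y3} - min{y1,y2,y3}). -/
/-- The grid graph of `ℤ²`: edges join points at `L₁`-distance 1. -/
def gridGraph : SimpleGraph (ℤ × ℤ) where
  Adj z w := |z.1 - w.1| + |z.2 - w.2| = 1
  symm := by
    constructor
    intro z w h
    beta_reduce at h ⊢
    rw [abs_sub_comm w.1, abs_sub_comm w.2]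
    exact h
  loopless := by constructor; intro z h; simp at h

/-- Tristance: the minimum number of edges of a subtree of the grid graph
containing the three points; equivalently, one less than the minimum
cardinality of a connected set of vertices containing the three points. -/
noncomputable def tristance (z1 z2 z3 : ℤ × ℤ) : ℕ :=
  sInf {n : ℕ | ∃ S : Finset (ℤ × ℤ), z1 ∈ S ∧ z2 ∈ S ∧ z3 ∈ S ∧
    (gridGraph.induce (S : Set (ℤ × ℤ))).Connected ∧ S.card = n + 1}

lemma walk_len_ge {S : Set (ℤ × ℤ)} {a b : ↥S}
    (W : (gridGraph.induce S).Walk a b) :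
    |(a:ℤ×ℤ).1 - (b:ℤ×ℤ).1| + |(a:ℤ×ℤ).2 - (b:ℤ×ℤ).2| ≤ (W.length : ℤ) := by
  induction W with
  | nil => simp
  | cons h p ih =>
    rename_i u v w
    have hadj : |(u:ℤ×ℤ).1 - (v:ℤ×ℤ).1| + |(u:ℤ×ℤ).2 - (v:ℤ×ℤ).2| = 1 := h
    rw [SimpleGraph.Walk.length_cons]
    push_cast
    have h1 := abs_sub_le (u:ℤ×ℤ).1 (v:ℤ×ℤ).1 (w:ℤ×ℤ).1
    have h2 := abs_sub_le (u:ℤ×ℤ).2 (v:ℤ×ℤ).2 (w:ℤ×ℤ).2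
    linarith

lemma firstHit {V : Type*} {G : SimpleGraph V} {a b : V} (Q : G.Walk a b)
    (T : List V) (hb : b ∈ T) :
    ∃ (w : V) (Q1 : G.Walk a w), w ∈ T ∧ Q1.support ⊆ Q.support ∧
      (∀ v ∈ Q1.support, v ∈ T → v = w) := by
  classical
  induction Q with
  | nil => exact ⟨_, SimpleGraph.Walk.nil, hb, by simp, by simp⟩
  | cons h p ih =>
    rename_i u v w
    by_cases hu : u ∈ T
    · exact ⟨_, SimpleGraph.Walk.nil, hu, by simp, by simp⟩
    · obtain ⟨x, Q1, hx, hsub, hfirst⟩ := ih hb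
      refine ⟨x, SimpleGraph.Walk.cons h Q1, hx, ?_, ?_⟩
      · intro y hy
        rw [SimpleGraph.Walk.support_cons] at hy ⊢
        rcases List.mem_cons.mp hy with rfl | hy
        · exact List.mem_cons_self
        · exact List.mem_cons_of_mem _ (hsub hy)
      · intro y hy hyT
        rw [SimpleGraph.Walk.support_cons] at hy
        rcases List.mem_cons.mp hy with rfl | hy
        · exact absurd hyT hu
        · exact hfirst y hy hyT

set_option maxHeartbeats 1000000 in
lemma lower_bound (z1 z2 z3 : ℤ × ℤ) (S : Finset (ℤ × ℤ))
    (h1 : z1 ∈ S) (h2 : z2 ∈ S) (h3 : z3 ∈ S)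
    (hc : (gridGraph.induce (S : Set (ℤ × ℤ))).Connected) :
    (max z1.1 (max z2.1 z3.1) - min z1.1 (min z2.1 z3.1)) +
      (max z1.2 (max z2.2 z3.2) - min z1.2 (min z2.2 z3.2)) + 1 ≤ (S.card : ℤ) := by
  classical
  set G := gridGraph.induce (S : Set (ℤ × ℤ))
  have h1' : z1 ∈ (S : Set (ℤ × ℤ)) := h1
  have h2' : z2 ∈ (S : Set (ℤ × ℤ)) := h2
  have h3' : z3 ∈ (S : Set (ℤ × ℤ)) := h3
  set a : ↥(S : Set (ℤ × ℤ)) := ⟨z1, h1'⟩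
  set b : ↥(S : Set (ℤ × ℤ)) := ⟨z2, h2'⟩
  set c : ↥(S : Set (ℤ × ℤ)) := ⟨z3, h3'⟩
  obtain ⟨W12⟩ := hc.preconnected a b
  obtain ⟨W31⟩ := hc.preconnected c a
  set P : G.Path a b := W12.toPath
  have haP : a ∈ P.val.support := P.val.start_mem_support
  obtain ⟨w, Q1, hwP, _, hfirst⟩ := firstHit W31.toPath.val P.val.support haP
  set Q2 : G.Path c w := Q1.toPath
  have hQ2sub : Q2.val.support ⊆ Q1.support := Q1.support_toPath_subset
  -- finsets
  set F1 : Finset ↥(S : Set (ℤ × ℤ)) := P.val.support.toFinset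
  set F2 : Finset ↥(S : Set (ℤ × ℤ)) := Q2.val.support.toFinset
  have hF1card : F1.card = P.val.length + 1 := by
    rw [List.toFinset_card_of_nodup P.prop.support_nodup]
    exact P.val.length_support
  have hF2card : F2.card = Q2.val.length + 1 := by
    rw [List.toFinset_card_of_nodup Q2.prop.support_nodup]
    exact Q2.val.length_support
  have hinter : F1 ∩ F2 ⊆ {w} := by
    intro y hy
    rw [Finset.mem_inter] at hy
    have hy1 : y ∈ P.val.support := List.mem_toFinset.mp hy.1
    have hy2 : y ∈ Q1.support := hQ2sub (List.mem_toFinset.mp hy.2)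
    simp [hfirst y hy2 hy1]
  have hcard_union : (F1 ∪ F2).card ≤ S.card := by
    have := Finset.card_le_univ (F1 ∪ F2)
    simpa using this
  have hcards : F1.card + F2.card ≤ (F1 ∪ F2).card + 1 := by
    have := Finset.card_union_add_card_inter F1 F2
    have h2 : (F1 ∩ F2).card ≤ 1 := le_trans (Finset.card_le_card hinter) (by simp)
    omega
  -- length bounds
  have hwP' := haP
  have hsplit := P.val.take_spec hwP
  have hlenP : (P.val.takeUntil w hwP).length + (P.val.dropUntil w hwP).length
      = P.val.length := by
    conv_rhs => rw [← hsplit]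
    rw [SimpleGraph.Walk.length_append]
  have l1 : |z1.1 - (w:ℤ×ℤ).1| + |z1.2 - (w:ℤ×ℤ).2|
      ≤ ((P.val.takeUntil w hwP).length : ℤ) := walk_len_ge (P.val.takeUntil w hwP)
  have l2 : |(w:ℤ×ℤ).1 - z2.1| + |(w:ℤ×ℤ).2 - z2.2|
      ≤ ((P.val.dropUntil w hwP).length : ℤ) := walk_len_ge (P.val.dropUntil w hwP)
  have l3 : |z3.1 - (w:ℤ×ℤ).1| + |z3.2 - (w:ℤ×ℤ).2|
      ≤ ((Q2.val.length) : ℤ) := walk_len_ge Q2.val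
  have key : |z1.1 - (w:ℤ×ℤ).1| + |z1.2 - (w:ℤ×ℤ).2|
      + (|(w:ℤ×ℤ).1 - z2.1| + |(w:ℤ×ℤ).2 - z2.2|)
      + (|z3.1 - (w:ℤ×ℤ).1| + |z3.2 - (w:ℤ×ℤ).2|) + 1 ≤ (S.card : ℤ) := by
    have e1 : ((F1 ∪ F2).card : ℤ) ≤ (S.card : ℤ) := by exact_mod_cast hcard_union
    have e2 : (F1.card : ℤ) + F2.card ≤ ((F1 ∪ F2).card : ℤ) + 1 := by exact_mod_cast hcards
    have e3 : (P.val.length : ℤ) + 1 = (F1.card : ℤ) := by exact_mod_cast hF1card.symm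
    have e4 : (Q2.val.length : ℤ) + 1 = (F2.card : ℤ) := by exact_mod_cast hF2card.symm
    have e5 : ((P.val.takeUntil w hwP).length : ℤ) + (P.val.dropUntil w hwP).length
        = (P.val.length : ℤ) := by exact_mod_cast hlenP
    linarith
  have hx : max z1.1 (max z2.1 z3.1) - min z1.1 (min z2.1 z3.1)
      ≤ |z1.1 - (w:ℤ×ℤ).1| + |(w:ℤ×ℤ).1 - z2.1| + |z3.1 - (w:ℤ×ℤ).1| := by
    simp only [abs_eq_max_neg]; omega
  have hy : max z1.2 (max z2.2 z3.2) - min z1.2 (min z2.2 z3.2)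
      ≤ |z1.2 - (w:ℤ×ℤ).2| + |(w:ℤ×ℤ).2 - z2.2| + |z3.2 - (w:ℤ×ℤ).2| := by
    simp only [abs_eq_max_neg]; omega
  linarith

lemma reach_horiz (T : Set (ℤ × ℤ)) (y : ℤ) :
    ∀ n : ℕ, ∀ a b : ℤ, b = a + n →
    (∀ x, a ≤ x → x ≤ b → (x, y) ∈ T) →
    ∀ (ha : (a, y) ∈ T) (hb : (b, y) ∈ T),
    (gridGraph.induce T).Reachable ⟨(a, y), ha⟩ ⟨(b, y), hb⟩ := by
  intro n
  induction n with
  | zero =>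
    intro a b hb0 _ ha hbm
    have : a = b := by omega
    subst this
    exact SimpleGraph.Reachable.refl _
  | succ n ih =>
    intro a b hb hmem ha hbm
    have hstep : (gridGraph.induce T).Adj ⟨(a, y), ha⟩
        ⟨(a + 1, y), hmem (a + 1) (by omega) (by omega)⟩ := by
      show |a - (a + 1)| + |y - y| = 1
      simp
    exact hstep.reachable.trans
      (ih (a + 1) b (by omega) (fun x hx hx' => hmem x (by omega) hx') _ _)

lemma reach_vert (T : Set (ℤ × ℤ)) (x : ℤ) :
    ∀ n : ℕ, ∀ a b : ℤ, b = a + n →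
    (∀ y, a ≤ y → y ≤ b → (x, y) ∈ T) →
    ∀ (ha : (x, a) ∈ T) (hb : (x, b) ∈ T),
    (gridGraph.induce T).Reachable ⟨(x, a), ha⟩ ⟨(x, b), hb⟩ := by
  intro n
  induction n with
  | zero =>
    intro a b hb0 _ ha hbm
    have : a = b := by omega
    subst this
    exact SimpleGraph.Reachable.refl _
  | succ n ih =>
    intro a b hb hmem ha hbm
    have hstep : (gridGraph.induce T).Adj ⟨(x, a), ha⟩
        ⟨(x, a + 1), hmem (a + 1) (by omega) (by omega)⟩ := by
      show |x - x| + |a - (a + 1)| = 1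
      simp
    exact hstep.reachable.trans
      (ih (a + 1) b (by omega) (fun yy hy hy' => hmem yy (by omega) hy') _ _)

lemma upper_bound (z1 z2 z3 : ℤ × ℤ) (hy12 : z1.2 ≤ z2.2) (hy23 : z2.2 ≤ z3.2) :
    ∃ S : Finset (ℤ × ℤ), z1 ∈ S ∧ z2 ∈ S ∧ z3 ∈ S ∧
      (gridGraph.induce (S : Set (ℤ × ℤ))).Connected ∧
      (S.card : ℤ) = (max z1.1 (max z2.1 z3.1) - min z1.1 (min z2.1 z3.1)) +
        (z3.2 - z1.2) + 1 := by
  classical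
  obtain ⟨x1, y1⟩ := z1
  obtain ⟨x2, y2⟩ := z2
  obtain ⟨x3, y3⟩ := z3
  simp only at hy12 hy23 ⊢
  set lo := min x1 (min x2 x3) with hlo
  set hi := max x1 (max x2 x3) with hhi
  have hlohi : lo ≤ hi := by omega
  set H : Finset (ℤ × ℤ) := (Finset.Icc lo hi).image (fun x => (x, y2)) with hH
  set A : Finset (ℤ × ℤ) := (Finset.Ioc y2 y3).image (fun y => (x3, y)) with hA
  set B : Finset (ℤ × ℤ) := (Finset.Ico y1 y2).image (fun y => (x1, y)) with hB
  set S : Finset (ℤ × ℤ) := H ∪ A ∪ B with hS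
  have hmem : ∀ p q : ℤ, ((p, q) ∈ S) ↔
      (q = y2 ∧ lo ≤ p ∧ p ≤ hi) ∨ (p = x3 ∧ y2 < q ∧ q ≤ y3) ∨
      (p = x1 ∧ y1 ≤ q ∧ q < y2) := by
    intro p q
    simp only [hS, hH, hA, hB, Finset.mem_union, Finset.mem_image, Finset.mem_Icc,
      Finset.mem_Ioc, Finset.mem_Ico, Prod.mk.injEq]
    constructor
    · rintro ((⟨x, hx, rfl, rfl⟩ | ⟨yy, hy, rfl, rfl⟩) | ⟨yy, hy, rfl, rfl⟩)
      · exact Or.inl ⟨rfl, hx.1, hx.2⟩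
      · exact Or.inr (Or.inl ⟨rfl, hy.1, hy.2⟩)
      · exact Or.inr (Or.inr ⟨rfl, hy.1, hy.2⟩)
    · rintro (⟨rfl, h1, h2⟩ | ⟨rfl, h1, h2⟩ | ⟨rfl, h1, h2⟩)
      · exact Or.inl (Or.inl ⟨p, ⟨h1, h2⟩, rfl, rfl⟩)
      · exact Or.inl (Or.inr ⟨q, ⟨h1, h2⟩, rfl, rfl⟩)
      · exact Or.inr ⟨q, ⟨h1, h2⟩, rfl, rfl⟩
  have hmem1 : ((x1, y1) : ℤ × ℤ) ∈ S := by
    rw [hmem]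
    rcases eq_or_lt_of_le hy12 with h | h
    · exact Or.inl ⟨h.symm ▸ rfl, by omega, by omega⟩
    · exact Or.inr (Or.inr ⟨rfl, le_rfl, h⟩)
  have hmem2 : ((x2, y2) : ℤ × ℤ) ∈ S := by
    rw [hmem]; exact Or.inl ⟨rfl, by omega, by omega⟩
  have hmem3 : ((x3, y3) : ℤ × ℤ) ∈ S := by
    rw [hmem]
    rcases eq_or_lt_of_le hy23 with h | h
    · exact Or.inl ⟨h ▸ rfl, by omega, by omega⟩
    · exact Or.inr (Or.inl ⟨rfl, h, le_rfl⟩)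
  -- cardinality
  have hcard : (S.card : ℤ) = (hi - lo) + (y3 - y1) + 1 := by
    have hd1 : Disjoint H A := by
      rw [Finset.disjoint_left]
      rintro ⟨p, q⟩ hp hq
      simp only [hH, hA, Finset.mem_image, Finset.mem_Icc, Finset.mem_Ioc,
        Prod.mk.injEq] at hp hq
      obtain ⟨x, hx, rfl, rfl⟩ := hp
      obtain ⟨yy, hy, rfl, h⟩ := hq
      omega
    have hd2 : Disjoint (H ∪ A) B := by
      rw [Finset.disjoint_left]
      rintro ⟨p, q⟩ hp hq
      simp only [hH, hA, hB, Finset.mem_union, Finset.mem_image, Finset.mem_Icc,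
        Finset.mem_Ioc, Finset.mem_Ico, Prod.mk.injEq] at hp hq
      obtain ⟨yy, hy, rfl, rfl⟩ := hq
      rcases hp with ⟨x, hx, rfl, h⟩ | ⟨y, hyy, rfl, h⟩ <;> omega
    rw [hS, Finset.card_union_of_disjoint hd2, Finset.card_union_of_disjoint hd1]
    have c1 : H.card = (hi + 1 - lo).toNat := by
      rw [hH, Finset.card_image_of_injective _ (fun a b h => (Prod.mk.injEq _ _ _ _ ▸ h).1)]
      exact Int.card_Icc lo hi
    have c2 : A.card = (y3 - y2).toNat := by
      rw [hA, Finset.card_image_of_injective _ (fun a b h => (Prod.mk.injEq _ _ _ _ ▸ h).2)]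
      exact Int.card_Ioc y2 y3
    have c3 : B.card = (y2 - y1).toNat := by
      rw [hB, Finset.card_image_of_injective _ (fun a b h => (Prod.mk.injEq _ _ _ _ ▸ h).2)]
      exact Int.card_Ico y1 y2
    rw [c1, c2, c3]
    push_cast
    omega
  -- connectivity
  have hbase : ((x2, y2) : ℤ × ℤ) ∈ (S : Set (ℤ × ℤ)) := hmem2
  have hreach : ∀ u : ↥(S : Set (ℤ × ℤ)),
      (gridGraph.induce (S : Set (ℤ × ℤ))).Reachable u ⟨(x2, y2), hbase⟩ := by
    have hrow : ∀ p : ℤ, lo ≤ p → p ≤ hi → ∀ (hp : ((p, y2) : ℤ × ℤ) ∈ (S : Set (ℤ × ℤ))),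
        (gridGraph.induce (S : Set (ℤ × ℤ))).Reachable ⟨(p, y2), hp⟩ ⟨(x2, y2), hbase⟩ := by
      intro p hp1 hp2 hp
      rcases le_total p x2 with h | h
      · exact reach_horiz _ y2 (x2 - p).toNat p x2 (by omega)
          (fun x hx hx' => (hmem x y2).mpr (Or.inl ⟨rfl, by omega, by omega⟩)) hp hbase
      · exact (reach_horiz _ y2 (p - x2).toNat x2 p (by omega)
          (fun x hx hx' => (hmem x y2).mpr (Or.inl ⟨rfl, by omega, by omega⟩)) hbase hp).symm
    rintro ⟨⟨p, q⟩, hu⟩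
    have hu' := (hmem p q).mp hu
    rcases hu' with ⟨rfl, h1, h2⟩ | ⟨hpq, h1, h2⟩ | ⟨hpq, h1, h2⟩
    · exact hrow p h1 h2 hu
    all_goals subst hpq
    · -- p = p, above the row
      have hprow : ((p, y2) : ℤ × ℤ) ∈ (S : Set (ℤ × ℤ)) :=
        (hmem p y2).mpr (Or.inl ⟨rfl, by omega, by omega⟩)
      have hv : (gridGraph.induce (S : Set (ℤ × ℤ))).Reachable ⟨(p, y2), hprow⟩
          ⟨(p, q), hu⟩ :=
        reach_vert _ p (q - y2).toNat y2 q (by omega)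
          (fun y hy hy' => by
            rcases eq_or_lt_of_le hy with h | h
            · exact (hmem p y).mpr (Or.inl ⟨h.symm, by omega, by omega⟩)
            · exact (hmem p y).mpr (Or.inr (Or.inl ⟨rfl, h, by omega⟩))) hprow hu
      exact hv.symm.trans (hrow p (by omega) (by omega) hprow)
    · -- p = p, below the row
      have hprow : ((p, y2) : ℤ × ℤ) ∈ (S : Set (ℤ × ℤ)) :=
        (hmem p y2).mpr (Or.inl ⟨rfl, by omega, by omega⟩)
      have hv : (gridGraph.induce (S : Set (ℤ × ℤ))).Reachable ⟨(p, q), hu⟩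
          ⟨(p, y2), hprow⟩ :=
        reach_vert _ p (y2 - q).toNat q y2 (by omega)
          (fun y hy hy' => by
            rcases eq_or_lt_of_le hy' with h | h
            · exact (hmem p y).mpr (Or.inl ⟨h, by omega, by omega⟩)
            · exact (hmem p y).mpr (Or.inr (Or.inr ⟨rfl, by omega, h⟩))) hu hprow
      exact hv.trans (hrow p (by omega) (by omega) hprow)
  have hconn : (gridGraph.induce (S : Set (ℤ × ℤ))).Connected := by
    rw [SimpleGraph.connected_iff]
    exact ⟨fun u v => (hreach u).trans (hreach v).symm, ⟨⟨(x2, y2), hbase⟩⟩⟩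
  refine ⟨S, hmem1, hmem2, hmem3, hconn, by rw [hcard]⟩


lemma tristance_comm12 (a b c : ℤ × ℤ) : tristance a b c = tristance b a c := by
  unfold tristance
  congr 1
  ext n
  simp only [Set.mem_setOf_eq]
  constructor <;> rintro ⟨S, h1, h2, h3, hc, hn⟩ <;> exact ⟨S, h2, h1, h3, hc, hn⟩

lemma tristance_comm23 (a b c : ℤ × ℤ) : tristance a b c = tristance a c b := by
  unfold tristance
  congr 1
  ext n
  simp only [Set.mem_setOf_eq]
  constructor <;> rintro ⟨S, h1, h2, h3, hc, hn⟩ <;> exact ⟨S, h1, h3, h2, hc, hn⟩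

lemma tristance_sorted (z1 z2 z3 : ℤ × ℤ) (hy12 : z1.2 ≤ z2.2) (hy23 : z2.2 ≤ z3.2) :
    (tristance z1 z2 z3 : ℤ) =
      (max z1.1 (max z2.1 z3.1) - min z1.1 (min z2.1 z3.1)) +
      (max z1.2 (max z2.2 z3.2) - min z1.2 (min z2.2 z3.2)) := by
  obtain ⟨S, h1, h2, h3, hc, hcard⟩ := upper_bound z1 z2 z3 hy12 hy23
  set N : ℤ := (max z1.1 (max z2.1 z3.1) - min z1.1 (min z2.1 z3.1)) + (z3.2 - z1.2) with hN
  have hN0 : 0 ≤ N := by rw [hN]; omega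
  have hcardN : S.card = N.toNat + 1 := by omega
  have hmemset : N.toNat ∈ {n : ℕ | ∃ S : Finset (ℤ × ℤ), z1 ∈ S ∧ z2 ∈ S ∧ z3 ∈ S ∧
      (gridGraph.induce (S : Set (ℤ × ℤ))).Connected ∧ S.card = n + 1} :=
    ⟨S, h1, h2, h3, hc, hcardN⟩
  have hlb : ∀ m ∈ {n : ℕ | ∃ S : Finset (ℤ × ℤ), z1 ∈ S ∧ z2 ∈ S ∧ z3 ∈ S ∧
      (gridGraph.induce (S : Set (ℤ × ℤ))).Connected ∧ S.card = n + 1}, N.toNat ≤ m := by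
    rintro m ⟨S', g1, g2, g3, gc, gcard⟩
    have hl := lower_bound z1 z2 z3 S' g1 g2 g3 gc
    have hys : max z1.2 (max z2.2 z3.2) - min z1.2 (min z2.2 z3.2) = z3.2 - z1.2 := by omega
    rw [hys] at hl
    have : (S'.card : ℤ) = (m : ℤ) + 1 := by exact_mod_cast gcard
    omega
  have htri : tristance z1 z2 z3 = N.toNat :=
    le_antisymm (Nat.sInf_le hmemset) (le_csInf ⟨_, hmemset⟩ hlb)
  rw [htri, Int.toNat_of_nonneg hN0, hN]
  omega

theorem tristance_formula (z1 z2 z3 : ℤ × ℤ)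
    (h12 : z1 ≠ z2) (h13 : z1 ≠ z3) (h23 : z2 ≠ z3) :
    (tristance z1 z2 z3 : ℤ) =
      (max z1.1 (max z2.1 z3.1) - min z1.1 (min z2.1 z3.1)) +
      (max z1.2 (max z2.2 z3.2) - min z1.2 (min z2.2 z3.2)) := by
  rcases le_total z1.2 z2.2 with a12 | a12 <;>
    rcases le_total z1.2 z3.2 with a13 | a13 <;>
      rcases le_total z2.2 z3.2 with a23 | a23
  · exact tristance_sorted z1 z2 z3 a12 a23
  · rw [tristance_comm23, tristance_sorted z1 z3 z2 a13 a23]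
    congr 1 <;> omega
  · rw [tristance_comm23, tristance_comm12, tristance_sorted z3 z1 z2 a13 a12]
    congr 1 <;> omega
  · rw [tristance_comm23, tristance_comm12, tristance_sorted z3 z1 z2 a13 a12]
    congr 1 <;> omega
  · rw [tristance_comm12, tristance_sorted z2 z1 z3 a12 a13]
    congr 1 <;> omega
  · rw [tristance_comm12, tristance_comm23, tristance_comm12,
      tristance_sorted z3 z2 z1 a23 a12]
    congr 1 <;> omega
  · rw [tristance_comm12, tristance_comm23, tristance_sorted z2 z3 z1 a23 a13]
    congr 1 <;> omega
  · rw [tristance_comm12, tristance_comm23, tristance_comm12,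
      tristance_sorted z3 z2 z1 a23 a12]
    congr 1 <;> omega
end

section
/- Let A ⊆ Z^2 be an anticode of diameter d in the L1-metric (i.e., d(z,z') ≤ d for all z,z' in A) of maximum possible cardinality. Then A is vertically contiguous and horizontally contiguous: if (x,y1),(x,y2) ∈ A then (x,y) ∈ A for all y between y1 and y2, and similarly for rows. -/
/-- The `L₁`-distance on `ℤ²`. -/
def dist1 (z w : ℤ × ℤ) : ℤ := |z.1 - w.1| + |z.2 - w.2|

lemma dist1_comm (z w : ℤ × ℤ) : dist1 z w = dist1 w z := by
  simp [dist1, abs_sub_comm]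

lemma key_vert (d x y y1 y2 : ℤ) (w : ℤ × ℤ)
    (h1 : dist1 (x, y1) w ≤ d) (h2 : dist1 (x, y2) w ≤ d)
    (hmin : min y1 y2 ≤ y) (hmax : y ≤ max y1 y2) :
    dist1 (x, y) w ≤ d := by
  simp only [dist1, Int.abs_eq_natAbs] at *
  omega

lemma key_horiz (d x x1 x2 y : ℤ) (w : ℤ × ℤ)
    (h1 : dist1 (x1, y) w ≤ d) (h2 : dist1 (x2, y) w ≤ d)
    (hmin : min x1 x2 ≤ x) (hmax : x ≤ max x1 x2) :
    dist1 (x, y) w ≤ d := by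
  simp only [dist1, Int.abs_eq_natAbs] at *
  omega

theorem optimal_anticode_contiguous (d : ℕ) (A : Finset (ℤ × ℤ))
    (hA : ∀ z ∈ A, ∀ w ∈ A, dist1 z w ≤ (d : ℤ))
    (hopt : ∀ B : Finset (ℤ × ℤ),
      (∀ z ∈ B, ∀ w ∈ B, dist1 z w ≤ (d : ℤ)) → B.card ≤ A.card) :
    (∀ x y1 y2 y : ℤ, (x, y1) ∈ A → (x, y2) ∈ A →
      min y1 y2 ≤ y → y ≤ max y1 y2 → (x, y) ∈ A) ∧
    (∀ x1 x2 x y : ℤ, (x1, y) ∈ A → (x2, y) ∈ A →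
      min x1 x2 ≤ x → x ≤ max x1 x2 → (x, y) ∈ A) := by
  constructor
  · intro x y1 y2 y h1 h2 hmin hmax
    by_contra h
    have hB : ∀ z ∈ insert (x, y) A, ∀ w ∈ insert (x, y) A, dist1 z w ≤ (d : ℤ) := by
      intro z hz w hw
      rcases Finset.mem_insert.mp hz with rfl | hz <;>
        rcases Finset.mem_insert.mp hw with rfl | hw
      · simp [dist1]
      · exact key_vert _ _ _ _ _ _ (hA _ h1 _ hw) (hA _ h2 _ hw) hmin hmax
      · rw [dist1_comm]
        exact key_vert _ _ _ _ _ _ (hA _ h1 _ hz) (hA _ h2 _ hz) hmin hmax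
      · exact hA _ hz _ hw
    have := hopt _ hB
    rw [Finset.card_insert_of_notMem h] at this
    omega
  · intro x1 x2 x y h1 h2 hmin hmax
    by_contra h
    have hB : ∀ z ∈ insert (x, y) A, ∀ w ∈ insert (x, y) A, dist1 z w ≤ (d : ℤ) := by
      intro z hz w hw
      rcases Finset.mem_insert.mp hz with rfl | hz <;>
        rcases Finset.mem_insert.mp hw with rfl | hw
      · simp [dist1]
      · exact key_horiz _ _ _ _ _ _ (hA _ h1 _ hw) (hA _ h2 _ hw) hmin hmax
      · rw [dist1_comm]
        exact key_horiz _ _ _ _ _ _ (hA _ h1 _ hz) (hA _ h2 _ hz) hmin hmax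
      · exact hA _ hz _ hw
    have := hopt _ hB
    rw [Finset.card_insert_of_notMem h] at this
    omega
end

section
/- Let A ⊆ Z^2 be an optimal L1-anticode of diameter d. If A contains both horizontal neighbors (x0-1,y0) and (x0+1,y0) of a point z0=(x0,y0), then A contains z0 and all four neighbors of z0; the same holds when A contains both vertical neighbors of z0. -/
lemma mem_of_all_dist (d : ℕ) (A : Finset (ℤ × ℤ))
    (hA : ∀ z ∈ A, ∀ w ∈ A, dist1 z w ≤ (d : ℤ))
    (hopt : ∀ B : Finset (ℤ × ℤ),
      (∀ z ∈ B, ∀ w ∈ B, dist1 z w ≤ (d : ℤ)) → B.card ≤ A.card)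
    (p : ℤ × ℤ) (hp : ∀ w ∈ A, dist1 p w ≤ (d : ℤ)) : p ∈ A := by
  by_contra h
  have hB : ∀ z ∈ insert p A, ∀ w ∈ insert p A, dist1 z w ≤ (d : ℤ) := by
    intro z hz w hw
    rcases Finset.mem_insert.1 hz with rfl | hz'
    · rcases Finset.mem_insert.1 hw with rfl | hw'
      · simp [dist1]
      · exact hp w hw'
    · rcases Finset.mem_insert.1 hw with rfl | hw'
      · rw [dist1_comm]; exact hp z hz'
      · exact hA z hz' w hw'
  have hc := hopt (insert p A) hB
  rw [Finset.card_insert_of_notMem h] at hc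
  omega

lemma horiz_case (d : ℕ) (A : Finset (ℤ × ℤ))
    (hA : ∀ z ∈ A, ∀ w ∈ A, dist1 z w ≤ (d : ℤ))
    (hopt : ∀ B : Finset (ℤ × ℤ),
      (∀ z ∈ B, ∀ w ∈ B, dist1 z w ≤ (d : ℤ)) → B.card ≤ A.card)
    (x0 y0 : ℤ) (ha : (x0 - 1, y0) ∈ A) (hb : (x0 + 1, y0) ∈ A) :
    (x0, y0) ∈ A ∧ (x0 - 1, y0) ∈ A ∧ (x0 + 1, y0) ∈ A ∧
      (x0, y0 - 1) ∈ A ∧ (x0, y0 + 1) ∈ A := by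
  have key : ∀ w ∈ A, |x0 - w.1| + |y0 - w.2| + 1 ≤ (d : ℤ) := by
    intro w hw
    have h1 := hA _ ha w hw
    have h2 := hA _ hb w hw
    simp only [dist1] at h1 h2
    rcases abs_cases (x0 - w.1) with ⟨e, _⟩ | ⟨e, _⟩ <;>
      rcases abs_cases (x0 - 1 - w.1) with ⟨e1, _⟩ | ⟨e1, _⟩ <;>
      rcases abs_cases (x0 + 1 - w.1) with ⟨e2, _⟩ | ⟨e2, _⟩ <;>
      linarith
  refine ⟨?_, ha, hb, ?_, ?_⟩
  · refine mem_of_all_dist d A hA hopt _ (fun w hw => ?_)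
    have := key w hw
    simp only [dist1]
    linarith
  · refine mem_of_all_dist d A hA hopt _ (fun w hw => ?_)
    have := key w hw
    simp only [dist1]
    rcases abs_cases (y0 - w.2) with ⟨e, _⟩ | ⟨e, _⟩ <;>
      rcases abs_cases (y0 - 1 - w.2) with ⟨e1, _⟩ | ⟨e1, _⟩ <;>
      linarith
  · refine mem_of_all_dist d A hA hopt _ (fun w hw => ?_)
    have := key w hw
    simp only [dist1]
    rcases abs_cases (y0 - w.2) with ⟨e, _⟩ | ⟨e, _⟩ <;>
      rcases abs_cases (y0 + 1 - w.2) with ⟨e1, _⟩ | ⟨e1, _⟩ <;>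
      linarith

lemma vert_case (d : ℕ) (A : Finset (ℤ × ℤ))
    (hA : ∀ z ∈ A, ∀ w ∈ A, dist1 z w ≤ (d : ℤ))
    (hopt : ∀ B : Finset (ℤ × ℤ),
      (∀ z ∈ B, ∀ w ∈ B, dist1 z w ≤ (d : ℤ)) → B.card ≤ A.card)
    (x0 y0 : ℤ) (ha : (x0, y0 - 1) ∈ A) (hb : (x0, y0 + 1) ∈ A) :
    (x0, y0) ∈ A ∧ (x0 - 1, y0) ∈ A ∧ (x0 + 1, y0) ∈ A ∧
      (x0, y0 - 1) ∈ A ∧ (x0, y0 + 1) ∈ A := by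
  have key : ∀ w ∈ A, |x0 - w.1| + |y0 - w.2| + 1 ≤ (d : ℤ) := by
    intro w hw
    have h1 := hA _ ha w hw
    have h2 := hA _ hb w hw
    simp only [dist1] at h1 h2
    rcases abs_cases (y0 - w.2) with ⟨e, _⟩ | ⟨e, _⟩ <;>
      rcases abs_cases (y0 - 1 - w.2) with ⟨e1, _⟩ | ⟨e1, _⟩ <;>
      rcases abs_cases (y0 + 1 - w.2) with ⟨e2, _⟩ | ⟨e2, _⟩ <;>
      linarith
  refine ⟨?_, ?_, ?_, ha, hb⟩
  · refine mem_of_all_dist d A hA hopt _ (fun w hw => ?_)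
    have := key w hw
    simp only [dist1]
    linarith
  · refine mem_of_all_dist d A hA hopt _ (fun w hw => ?_)
    have := key w hw
    simp only [dist1]
    rcases abs_cases (x0 - w.1) with ⟨e, _⟩ | ⟨e, _⟩ <;>
      rcases abs_cases (x0 - 1 - w.1) with ⟨e1, _⟩ | ⟨e1, _⟩ <;>
      linarith
  · refine mem_of_all_dist d A hA hopt _ (fun w hw => ?_)
    have := key w hw
    simp only [dist1]
    rcases abs_cases (x0 - w.1) with ⟨e, _⟩ | ⟨e, _⟩ <;>
      rcases abs_cases (x0 + 1 - w.1) with ⟨e1, _⟩ | ⟨e1, _⟩ <;>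
      linarith

theorem optimal_anticode_neighbors (d : ℕ) (A : Finset (ℤ × ℤ))
    (hA : ∀ z ∈ A, ∀ w ∈ A, dist1 z w ≤ (d : ℤ))
    (hopt : ∀ B : Finset (ℤ × ℤ),
      (∀ z ∈ B, ∀ w ∈ B, dist1 z w ≤ (d : ℤ)) → B.card ≤ A.card)
    (x0 y0 : ℤ) :
    ((x0 - 1, y0) ∈ A → (x0 + 1, y0) ∈ A →
      (x0, y0) ∈ A ∧ (x0 - 1, y0) ∈ A ∧ (x0 + 1, y0) ∈ A ∧
        (x0, y0 - 1) ∈ A ∧ (x0, y0 + 1) ∈ A) ∧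
    ((x0, y0 - 1) ∈ A → (x0, y0 + 1) ∈ A →
      (x0, y0) ∈ A ∧ (x0 - 1, y0) ∈ A ∧ (x0 + 1, y0) ∈ A ∧
        (x0, y0 - 1) ∈ A ∧ (x0, y0 + 1) ∈ A) := by
  exact ⟨fun ha hb => horiz_case d A hA hopt x0 y0 ha hb,
         fun ha hb => vert_case d A hA hopt x0 y0 ha hb⟩
end

section
/- Let A ⊆ Z^2 be an anticode of diameter d ≥ 2 in the L1-metric. Then the set of internal points of A (points all four of whose neighbors also lie in A), if nonempty, is an anticode of diameter d-2. -/
/-- A point of `A` is internal if all four of its grid neighbors lie in `A`. -/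
def IsInternal (A : Set (ℤ × ℤ)) (z : ℤ × ℤ) : Prop :=
  (z.1 - 1, z.2) ∈ A ∧ (z.1 + 1, z.2) ∈ A ∧ (z.1, z.2 - 1) ∈ A ∧ (z.1, z.2 + 1) ∈ A

theorem internal_points_anticode (d : ℕ) (hd : 2 ≤ d) (A : Set (ℤ × ℤ))
    (hA : ∀ z ∈ A, ∀ w ∈ A, dist1 z w ≤ (d : ℤ)) :
    ∀ z ∈ A, ∀ w ∈ A, IsInternal A z → IsInternal A w →
      dist1 z w ≤ (d : ℤ) - 2 := by
  intro z hz w hw hzint hwint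
  obtain ⟨hz1, hz2, hz3, hz4⟩ := hzint
  obtain ⟨hw1, hw2, hw3, hw4⟩ := hwint
  rcases lt_trichotomy z.1 w.1 with h | h | h
  · have := hA _ hz1 _ hw2
    simp only [dist1] at this ⊢
    rcases abs_cases (z.1 - 1 - (w.1 + 1)) with ⟨e3, _⟩ | ⟨e3, _⟩ <;>
      rcases abs_cases (z.1 - w.1) with ⟨e1, _⟩ | ⟨e1, _⟩ <;>
      rcases abs_cases (z.2 - w.2) with ⟨e2, _⟩ | ⟨e2, _⟩ <;> omega
  · rcases lt_trichotomy z.2 w.2 with h2 | h2 | h2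
    · have := hA _ hz3 _ hw4
      simp only [dist1] at this ⊢
      rcases abs_cases (z.2 - 1 - (w.2 + 1)) with ⟨e3, _⟩ | ⟨e3, _⟩ <;>
        rcases abs_cases (z.1 - w.1) with ⟨e1, _⟩ | ⟨e1, _⟩ <;>
        rcases abs_cases (z.2 - w.2) with ⟨e2, _⟩ | ⟨e2, _⟩ <;> omega
    · simp only [dist1]
      rcases abs_cases (z.1 - w.1) with ⟨e1, _⟩ | ⟨e1, _⟩ <;>
        rcases abs_cases (z.2 - w.2) with ⟨e2, _⟩ | ⟨e2, _⟩ <;> omega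
    · have := hA _ hz4 _ hw3
      simp only [dist1] at this ⊢
      rcases abs_cases (z.2 + 1 - (w.2 - 1)) with ⟨e3, _⟩ | ⟨e3, _⟩ <;>
        rcases abs_cases (z.1 - w.1) with ⟨e1, _⟩ | ⟨e1, _⟩ <;>
        rcases abs_cases (z.2 - w.2) with ⟨e2, _⟩ | ⟨e2, _⟩ <;> omega
  · have := hA _ hz2 _ hw1
    simp only [dist1] at this ⊢
    rcases abs_cases (z.1 + 1 - (w.1 - 1)) with ⟨e3, _⟩ | ⟨e3, _⟩ <;>
      rcases abs_cases (z.1 - w.1) with ⟨e1, _⟩ | ⟨e1, _⟩ <;>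
      rcases abs_cases (z.2 - w.2) with ⟨e2, _⟩ | ⟨e2, _⟩ <;> omega
end

section
/- If d is an even positive integer and A ⊆ Z^2 is an optimal anticode of diameter d in the L1-metric, then A = S_{d/2}(z0) for some z0 ∈ Z^2, where S_r(z0) is the L1-ball of radius r around z0. -/
lemma dist1_eq (z w : ℤ × ℤ) :
    dist1 z w = ((z.1 - w.1).natAbs + (z.2 - w.2).natAbs : ℤ) := by
  simp only [dist1, Int.abs_eq_natAbs]

/-- The `L₁`-ball of radius `r` around `c`, as a `Finset`. -/
noncomputable def ballF (r : ℤ) (c : ℤ × ℤ) : Finset (ℤ × ℤ) :=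
  ((Finset.Icc (c.1 - r) (c.1 + r)) ×ˢ (Finset.Icc (c.2 - r) (c.2 + r))).filter
    (fun z => dist1 z c ≤ r)

lemma mem_ballF {r : ℤ} {c z : ℤ × ℤ} : z ∈ ballF r c ↔ dist1 z c ≤ r := by
  simp only [ballF, Finset.mem_filter, Finset.mem_product, Finset.mem_Icc, dist1_eq]
  omega

/-- The diagonal box: points `(u,v)` with `u ∈ [a, a+2r]`, `v ∈ [b, b+2r]`, `u ≡ v (mod 2)`. -/
noncomputable def Dbox (a b : ℤ) (r : ℕ) : Finset (ℤ × ℤ) :=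
  ((Finset.Icc a (a + 2 * r)) ×ˢ (Finset.Icc b (b + 2 * r))).filter
    (fun p => p.1 % 2 = p.2 % 2)

lemma mem_Dbox {a b : ℤ} {r : ℕ} {p : ℤ × ℤ} :
    p ∈ Dbox a b r ↔ (a ≤ p.1 ∧ p.1 ≤ a + 2 * r ∧ b ≤ p.2 ∧ p.2 ≤ b + 2 * r ∧
      p.1 % 2 = p.2 % 2) := by
  simp only [Dbox, Finset.mem_filter, Finset.mem_product, Finset.mem_Icc]
  tauto

lemma rowcard (b t : ℤ) (r : ℕ) :
    ((Finset.Icc b (b + 2 * (r : ℤ))).filter (fun v => v % 2 = t % 2)).card =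
      if b % 2 = t % 2 then r + 1 else r := by
  by_cases h : b % 2 = t % 2
  · rw [if_pos h]
    have key : ((Finset.Icc b (b + 2 * (r : ℤ))).filter (fun v => v % 2 = t % 2)).card =
        (Finset.range (r + 1)).card := by
      apply Finset.card_nbij' (i := fun v => (v - b).toNat / 2)
        (j := fun w => b + 2 * (w : ℤ))
      · intro v hv
        simp only [Finset.mem_coe, Finset.mem_filter, Finset.mem_Icc] at hv
        simp only [Finset.mem_coe, Finset.mem_range]
        omega
      · intro w hw
        simp only [Finset.mem_coe, Finset.mem_range] at hw
        simp only [Finset.mem_coe, Finset.mem_filter, Finset.mem_Icc]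
        omega
      · intro v hv
        simp only [Finset.mem_coe, Finset.mem_filter, Finset.mem_Icc] at hv
        dsimp only
        omega
      · intro w hw
        simp only [Finset.mem_coe, Finset.mem_range] at hw
        dsimp only
        omega
    rw [key, Finset.card_range]
  · rw [if_neg h]
    have key : ((Finset.Icc b (b + 2 * (r : ℤ))).filter (fun v => v % 2 = t % 2)).card =
        (Finset.range r).card := by
      apply Finset.card_nbij' (i := fun v => (v - b).toNat / 2)
        (j := fun w => b + 1 + 2 * (w : ℤ))
      · intro v hv
        simp only [Finset.mem_coe, Finset.mem_filter, Finset.mem_Icc] at hv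
        simp only [Finset.mem_coe, Finset.mem_range]
        omega
      · intro w hw
        simp only [Finset.mem_coe, Finset.mem_range] at hw
        simp only [Finset.mem_coe, Finset.mem_filter, Finset.mem_Icc]
        omega
      · intro v hv
        simp only [Finset.mem_coe, Finset.mem_filter, Finset.mem_Icc] at hv
        dsimp only
        omega
      · intro w hw
        simp only [Finset.mem_coe, Finset.mem_range] at hw
        dsimp only
        omega
    rw [key, Finset.card_range]

lemma card_Dbox (a b : ℤ) (r : ℕ) :
    (Dbox a b r).card = (2 * r + 1) * r + (if a % 2 = b % 2 then r + 1 else r) := by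
  have hfib : ∀ p ∈ Dbox a b r, p.1 ∈ Finset.Icc a (a + 2 * (r : ℤ)) := by
    intro p hp
    rw [mem_Dbox] at hp
    simp only [Finset.mem_Icc]
    omega
  rw [Finset.card_eq_sum_card_fiberwise hfib]
  have hrow : ∀ u ∈ Finset.Icc a (a + 2 * (r : ℤ)),
      ((Dbox a b r).filter (fun p => p.1 = u)).card =
        if u % 2 = b % 2 then r + 1 else r := by
    intro u hu
    simp only [Finset.mem_Icc] at hu
    have hx : ((Finset.Icc b (b + 2 * (r : ℤ))).filter (fun v => v % 2 = u % 2)).card =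
        if u % 2 = b % 2 then r + 1 else r := by
      rw [rowcard b u r]
      by_cases hc : b % 2 = u % 2
      · rw [if_pos hc, if_pos hc.symm]
      · rw [if_neg hc, if_neg (fun hcc => hc hcc.symm)]
    rw [← hx]
    apply Finset.card_nbij' (i := fun p => p.2) (j := fun v => (u, v))
    · intro p hp
      simp only [Finset.mem_coe, Finset.mem_filter, mem_Dbox] at hp
      simp only [Finset.mem_coe, Finset.mem_filter, Finset.mem_Icc]
      omega
    · intro v hv
      simp only [Finset.mem_coe, Finset.mem_filter, Finset.mem_Icc] at hv
      simp only [Finset.mem_coe, Finset.mem_filter, mem_Dbox, and_true]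
      omega
    · intro p hp
      simp only [Finset.mem_coe, Finset.mem_filter, mem_Dbox] at hp
      exact Prod.ext hp.2.symm rfl
    · intro v hv
      rfl
  rw [Finset.sum_congr rfl hrow]
  have hsplit : ∀ u : ℤ, (if u % 2 = b % 2 then r + 1 else r) =
      r + (if u % 2 = b % 2 then 1 else 0) := by
    intro u; split <;> ring
  simp only [hsplit]
  rw [Finset.sum_add_distrib, Finset.sum_const, Finset.sum_boole]
  have h1 : (Finset.Icc a (a + 2 * (r : ℤ))).card = 2 * r + 1 := by
    rw [Int.card_Icc]; omega
  have h2 : ((Finset.Icc a (a + 2 * (r : ℤ))).filter (fun u => u % 2 = b % 2)).card =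
      if a % 2 = b % 2 then r + 1 else r := by
    exact rowcard a b r
  rw [h1, h2]
  by_cases hc : a % 2 = b % 2 <;> simp [hc, smul_eq_mul] <;> ring

/-- The map to diagonal coordinates. -/
def φ (z : ℤ × ℤ) : ℤ × ℤ := (z.1 + z.2, z.1 - z.2)

lemma card_ballF (r : ℕ) (c : ℤ × ℤ) :
    (ballF (r : ℤ) c).card = 2 * r * r + 2 * r + 1 := by
  have key : (ballF (r : ℤ) c).card = (Dbox (c.1 + c.2 - r) (c.1 - c.2 - r) r).card := by
    apply Finset.card_nbij' (i := φ)
      (j := fun p => ((p.1 + p.2) / 2, (p.1 - p.2) / 2))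
    · intro z hz
      rw [Finset.mem_coe, mem_ballF, dist1_eq] at hz
      rw [Finset.mem_coe, mem_Dbox]
      simp only [φ]
      omega
    · intro p hp
      rw [Finset.mem_coe, mem_Dbox] at hp
      rw [Finset.mem_coe, mem_ballF, dist1_eq]
      simp only
      omega
    · intro z hz
      simp only [φ]
      ext <;> simp <;> omega
    · intro p hp
      rw [Finset.mem_coe, mem_Dbox] at hp
      simp only [φ]
      ext <;> simp <;> omega
  rw [key, card_Dbox]
  have hpar : (c.1 + c.2 - (r : ℤ)) % 2 = (c.1 - c.2 - (r : ℤ)) % 2 := by omega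
  rw [if_pos hpar]
  ring

lemma ballF_anticode (r : ℕ) (c : ℤ × ℤ) :
    ∀ z ∈ ballF (r : ℤ) c, ∀ w ∈ ballF (r : ℤ) c, dist1 z w ≤ 2 * r := by
  intro z hz w hw
  rw [mem_ballF, dist1_eq] at hz hw
  rw [dist1_eq]
  omega

theorem optimal_anticode_unique_even (d : ℕ) (hd : Even d) (hpos : 0 < d)
    (A : Finset (ℤ × ℤ))
    (hA : ∀ z ∈ A, ∀ w ∈ A, dist1 z w ≤ (d : ℤ))
    (hopt : ∀ B : Finset (ℤ × ℤ),
      (∀ z ∈ B, ∀ w ∈ B, dist1 z w ≤ (d : ℤ)) → B.card ≤ A.card) :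
    ∃ z0 : ℤ × ℤ, (A : Set (ℤ × ℤ)) = {z : ℤ × ℤ | dist1 z z0 ≤ (d : ℤ) / 2} := by
  obtain ⟨r, hr⟩ : ∃ r : ℕ, d = 2 * r := by
    obtain ⟨k, hk⟩ := hd; exact ⟨k, by omega⟩
  have hrZ : (d : ℤ) = 2 * r := by push_cast [hr]; ring
  -- any ball of radius r is an anticode of diameter d
  have hball_anti : ∀ c : ℤ × ℤ, ∀ z ∈ ballF (r : ℤ) c, ∀ w ∈ ballF (r : ℤ) c,
      dist1 z w ≤ (d : ℤ) := by
    intro c z hz w hw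
    rw [hrZ]; exact ballF_anticode r c z hz w hw
  -- lower bound on the cardinality of A
  have hAcard : 2 * r * r + 2 * r + 1 ≤ A.card := by
    rw [← card_ballF r (0, 0)]
    exact hopt _ (hball_anti (0, 0))
  have hAne : A.Nonempty := by
    rw [← Finset.card_pos]; omega
  -- minima of the diagonal coordinates over A
  set a := (A.image (fun z => z.1 + z.2)).min' (hAne.image _) with ha
  set b := (A.image (fun z => z.1 - z.2)).min' (hAne.image _) with hb
  obtain ⟨za, hzaA, hza⟩ : ∃ z ∈ A, z.1 + z.2 = a := by
    have := (A.image (fun z => z.1 + z.2)).min'_mem (hAne.image _)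
    rw [← ha] at this
    simpa using (Finset.mem_image.mp this)
  obtain ⟨zb, hzbA, hzb⟩ : ∃ z ∈ A, z.1 - z.2 = b := by
    have := (A.image (fun z => z.1 - z.2)).min'_mem (hAne.image _)
    rw [← hb] at this
    simpa using (Finset.mem_image.mp this)
  have hbounds : ∀ z ∈ A, a ≤ z.1 + z.2 ∧ z.1 + z.2 ≤ a + 2 * r ∧
      b ≤ z.1 - z.2 ∧ z.1 - z.2 ≤ b + 2 * r := by
    intro z hz
    have h1 : a ≤ z.1 + z.2 := by
      apply Finset.min'_le
      exact Finset.mem_image.mpr ⟨z, hz, rfl⟩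
    have h2 : b ≤ z.1 - z.2 := by
      apply Finset.min'_le
      exact Finset.mem_image.mpr ⟨z, hz, rfl⟩
    have hda := hA z hz za hzaA
    have hdb := hA z hz zb hzbA
    rw [dist1_eq] at hda hdb
    refine ⟨h1, ?_, h2, ?_⟩ <;> omega
  by_cases hpar : a % 2 = b % 2
  · -- aligned case: A is contained in a ball of radius r
    refine ⟨((a + b) / 2 + r, (a - b) / 2), ?_⟩
    set z0 : ℤ × ℤ := ((a + b) / 2 + r, (a - b) / 2) with hz0
    have hsub : A ⊆ ballF (r : ℤ) z0 := by
      intro z hz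
      have hbz := hbounds z hz
      rw [mem_ballF, dist1_eq]
      simp only [hz0]
      omega
    have hEq : A = ballF (r : ℤ) z0 :=
      Finset.eq_of_subset_of_card_le hsub (hopt _ (hball_anti z0))
    rw [hEq]
    ext z
    simp only [ballF, Finset.coe_filter, Set.mem_setOf_eq, Finset.mem_product,
      Finset.mem_Icc, dist1_eq]
    have hd2 : (d : ℤ) / 2 = (r : ℤ) := by omega
    rw [hd2]
    omega
  · -- misaligned case: contradiction with the count
    exfalso
    have hinj : A.card ≤ (Dbox a b r).card := by
      apply Finset.card_le_card_of_injOn φ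
      · intro z hz
        have hbz := hbounds z hz
        rw [Finset.mem_coe, mem_Dbox]
        simp only [φ]
        omega
      · intro z _ w _ h
        simp only [φ, Prod.mk.injEq] at h
        exact Prod.ext (by omega) (by omega)
    rw [card_Dbox, if_neg hpar] at hinj
    have heq : (2 * r + 1) * r + r = 2 * r * r + 2 * r := by ring
    rw [heq] at hinj
    linarith [le_trans hAcard hinj]
end

section
/- Let d = 2t be even and z0 ∈ Z^2. The set A = { z ∈ Z^2 : d(z,z0) ≤ t } satisfies d3(z0,z1,z2) ≤ d for all z1,z2 ∈ A, and has cardinality 2t^2 + 2t + 1; moreover any set A' ⊆ Z^2 with d3(z0,z1,z2) ≤ d for all z1,z2 ∈ A' has |A'| ≤ 2t^2 + 2t + 1. -/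
/-- Tristance in `ℤ²` (bounding-box formula). -/
def tri (a b c : ℤ × ℤ) : ℤ :=
  (max a.1 (max b.1 c.1) - min a.1 (min b.1 c.1)) +
  (max a.2 (max b.2 c.2) - min a.2 (min b.2 c.2))

/-- The `L₁`-ball of radius `t` about the origin, as a `Finset`. -/
noncomputable def ball0 (t : ℕ) : Finset (ℤ × ℤ) :=
  (Finset.Icc (-(t:ℤ)) (t:ℤ) ×ˢ Finset.Icc (-(t:ℤ)) (t:ℤ)).filter
    (fun z => z.1.natAbs + z.2.natAbs ≤ t)

lemma sum_natAbs_Icc (t : ℕ) :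
    ∑ x ∈ Finset.Icc (-(t:ℤ)) (t:ℤ), x.natAbs = t * (t + 1) := by
  induction t with
  | zero => simp
  | succ n ih =>
    have h : Finset.Icc (-((n:ℤ)+1)) ((n:ℤ)+1) =
        insert (-((n:ℤ)+1)) (insert ((n:ℤ)+1) (Finset.Icc (-(n:ℤ)) (n:ℤ))) := by
      ext x
      simp only [Finset.mem_Icc, Finset.mem_insert]
      omega
    have h1 : ((n:ℤ)+1) ∉ Finset.Icc (-(n:ℤ)) (n:ℤ) := by
      simp only [Finset.mem_Icc]; omega
    have h2 : (-((n:ℤ)+1)) ∉ insert ((n:ℤ)+1) (Finset.Icc (-(n:ℤ)) (n:ℤ)) := by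
      simp only [Finset.mem_insert, Finset.mem_Icc]; omega
    have hc : (-(((n:ℕ)+1:ℕ):ℤ)) = -((n:ℤ)+1) := by push_cast; ring
    have hc2 : ((((n:ℕ)+1:ℕ)):ℤ) = ((n:ℤ)+1) := by push_cast; ring
    rw [hc, hc2, h, Finset.sum_insert h2, Finset.sum_insert h1, ih]
    have e : (n+1)*(n+1+1) = n*(n+1) + 2*(n+1) := by ring
    omega

lemma card_Icc_int (t : ℕ) : (Finset.Icc (-(t:ℤ)) (t:ℤ)).card = 2*t+1 := by
  rw [Int.card_Icc]; omega

lemma ball0_card (t : ℕ) : (ball0 t).card = 2 * t ^ 2 + 2 * t + 1 := by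
  classical
  have hfib : ∀ x ∈ Finset.Icc (-(t:ℤ)) (t:ℤ),
      ((ball0 t).filter (fun z => z.1 = x)).card = 2*t + 1 - 2*x.natAbs := by
    intro x hx
    simp only [Finset.mem_Icc] at hx
    have hxle : x.natAbs ≤ t := by omega
    have hset : (ball0 t).filter (fun z => z.1 = x) =
        {x} ×ˢ Finset.Icc ((x.natAbs:ℤ) - t) ((t:ℤ) - x.natAbs) := by
      ext z
      simp only [ball0, Finset.mem_filter, Finset.mem_product, Finset.mem_Icc,
        Finset.mem_singleton]
      omega
    rw [hset, Finset.card_product, Finset.card_singleton, one_mul, Int.card_Icc]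
    omega
  have h1 : (ball0 t).card =
      ∑ x ∈ Finset.Icc (-(t:ℤ)) (t:ℤ), ((ball0 t).filter (fun z => z.1 = x)).card := by
    apply Finset.card_eq_sum_card_fiberwise
    intro z hz
    simp only [ball0, Finset.mem_coe, Finset.mem_filter, Finset.mem_product, Finset.mem_Icc] at hz ⊢
    omega
  rw [h1, Finset.sum_congr rfl hfib]
  have key : (∑ x ∈ Finset.Icc (-(t:ℤ)) (t:ℤ), (2*t + 1 - 2*x.natAbs))
      + 2 * (∑ x ∈ Finset.Icc (-(t:ℤ)) (t:ℤ), x.natAbs)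
      = ∑ x ∈ Finset.Icc (-(t:ℤ)) (t:ℤ), (2*t+1) := by
    rw [Finset.mul_sum, ← Finset.sum_add_distrib]
    apply Finset.sum_congr rfl
    intro x hx
    simp only [Finset.mem_Icc] at hx
    omega
  rw [Finset.sum_const, card_Icc_int, smul_eq_mul, sum_natAbs_Icc] at key
  have e1 : (2*t+1) * (2*t+1) = 4*t^2+4*t+1 := by ring
  have e2 : t * (t+1) = t^2 + t := by ring
  omega

/-- The `L₁`-ball about `z0` as a Finset. -/
noncomputable def ballz (t : ℕ) (z0 : ℤ × ℤ) : Finset (ℤ × ℤ) :=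
  (ball0 t).image (fun z => (z.1 + z0.1, z.2 + z0.2))

lemma ballz_card (t : ℕ) (z0 : ℤ × ℤ) : (ballz t z0).card = 2 * t ^ 2 + 2 * t + 1 := by
  have hinj : Function.Injective (fun z : ℤ × ℤ => (z.1 + z0.1, z.2 + z0.2)) := by
    intro u v h
    rw [Prod.ext_iff] at h ⊢
    simp only at h
    exact ⟨by omega, by omega⟩
  rw [ballz, Finset.card_image_of_injective _ hinj, ball0_card]

lemma ball_set_eq (s : ℕ) (z0 : ℤ × ℤ) :
    {z : ℤ × ℤ | dist1 z z0 ≤ (s:ℤ)} = ↑(ballz s z0) := by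
  ext z
  simp only [Set.mem_setOf_eq, dist1, Finset.coe_image, Set.mem_image, ballz,
    Finset.mem_coe, ball0, Finset.mem_filter, Finset.mem_product, Finset.mem_Icc,
    Int.abs_eq_natAbs, Prod.ext_iff]
  constructor
  · intro h
    exact ⟨(z.1 - z0.1, z.2 - z0.2), ⟨⟨⟨by omega, by omega⟩, by omega⟩, by omega⟩,
      by simp, by simp⟩
  · rintro ⟨w, ⟨⟨⟨h1, h2⟩, h3⟩, h4⟩, h5, h6⟩
    omega

theorem centered_tristance_anticode_even (t : ℕ) (z0 : ℤ × ℤ) :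
    (∀ z1 ∈ {z : ℤ × ℤ | dist1 z z0 ≤ (t : ℤ)},
      ∀ z2 ∈ {z : ℤ × ℤ | dist1 z z0 ≤ (t : ℤ)},
        tri z0 z1 z2 ≤ (2 * t : ℤ)) ∧
    {z : ℤ × ℤ | dist1 z z0 ≤ (t : ℤ)}.ncard = 2 * t ^ 2 + 2 * t + 1 ∧
    (∀ A' : Set (ℤ × ℤ),
      (∀ z1 ∈ A', ∀ z2 ∈ A', tri z0 z1 z2 ≤ (2 * t : ℤ)) →
        A'.Finite ∧ A'.ncard ≤ 2 * t ^ 2 + 2 * t + 1) := by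
  classical
  refine ⟨?_, ?_, ?_⟩
  · -- Part 1: anticode property
    intro z1 h1 z2 h2
    simp only [Set.mem_setOf_eq, dist1, Int.abs_eq_natAbs] at h1 h2
    simp only [tri]
    omega
  · -- Part 2: cardinality of the ball
    rw [ball_set_eq, Set.ncard_coe_finset, ballz_card]
  · -- Part 3: maximality
    intro A' hA'
    have hsub : A' ⊆ {z : ℤ × ℤ | dist1 z z0 ≤ ((2*t:ℕ):ℤ)} := by
      intro z hz
      have h := hA' z hz z hz
      simp only [tri] at h
      simp only [Set.mem_setOf_eq, dist1, Int.abs_eq_natAbs]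
      omega
    have hfin : A'.Finite := by
      apply Set.Finite.subset ?_ hsub
      rw [ball_set_eq]
      exact (ballz (2*t) z0).finite_toSet
    refine ⟨hfin, ?_⟩
    set F := hfin.toFinset with hFdef
    have hncard : A'.ncard = F.card := by
      rw [hFdef, Set.ncard_eq_toFinset_card A' hfin]
    rcases F.eq_empty_or_nonempty with hemp | hne
    · rw [hncard, hemp]; simp
    · have hmem : ∀ z ∈ F, z ∈ A' := fun z hz => (Set.Finite.mem_toFinset hfin).mp hz
      have pair : ∀ z1 ∈ F, ∀ z2 ∈ F,
          (z1.1+z1.2) - (z2.1+z2.2) ≤ 2*(t:ℤ) ∧ (z2.1+z2.2) - (z1.1+z1.2) ≤ 2*(t:ℤ) ∧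
          (z1.1-z1.2) - (z2.1-z2.2) ≤ 2*(t:ℤ) ∧ (z2.1-z2.2) - (z1.1-z1.2) ≤ 2*(t:ℤ) := by
        intro z1 h1 z2 h2
        have h := hA' z1 (hmem _ h1) z2 (hmem _ h2)
        simp only [tri] at h
        omega
      have hneU : (F.image (fun z => z.1 + z.2)).Nonempty := hne.image _
      have hneV : (F.image (fun z => z.1 - z.2)).Nonempty := hne.image _
      set a := (F.image (fun z => z.1 + z.2)).min' hneU with ha
      set b := (F.image (fun z => z.1 - z.2)).min' hneV with hb
      obtain ⟨za, hza, hzaeq⟩ := Finset.mem_image.mp ((F.image _).min'_mem hneU)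
      obtain ⟨zb, hzb, hzbeq⟩ := Finset.mem_image.mp ((F.image _).min'_mem hneV)
      have hbound : ∀ z ∈ F, 0 ≤ z.1+z.2 - a ∧ z.1+z.2 - a ≤ 2*(t:ℤ) ∧
          0 ≤ z.1-z.2 - b ∧ z.1-z.2 - b ≤ 2*(t:ℤ) := by
        intro z hz
        have h1 : a ≤ z.1+z.2 := Finset.min'_le _ _ (Finset.mem_image_of_mem _ hz)
        have h2 : b ≤ z.1-z.2 := Finset.min'_le _ _ (Finset.mem_image_of_mem _ hz)
        have p1 := pair z hz za hza
        have p2 := pair z hz zb hzb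
        omega
      set sq : Finset (ℤ × ℤ) := Finset.Icc (0:ℤ) (2*(t:ℤ)) ×ˢ Finset.Icc (0:ℤ) (2*(t:ℤ))
        with hsq
      set T : Finset (ℤ × ℤ) := sq.filter (fun p => (p.1 - p.2 - (a - b)) % 2 = 0) with hT
      have himg : F.image (fun z => (z.1+z.2-a, z.1-z.2-b)) ⊆ T := by
        intro p hp
        obtain ⟨z, hz, rfl⟩ := Finset.mem_image.mp hp
        have hbz := hbound z hz
        simp only [hT, hsq, Finset.mem_filter, Finset.mem_product, Finset.mem_Icc]
        omega
      have hcardF : F.card = (F.image (fun z => (z.1+z.2-a, z.1-z.2-b))).card := by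
        rw [Finset.card_image_of_injOn]
        intro z1 _ z2 _ h
        rw [Prod.ext_iff] at h ⊢
        simp only at h
        exact ⟨by omega, by omega⟩
      -- count the even-parity part of the square
      have hinj2 : Function.Injective (fun z : ℤ × ℤ => (z.1+z.2+(t:ℤ), z.1-z.2+(t:ℤ))) := by
        intro u v h
        rw [Prod.ext_iff] at h ⊢
        simp only at h
        exact ⟨by omega, by omega⟩
      have heven : (sq.filter (fun p => (p.1 - p.2) % 2 = 0)).card = 2*t^2+2*t+1 := by
        have himg2 : sq.filter (fun p => (p.1 - p.2) % 2 = 0) =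
            (ball0 t).image (fun z => (z.1+z.2+(t:ℤ), z.1-z.2+(t:ℤ))) := by
          ext p
          simp only [hsq, ball0, Finset.mem_filter, Finset.mem_product, Finset.mem_Icc,
            Finset.mem_image, Prod.ext_iff]
          constructor
          · rintro ⟨⟨⟨h1, h2⟩, ⟨h3, h4⟩⟩, h5⟩
            have hdvd : (2:ℤ) ∣ (p.1 - p.2) := by omega
            obtain ⟨k, hk⟩ := hdvd
            refine ⟨(p.1 - t - k, k), ⟨⟨⟨by omega, by omega⟩, ⟨by omega, by omega⟩⟩,
              by dsimp only; omega⟩, by dsimp only; omega, by dsimp only; omega⟩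
          · rintro ⟨z, ⟨⟨⟨h1, h2⟩, ⟨h3, h4⟩⟩, h5⟩, h6, h7⟩
            omega
        rw [himg2, Finset.card_image_of_injective _ hinj2, ball0_card]
      have hsqcard : sq.card = (2*t+1) * (2*t+1) := by
        rw [hsq, Finset.card_product, Int.card_Icc]
        have h0 : ((2*(t:ℤ)) + 1 - 0).toNat = 2*t+1 := by omega
        rw [h0]
      have hTcard : T.card ≤ 2*t^2+2*t+1 := by
        rcases Int.even_or_odd (a - b) with he | ho
        · have : T = sq.filter (fun p => (p.1 - p.2) % 2 = 0) := by
            rw [hT]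
            apply Finset.filter_congr
            intro p _
            obtain ⟨k, hk⟩ := he
            constructor <;> intro <;> omega
          rw [this, heven]
        · have hTeq : T = sq.filter (fun p => ¬ ((p.1 - p.2) % 2 = 0)) := by
            rw [hT]
            apply Finset.filter_congr
            intro p _
            obtain ⟨k, hk⟩ := ho
            constructor <;> intro <;> omega
          have hsplit := Finset.card_filter_add_card_filter_not
            (s := sq) (p := fun p : ℤ × ℤ => (p.1 - p.2) % 2 = 0)
          have e1 : (2*t+1) * (2*t+1) = 4*t^2+4*t+1 := by ring
          rw [hTeq]
          omega
      rw [hncard, hcardF]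
      exact le_trans (Finset.card_le_card himg) hTcard
end

section
/- Let z1=(x1,y1), z2=(x2,y2) be distinct points of Z^2 with x2 ≥ x1 and y2 ≥ y1, let d ≥ d(z1,z2) and c = d − d(z1,z2). Then { z ∈ Z^2 : d3(z1,z2,z) ≤ d } is exactly the set of (x,y) satisfying x1−c ≤ x ≤ x2+c, y1−c ≤ y ≤ y2+c, x1+y1−c ≤ x+y ≤ x2+y2+c, and x1−y2−c ≤ x−y ≤ x2−y1+c. -/
theorem centered_tristance_anticode_pair (x1 y1 x2 y2 : ℤ)
    (hne : (x1, y1) ≠ (x2, y2)) (hx : x1 ≤ x2) (hy : y1 ≤ y2)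
    (d : ℤ) (hd : dist1 (x1, y1) (x2, y2) ≤ d)
    (c : ℤ) (hc : c = d - dist1 (x1, y1) (x2, y2)) :
    {z : ℤ × ℤ | tri (x1, y1) (x2, y2) z ≤ d} =
      {z : ℤ × ℤ |
        x1 - c ≤ z.1 ∧ z.1 ≤ x2 + c ∧
        y1 - c ≤ z.2 ∧ z.2 ≤ y2 + c ∧
        x1 + y1 - c ≤ z.1 + z.2 ∧ z.1 + z.2 ≤ x2 + y2 + c ∧
        x1 - y2 - c ≤ z.1 - z.2 ∧ z.1 - z.2 ≤ x2 - y1 + c} := by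
  simp only [dist1, abs_of_nonpos (by omega : x1 - x2 ≤ 0),
    abs_of_nonpos (by omega : y1 - y2 ≤ 0)] at hd hc
  ext ⟨x, y⟩
  simp only [Set.mem_setOf_eq, tri]
  omega
end

section
/- The maximum tristance among triples of points of the octagon O(a,b,c0,c1,c2,c3) equals a + b − min{c0,c1,c2,c3}, assuming 0 ≤ c_i and the constraints c0+c1 ≤ a, c2+c3 ≤ a, c0+c3 ≤ b, c1+c2 ≤ b hold so that each defining inequality is attained. -/
theorem octagon_diameter (a b c0 c1 c2 c3 : ℕ)
    (h01 : c0 + c1 ≤ a) (h23 : c2 + c3 ≤ a) (h03 : c0 + c3 ≤ b) (h12 : c1 + c2 ≤ b) :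
    IsGreatest
      {m : ℤ | ∃ z1 ∈ {p : ℤ × ℤ |
          0 ≤ p.1 ∧ p.1 ≤ (a : ℤ) ∧ 0 ≤ p.2 ∧ p.2 ≤ (b : ℤ) ∧
          (c0 : ℤ) ≤ p.1 + p.2 ∧ p.1 + p.2 ≤ (a : ℤ) + b - c2 ∧
          (c3 : ℤ) - b ≤ p.1 - p.2 ∧ p.1 - p.2 ≤ (a : ℤ) - c1},
        ∃ z2 ∈ {p : ℤ × ℤ |
          0 ≤ p.1 ∧ p.1 ≤ (a : ℤ) ∧ 0 ≤ p.2 ∧ p.2 ≤ (b : ℤ) ∧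
          (c0 : ℤ) ≤ p.1 + p.2 ∧ p.1 + p.2 ≤ (a : ℤ) + b - c2 ∧
          (c3 : ℤ) - b ≤ p.1 - p.2 ∧ p.1 - p.2 ≤ (a : ℤ) - c1},
        ∃ z3 ∈ {p : ℤ × ℤ |
          0 ≤ p.1 ∧ p.1 ≤ (a : ℤ) ∧ 0 ≤ p.2 ∧ p.2 ≤ (b : ℤ) ∧
          (c0 : ℤ) ≤ p.1 + p.2 ∧ p.1 + p.2 ≤ (a : ℤ) + b - c2 ∧
          (c3 : ℤ) - b ≤ p.1 - p.2 ∧ p.1 - p.2 ≤ (a : ℤ) - c1},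
        tri z1 z2 z3 = m}
      ((a : ℤ) + b - min (min (c0 : ℤ) (c1 : ℤ)) (min (c2 : ℤ) (c3 : ℤ))) := by
  constructor
  · rcases le_total (min (c0:ℤ) c1) (min (c2:ℤ) c3) with h | h
    · exact ⟨((0:ℤ), (c0:ℤ)), by simp only [Set.mem_setOf_eq]; omega,
        ((a:ℤ), (c1:ℤ)), by simp only [Set.mem_setOf_eq]; omega,
        ((c3:ℤ), (b:ℤ)), by simp only [Set.mem_setOf_eq]; omega,
        by simp only [tri]; omega⟩
    · rcases le_total (c2:ℤ) c3 with h' | h'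
      · exact ⟨((0:ℤ), (c0:ℤ)), by simp only [Set.mem_setOf_eq]; omega,
          ((c0:ℤ), (0:ℤ)), by simp only [Set.mem_setOf_eq]; omega,
          ((a:ℤ), (b:ℤ) - c2), by simp only [Set.mem_setOf_eq]; omega,
          by simp only [tri]; omega⟩
      · exact ⟨((c0:ℤ), (0:ℤ)), by simp only [Set.mem_setOf_eq]; omega,
          ((a:ℤ), (c1:ℤ)), by simp only [Set.mem_setOf_eq]; omega,
          ((c3:ℤ), (b:ℤ)), by simp only [Set.mem_setOf_eq]; omega,
          by simp only [tri]; omega⟩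
  · rintro m ⟨z1, h1, z2, h2, z3, h3, rfl⟩
    simp only [Set.mem_setOf_eq] at h1 h2 h3
    simp only [tri]
    omega
end

section
/- The maximum cardinality of a tristance anticode of diameter d in Z^2 equals ⌈2(d+1)(d+2)/7⌉. -/
def F2 (d : ℤ) : ℕ → ℤ → ℤ
  | 0, _ => 0
  | 1, j => 2 * (d + 1) - j - j % 2
  | (s + 2), j => 2 * (2 * (d + 1) - j - j % 2) + F2 d s (j - 1)

lemma F2_even (d : ℤ) (p : ℕ) : ∀ (j a b : ℤ), a = (p : ℤ) % 2 → b = j % 2 →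
    F2 d (2 * p) j = 4 * p * (d + 1) - 2 * p * j + p * p - 2 * p + a - 2 * a * b := by
  induction p with
  | zero => intro j a b ha hb; norm_num at ha; subst ha; simp [F2]
  | succ p ih =>
    intro j a b ha hb
    have h2 : 2 * (p + 1) = (2 * p) + 2 := by ring
    rw [h2]
    show 2 * (2 * (d + 1) - j - j % 2) + F2 d (2 * p) (j - 1) = _
    rw [ih (j - 1) (1 - a) (1 - b) (by push_cast at ha ⊢; omega) (by omega), ← hb]
    push_cast
    ring

lemma F2_odd (d : ℤ) (p : ℕ) : ∀ (j b : ℤ), b = j % 2 →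
    F2 d (2 * p + 1) j = (4 * p + 2) * (d + 1) - (2 * p + 1) * j + p * p - p - b := by
  induction p with
  | zero => intro j b hb; show 2 * (d + 1) - j - j % 2 = _; push_cast; omega
  | succ p ih =>
    intro j b hb
    have h2 : 2 * (p + 1) + 1 = (2 * p + 1) + 2 := by ring
    rw [h2]
    show 2 * (2 * (d + 1) - j - j % 2) + F2 d (2 * p + 1) (j - 1) = _
    rw [ih (j - 1) (1 - b) (by omega), ← hb]
    push_cast
    ring

lemma F2_le (d X : ℤ) (n : ℕ) (h0 : 0 ≤ X) (hn : (n : ℤ) ≤ X + 1) :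
    7 * F2 d n (X + n - 1) ≤ 4 * (d + 1) * (d + 2) + 12 := by
  rcases Nat.even_or_odd n with ⟨p, hp⟩ | ⟨p, hp⟩
  · -- n = 2p
    have hn2 : n = 2 * p := by omega
    subst hn2
    set j : ℤ := X + (2 * p : ℕ) - 1 with hj
    set a : ℤ := (p : ℤ) % 2 with ha
    set b : ℤ := j % 2 with hb
    rw [F2_even d p j a b rfl rfl]
    have ha0 : 0 ≤ a := by omega
    have ha1 : a ≤ 1 := by omega
    have hb0 : 0 ≤ b := by omega
    have hab : 0 ≤ a * b := by positivity
    have hXp : (0 : ℤ) ≤ X - 2 * p + 1 := by push_cast at hn; omega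
    have hp0 : (0 : ℤ) ≤ (p : ℤ) := by positivity
    have hmul : 0 ≤ (p : ℤ) * (X - 2 * p + 1) := mul_nonneg hp0 hXp
    have hjj : j = X + 2 * p - 1 := by push_cast [hj]; ring
    rw [hjj]
    nlinarith [sq_nonneg (2 * (d + 1) - 7 * (p : ℤ) + 1)]
  · -- n = 2p + 1
    have hn2 : n = 2 * p + 1 := by omega
    subst hn2
    set j : ℤ := X + (2 * p + 1 : ℕ) - 1 with hj
    set b : ℤ := j % 2 with hb
    rw [F2_odd d p j b rfl]
    have hb0 : 0 ≤ b := by omega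
    have hXp : (0 : ℤ) ≤ X - 2 * p := by push_cast at hn; omega
    have hp0 : (0 : ℤ) ≤ (p : ℤ) := by positivity
    have hmul : 0 ≤ (2 * (p : ℤ) + 1) * (X - 2 * p) := by positivity
    have hjj : j = X + 2 * p := by push_cast [hj]; ring
    rw [hjj]
    nlinarith [sq_nonneg (2 * (2 * (d + 1) - 7 * (p : ℤ)) - 5)]

lemma core (d x0 x1 : ℤ) (m M : ℤ → ℤ) :
    ∀ (s : ℕ) (S T : Finset ℤ), S.card = s →
    (∀ a ∈ S, x0 ≤ a ∧ a ≤ x1) →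
    (∀ b ∈ T, x0 ≤ b ∧ b ≤ x1) →
    Disjoint S T →
    (∀ b ∈ T, ∀ a ∈ S, max (b - x0) (x1 - b) ≤ max (a - x0) (x1 - a)) →
    (∀ a ∈ S, ∀ b ∈ S,
      M a - m b + max (max (a - x0) (x1 - a)) (max (b - x0) (x1 - b)) ≤ d) →
    2 * ∑ a ∈ S, (M a - m a + 1) ≤ F2 d s ((x1 - x0) + s + T.card - 1) := by
  intro s
  induction s using Nat.strong_induction_on with
  | _ s ih =>
  intro S T hcard hSb hTb hdisj hTmin hcon
  match s, hcard with
  | 0, hcard =>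
    have : S = ∅ := Finset.card_eq_zero.mp hcard
    subst this
    simp [F2]
  | 1, hcard =>
    obtain ⟨a, rfl⟩ := Finset.card_eq_one.mp hcard
    have haS : a ∈ ({a} : Finset ℤ) := Finset.mem_singleton_self a
    have hsub : ({a} : Finset ℤ) ∪ T ⊆ Finset.Icc (x1 - max (a - x0) (x1 - a)) (x0 + max (a - x0) (x1 - a)) := by
      intro c hc
      rcases Finset.mem_union.mp hc with h | h
      · rw [Finset.mem_singleton] at h; subst h
        have := hSb c haS; rw [Finset.mem_Icc]; omega
      · have h1 := hTmin c h a haS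
        have h2 := hTb c h
        rw [Finset.mem_Icc]; omega
    have hcc := Finset.card_le_card hsub
    rw [Finset.card_union_of_disjoint hdisj, Int.card_Icc, hcard] at hcc
    have hc1 := hcon a haS a haS
    show 2 * _ ≤ F2 d 1 _
    rw [Finset.sum_singleton]
    show _ ≤ 2 * (d + 1) - _ - _ % 2
    omega
  | (s + 2), hcard =>
    have hne : S.Nonempty := by rw [← Finset.card_pos, hcard]; omega
    obtain ⟨amax, hamax, hmax⟩ := S.exists_max_image (fun a => max (a - x0) (x1 - a)) hne
    have h1 : (S.erase amax).Nonempty := by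
      rw [← Finset.card_pos, Finset.card_erase_of_mem hamax, hcard]; omega
    obtain ⟨cmin, hcmin, hmin⟩ := (S.erase amax).exists_min_image (fun a => max (a - x0) (x1 - a)) h1
    have hcS : cmin ∈ S := Finset.mem_of_mem_erase hcmin
    have hneq : cmin ≠ amax := Finset.ne_of_mem_erase hcmin
    set S' := (S.erase amax).erase cmin with hS'
    have hsubS : S' ⊆ S := fun x hx => Finset.mem_of_mem_erase (Finset.mem_of_mem_erase hx)
    have hcard' : S'.card = s := by
      rw [hS', Finset.card_erase_of_mem hcmin, Finset.card_erase_of_mem hamax, hcard]; omega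
    have hcmT : cmin ∉ T := Finset.disjoint_left.mp hdisj hcS
    -- pigeonhole
    have hsub : S ∪ T ⊆ Finset.Icc (x1 - max (amax - x0) (x1 - amax)) (x0 + max (amax - x0) (x1 - amax)) := by
      intro c hc
      rcases Finset.mem_union.mp hc with h | h
      · have h3 := hmax c h
        have := hSb c h; rw [Finset.mem_Icc]
        omega
      · have h3 := hTmin c h amax hamax
        have := hTb c h
        rw [Finset.mem_Icc]; omega
    have hcc := Finset.card_le_card hsub
    rw [Finset.card_union_of_disjoint hdisj, Int.card_Icc, hcard] at hcc
    -- IH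
    have hIH := ih s (by omega) S' (insert cmin T) hcard'
      (fun a ha => hSb a (hsubS ha))
      (by intro b hb
          rcases Finset.mem_insert.mp hb with h | h
          · subst h; exact hSb b hcS
          · exact hTb b h)
      (by rw [Finset.disjoint_insert_right]
          exact ⟨Finset.notMem_erase _ _, Finset.disjoint_of_subset_left hsubS hdisj⟩)
      (by intro b hb a' ha'
          rcases Finset.mem_insert.mp hb with h | h
          · subst h; exact hmin a' (Finset.mem_of_mem_erase ha')
          · exact hTmin b h a' (hsubS ha'))
      (fun a ha b hb => hcon a (hsubS ha) b (hsubS hb))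
    rw [Finset.card_insert_of_notMem hcmT] at hIH
    have hargeq : (x1 - x0) + (s : ℤ) + ((T.card + 1 : ℕ) : ℤ) - 1
        = (x1 - x0) + ((s : ℕ) + 2 : ℕ) + T.card - 1 - 1 := by push_cast; ring
    rw [hargeq] at hIH
    -- sum split
    have hsum : ∑ a ∈ S, (M a - m a + 1)
        = (M amax - m amax + 1) + ((M cmin - m cmin + 1) + ∑ a ∈ S', (M a - m a + 1)) := by
      have e1 := Finset.add_sum_erase (S.erase amax) (fun a => M a - m a + 1) hcmin
      have e2 := Finset.add_sum_erase S (fun a => M a - m a + 1) hamax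
      rw [hS']
      linarith [e1, e2]
    -- pair bound
    have hc1 := hcon amax hamax cmin hcS
    have hc2 := hcon cmin hcS amax hamax
    have hvc := hmin cmin hcmin
    have hvm := hmax cmin hcS
    show _ ≤ 2 * (2 * (d + 1) - _ - _ % 2) + F2 d s _
    rw [hsum]
    omega

lemma gauss : ∀ (N q : ℕ), q < N → 2 * ∑ i ∈ Finset.range N, (q - i) = q * (q + 1) := by
  intro N
  induction N with
  | zero => intro q h; omega
  | succ N ih =>
    intro q h
    rcases Nat.lt_or_ge q N with h' | h'
    · rw [Finset.sum_range_succ]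
      have : q - N = 0 := by omega
      rw [this, Nat.add_zero, ih q h']
    · have hqN : q = N := by omega
      subst hqN
      have hrefl := Finset.sum_range_reflect (fun i => q - i) (q + 1)
      have hcongr : ∑ j ∈ Finset.range (q + 1), (q - (q + 1 - 1 - j)) = ∑ j ∈ Finset.range (q + 1), j := by
        apply Finset.sum_congr rfl
        intro j hj
        rw [Finset.mem_range] at hj
        omega
      rw [← hrefl, hcongr]
      have hg := Finset.sum_range_id_mul_two (q + 1)
      simp only [Nat.add_sub_cancel] at hg
      rw [show q * (q + 1) = (q + 1) * q from Nat.mul_comm _ _]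
      omega

private def kk (d : ℕ) : ℕ := d / 7
private def Xn (d : ℕ) : ℕ := 4 * (d / 7) + (d % 7) / 2
private def Yn (d : ℕ) : ℕ := 4 * (d / 7) + (d % 7 + 1) / 2

private def β (d : ℕ) (x : ℤ) : ℤ :=
  max 0 (max ((kk d : ℤ) - x) (x - ((Xn d : ℤ) - kk d)))

private noncomputable def Oct (d : ℕ) : Finset (ℤ × ℤ) :=
  (Finset.Icc (0 : ℤ) (Xn d)).biUnion
    (fun x => (Finset.Icc (β d x) ((Yn d : ℤ) - β d x)).image (fun y => (x, y)))

lemma mem_Oct (d : ℕ) (z : ℤ × ℤ) : z ∈ Oct d ↔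
    0 ≤ z.1 ∧ z.1 ≤ (Xn d : ℤ) ∧ β d z.1 ≤ z.2 ∧ z.2 ≤ (Yn d : ℤ) - β d z.1 := by
  obtain ⟨zx, zy⟩ := z
  simp only [Oct, Finset.mem_biUnion, Finset.mem_Icc, Finset.mem_image, Prod.mk.injEq]
  constructor
  · rintro ⟨x, ⟨hx0, hx1⟩, y, ⟨hy0, hy1⟩, rfl, rfl⟩
    exact ⟨hx0, hx1, hy0, hy1⟩
  · rintro ⟨hx0, hx1, hy0, hy1⟩
    exact ⟨zx, ⟨hx0, hx1⟩, zy, ⟨hy0, hy1⟩, rfl, rfl⟩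

lemma Oct_props (d : ℕ) (z : ℤ × ℤ) (hz : z ∈ Oct d) :
    0 ≤ z.1 ∧ z.1 ≤ (Xn d : ℤ) ∧ 0 ≤ z.2 ∧ z.2 ≤ (Yn d : ℤ) ∧
    (kk d : ℤ) ≤ z.1 + z.2 ∧ z.1 + z.2 ≤ (Xn d : ℤ) + Yn d - kk d ∧
    z.1 - z.2 ≤ (Xn d : ℤ) - kk d ∧ z.2 - z.1 ≤ (Yn d : ℤ) - kk d := by
  rw [mem_Oct] at hz
  simp only [β] at hz
  have h2q : 2 * (kk d : ℤ) ≤ (Xn d : ℤ) ∧ 2 * (kk d : ℤ) ≤ (Yn d : ℤ) := by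
    simp only [kk, Xn, Yn]; push_cast; omega
  omega

lemma Oct_anticode (d : ℕ) : ∀ z1 ∈ Oct d, ∀ z2 ∈ Oct d, ∀ z3 ∈ Oct d, tri z1 z2 z3 ≤ (d : ℤ) := by
  have hd : (Xn d : ℤ) + Yn d - kk d ≤ (d : ℤ) := by
    simp only [kk, Xn, Yn]; push_cast; omega
  intro z1 h1 z2 h2 z3 h3
  have H1 := Oct_props d z1 h1
  have H2 := Oct_props d z2 h2
  have H3 := Oct_props d z3 h3
  simp only [tri]
  generalize (Xn d : ℤ) = X at *
  generalize (Yn d : ℤ) = Y at *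
  generalize (kk d : ℤ) = q at *
  omega


lemma Oct_card_z (d : ℕ) :
    ((Oct d).card : ℤ) = ((Xn d : ℤ) + 1) * ((Yn d : ℤ) + 1) - 2 * (kk d : ℤ) * ((kk d : ℤ) + 1) := by
  have hfacts : 2 * (kk d : ℤ) ≤ (Xn d : ℤ) ∧ 2 * (kk d : ℤ) ≤ (Yn d : ℤ) ∧ kk d ≤ Xn d := by
    simp only [kk, Xn, Yn]; push_cast; omega
  -- card as a sum over columns
  have h1 : (Oct d).card = ∑ x ∈ Finset.Icc (0 : ℤ) (Xn d),
      ((Finset.Icc (β d x) ((Yn d : ℤ) - β d x)).image (fun y => (x, y))).card := by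
    apply Finset.card_biUnion
    intro x hx y hy hxy
    rw [Function.onFun, Finset.disjoint_left]
    rintro p hp hq
    obtain ⟨u, _, rfl⟩ := Finset.mem_image.mp hp
    obtain ⟨v, _, hv⟩ := Finset.mem_image.mp hq
    exact hxy ((Prod.mk.injEq _ _ _ _).mp hv).1.symm
  have h2 : ∀ x : ℤ, ((Finset.Icc (β d x) ((Yn d : ℤ) - β d x)).image (fun y => (x, y))).card
      = (((Yn d : ℤ) - β d x) + 1 - β d x).toNat := by
    intro x
    rw [Finset.card_image_of_injective _ (fun a b h => ((Prod.mk.injEq _ _ _ _).mp h).2),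
      Int.card_Icc]
  have h3 : ((Oct d).card : ℤ) = ∑ x ∈ Finset.Icc (0 : ℤ) (Xn d), ((Yn d : ℤ) + 1 - 2 * β d x) := by
    rw [h1]
    push_cast
    apply Finset.sum_congr rfl
    intro x hx
    rw [Finset.mem_Icc] at hx
    rw [h2]
    have hβ : 0 ≤ β d x ∧ β d x ≤ (kk d : ℤ) := by
      simp only [β]; constructor
      · exact le_max_left _ _
      · rw [max_le_iff, max_le_iff]; omega
    omega
  rw [h3]
  -- split β pointwise
  have hsplit : ∀ x ∈ Finset.Icc (0 : ℤ) (Xn d),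
      (Yn d : ℤ) + 1 - 2 * β d x
      = ((Yn d : ℤ) + 1) - 2 * (max 0 ((kk d : ℤ) - x)) - 2 * (max 0 (x - ((Xn d : ℤ) - kk d))) := by
    intro x hx
    rw [Finset.mem_Icc] at hx
    simp only [β]
    omega
  rw [Finset.sum_congr rfl hsplit]
  have hIcc : Finset.Icc (0 : ℤ) ((Xn d : ℕ) : ℤ) = (Finset.range (Xn d + 1)).image (Nat.cast : ℕ → ℤ) := by
    ext x
    simp only [Finset.mem_Icc, Finset.mem_image, Finset.mem_range]
    constructor
    · rintro ⟨h0, h1⟩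
      refine ⟨x.toNat, ?_, ?_⟩ <;> omega
    · rintro ⟨i, hi, rfl⟩
      constructor <;> omega
  rw [hIcc, Finset.sum_image (fun i _ j _ h => by exact_mod_cast h)]
  rw [Finset.sum_sub_distrib, Finset.sum_sub_distrib, Finset.sum_const, Finset.card_range]
  have hg1 : ∑ i ∈ Finset.range (Xn d + 1), 2 * (max 0 ((kk d : ℤ) - (i : ℕ)))
      = ((kk d : ℤ)) * (kk d + 1) := by
    have hpt : ∀ i ∈ Finset.range (Xn d + 1), 2 * (max 0 ((kk d : ℤ) - (i : ℕ)))
        = ((2 * (kk d - i) : ℕ) : ℤ) := by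
      intro i hi
      push_cast
      omega
    rw [Finset.sum_congr rfl hpt, ← Nat.cast_sum, ← Finset.mul_sum]
    rw [gauss (Xn d + 1) (kk d) (by omega)]
    push_cast; ring
  have hg2 : ∑ i ∈ Finset.range (Xn d + 1), 2 * (max 0 (((i : ℕ) : ℤ) - ((Xn d : ℤ) - kk d)))
      = ((kk d : ℤ)) * (kk d + 1) := by
    have hpt : ∀ i ∈ Finset.range (Xn d + 1), 2 * (max 0 (((i : ℕ) : ℤ) - ((Xn d : ℤ) - kk d)))
        = ((2 * (i - (Xn d - kk d)) : ℕ) : ℤ) := by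
      intro i hi
      rw [Finset.mem_range] at hi
      push_cast
      omega
    rw [Finset.sum_congr rfl hpt, ← Nat.cast_sum, ← Finset.mul_sum]
    have hrefl := Finset.sum_range_reflect (fun i => i - (Xn d - kk d)) (Xn d + 1)
    have hc : ∑ j ∈ Finset.range (Xn d + 1), ((Xn d + 1 - 1 - j) - (Xn d - kk d))
        = ∑ j ∈ Finset.range (Xn d + 1), (kk d - j) :=
      Finset.sum_congr rfl (fun j hj => by rw [Finset.mem_range] at hj; omega)
    rw [← hrefl, hc, gauss (Xn d + 1) (kk d) (by omega)]
    push_cast; ring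
  rw [hg1, hg2]
  simp only [nsmul_eq_mul]
  push_cast
  ring

lemma Oct_card (d : ℕ) : (Oct d).card = (2 * (d + 1) * (d + 2) + 6) / 7 := by
  have hZ := Oct_card_z d
  have hr7 : d % 7 = 0 ∨ d % 7 = 1 ∨ d % 7 = 2 ∨ d % 7 = 3 ∨ d % 7 = 4 ∨ d % 7 = 5 ∨ d % 7 = 6 := by omega
  rcases hr7 with hr | hr | hr | hr | hr | hr | hr
  · obtain ⟨k, hk⟩ : ∃ k, d = 7 * k := ⟨d / 7, by omega⟩
    subst hk
    have hdiv : (7 * k) / 7 = k := by omega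
    have hmod : (7 * k) % 7 = 0 := by omega
    simp only [Xn, Yn, kk, hdiv, hmod] at hZ
    norm_num at hZ
    have hN : 2 * (7 * k + 1) * (7 * k + 2) + 6 = 7 * (Oct (7 * k)).card + 3 := by
      have hNZ : ((2 * (7 * k + 1) * (7 * k + 2) + 6 : ℕ) : ℤ)
          = ((7 * (Oct (7 * k)).card + 3 : ℕ) : ℤ) := by
        push_cast
        rw [hZ]
        ring
      exact_mod_cast hNZ
    rw [hN]
    omega
  · obtain ⟨k, hk⟩ : ∃ k, d = 7 * k + 1 := ⟨d / 7, by omega⟩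
    subst hk
    have hdiv : (7 * k + 1) / 7 = k := by omega
    have hmod : (7 * k + 1) % 7 = 1 := by omega
    simp only [Xn, Yn, kk, hdiv, hmod] at hZ
    norm_num at hZ
    have hN : 2 * (7 * k + 1 + 1) * (7 * k + 1 + 2) + 6 = 7 * (Oct (7 * k + 1)).card + 4 := by
      have hNZ : ((2 * (7 * k + 1 + 1) * (7 * k + 1 + 2) + 6 : ℕ) : ℤ)
          = ((7 * (Oct (7 * k + 1)).card + 4 : ℕ) : ℤ) := by
        push_cast
        rw [hZ]
        ring
      exact_mod_cast hNZ
    rw [hN]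
    omega
  · obtain ⟨k, hk⟩ : ∃ k, d = 7 * k + 2 := ⟨d / 7, by omega⟩
    subst hk
    have hdiv : (7 * k + 2) / 7 = k := by omega
    have hmod : (7 * k + 2) % 7 = 2 := by omega
    simp only [Xn, Yn, kk, hdiv, hmod] at hZ
    norm_num at hZ
    have hN : 2 * (7 * k + 2 + 1) * (7 * k + 2 + 2) + 6 = 7 * (Oct (7 * k + 2)).card + 2 := by
      have hNZ : ((2 * (7 * k + 2 + 1) * (7 * k + 2 + 2) + 6 : ℕ) : ℤ)
          = ((7 * (Oct (7 * k + 2)).card + 2 : ℕ) : ℤ) := by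
        push_cast
        rw [hZ]
        ring
      exact_mod_cast hNZ
    rw [hN]
    omega
  · obtain ⟨k, hk⟩ : ∃ k, d = 7 * k + 3 := ⟨d / 7, by omega⟩
    subst hk
    have hdiv : (7 * k + 3) / 7 = k := by omega
    have hmod : (7 * k + 3) % 7 = 3 := by omega
    simp only [Xn, Yn, kk, hdiv, hmod] at hZ
    norm_num at hZ
    have hN : 2 * (7 * k + 3 + 1) * (7 * k + 3 + 2) + 6 = 7 * (Oct (7 * k + 3)).card + 4 := by
      have hNZ : ((2 * (7 * k + 3 + 1) * (7 * k + 3 + 2) + 6 : ℕ) : ℤ)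
          = ((7 * (Oct (7 * k + 3)).card + 4 : ℕ) : ℤ) := by
        push_cast
        rw [hZ]
        ring
      exact_mod_cast hNZ
    rw [hN]
    omega
  · obtain ⟨k, hk⟩ : ∃ k, d = 7 * k + 4 := ⟨d / 7, by omega⟩
    subst hk
    have hdiv : (7 * k + 4) / 7 = k := by omega
    have hmod : (7 * k + 4) % 7 = 4 := by omega
    simp only [Xn, Yn, kk, hdiv, hmod] at hZ
    norm_num at hZ
    have hN : 2 * (7 * k + 4 + 1) * (7 * k + 4 + 2) + 6 = 7 * (Oct (7 * k + 4)).card + 3 := by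
      have hNZ : ((2 * (7 * k + 4 + 1) * (7 * k + 4 + 2) + 6 : ℕ) : ℤ)
          = ((7 * (Oct (7 * k + 4)).card + 3 : ℕ) : ℤ) := by
        push_cast
        rw [hZ]
        ring
      exact_mod_cast hNZ
    rw [hN]
    omega
  · obtain ⟨k, hk⟩ : ∃ k, d = 7 * k + 5 := ⟨d / 7, by omega⟩
    subst hk
    have hdiv : (7 * k + 5) / 7 = k := by omega
    have hmod : (7 * k + 5) % 7 = 5 := by omega
    simp only [Xn, Yn, kk, hdiv, hmod] at hZ
    norm_num at hZ
    have hN : 2 * (7 * k + 5 + 1) * (7 * k + 5 + 2) + 6 = 7 * (Oct (7 * k + 5)).card + 6 := by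
      have hNZ : ((2 * (7 * k + 5 + 1) * (7 * k + 5 + 2) + 6 : ℕ) : ℤ)
          = ((7 * (Oct (7 * k + 5)).card + 6 : ℕ) : ℤ) := by
        push_cast
        rw [hZ]
        ring
      exact_mod_cast hNZ
    rw [hN]
    omega
  · obtain ⟨k, hk⟩ : ∃ k, d = 7 * k + 6 := ⟨d / 7, by omega⟩
    subst hk
    have hdiv : (7 * k + 6) / 7 = k := by omega
    have hmod : (7 * k + 6) % 7 = 6 := by omega
    simp only [Xn, Yn, kk, hdiv, hmod] at hZ
    norm_num at hZ
    have hN : 2 * (7 * k + 6 + 1) * (7 * k + 6 + 2) + 6 = 7 * (Oct (7 * k + 6)).card + 6 := by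
      have hNZ : ((2 * (7 * k + 6 + 1) * (7 * k + 6 + 2) + 6 : ℕ) : ℤ)
          = ((7 * (Oct (7 * k + 6)).card + 6 : ℕ) : ℤ) := by
        push_cast
        rw [hZ]
        ring
      exact_mod_cast hNZ
    rw [hN]
    omega

lemma upper (d : ℕ) (A : Finset (ℤ × ℤ))
    (hanti : ∀ z1 ∈ A, ∀ z2 ∈ A, ∀ z3 ∈ A, tri z1 z2 z3 ≤ (d : ℤ)) :
    A.card ≤ (2 * (d + 1) * (d + 2) + 6) / 7 := by
  rcases A.eq_empty_or_nonempty with rfl | hne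
  · simp
  set S := A.image Prod.fst with hS
  have hSne : S.Nonempty := hne.image _
  set x0 := S.min' hSne with hx0
  set x1 := S.max' hSne with hx1
  set fib : ℤ → Finset ℤ := fun a => (A.filter (fun p => p.1 = a)).image Prod.snd with hfibdef
  set m : ℤ → ℤ := fun a => if h : (fib a).Nonempty then (fib a).min' h else 0 with hm
  set M : ℤ → ℤ := fun a => if h : (fib a).Nonempty then (fib a).max' h else 0 with hM
  have hfibmem : ∀ p ∈ A, p.2 ∈ fib p.1 := by
    intro p hp
    exact Finset.mem_image_of_mem _ (Finset.mem_filter.mpr ⟨hp, rfl⟩)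
  have hfibne : ∀ a ∈ S, (fib a).Nonempty := by
    intro a ha
    obtain ⟨p, hp, hpa⟩ := Finset.mem_image.mp ha
    exact ⟨p.2, hpa ▸ hfibmem p hp⟩
  have hfib_inA : ∀ a, ∀ y ∈ fib a, (a, y) ∈ A := by
    intro a y hy
    obtain ⟨p, hp, hpy⟩ := Finset.mem_image.mp hy
    have := (Finset.mem_filter.mp hp)
    have hpa : p = (a, y) := Prod.ext this.2 hpy
    exact hpa ▸ this.1
  have hmemA : ∀ a ∈ S, (a, m a) ∈ A ∧ (a, M a) ∈ A := by
    intro a ha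
    have h := hfibne a ha
    constructor
    · rw [hm]; simp only [dif_pos h]; exact hfib_inA a _ ((fib a).min'_mem h)
    · rw [hM]; simp only [dif_pos h]; exact hfib_inA a _ ((fib a).max'_mem h)
  have hbnd : ∀ p ∈ A, m p.1 ≤ p.2 ∧ p.2 ≤ M p.1 := by
    intro p hp
    have h : (fib p.1).Nonempty := ⟨p.2, hfibmem p hp⟩
    constructor
    · rw [hm]; simp only [dif_pos h]; exact Finset.min'_le _ _ (hfibmem p hp)
    · rw [hM]; simp only [dif_pos h]; exact Finset.le_max' _ _ (hfibmem p hp)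
  have hSbnd : ∀ a ∈ S, x0 ≤ a ∧ a ≤ x1 :=
    fun a ha => ⟨S.min'_le a ha, S.le_max' a ha⟩
  -- the constraint
  have hcon : ∀ a ∈ S, ∀ b ∈ S,
      M a - m b + max (max (a - x0) (x1 - a)) (max (b - x0) (x1 - b)) ≤ (d : ℤ) := by
    intro a ha b hb
    have hpa : (a, M a) ∈ A := (hmemA a ha).2
    have hpb : (b, m b) ∈ A := (hmemA b hb).1
    obtain ⟨p0, hp0A, hp01⟩ := Finset.mem_image.mp (S.min'_mem hSne)
    obtain ⟨p1, hp1A, hp11⟩ := Finset.mem_image.mp (S.max'_mem hSne)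
    have h1 := hanti _ hpa _ hpb _ hp0A
    have h2 := hanti _ hpa _ hpb _ hp1A
    have hab := hSbnd a ha
    have hbb := hSbnd b hb
    simp [tri] at h1 h2
    rw [hp01] at h1
    rw [hp11] at h2
    omega
  -- cardinality versus column sums
  have h1 : A.card = ∑ a ∈ S, (A.filter (fun p => p.1 = a)).card :=
    Finset.card_eq_sum_card_fiberwise (fun p hp => Finset.mem_image_of_mem _ hp)
  have hmle : ∀ a ∈ S, m a ≤ M a := by
    intro a ha
    have h := hfibne a ha
    rw [hm, hM]; simp only [dif_pos h]
    exact Finset.min'_le _ _ ((fib a).max'_mem h)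
  have h2 : ∀ a ∈ S, ((A.filter (fun p => p.1 = a)).card : ℤ) ≤ M a - m a + 1 := by
    intro a ha
    have himg : (A.filter (fun p => p.1 = a)).card = (fib a).card := by
      rw [hfibdef]
      refine (Finset.card_image_of_injOn ?_).symm
      intro p hp q hq hpq
      have hp1 := (Finset.mem_filter.mp hp).2
      have hq1 := (Finset.mem_filter.mp hq).2
      exact Prod.ext (hp1.trans hq1.symm) hpq
    have hsub : fib a ⊆ Finset.Icc (m a) (M a) := by
      intro y hy
      have hyA := hfib_inA a y hy
      have hb := hbnd _ hyA
      exact Finset.mem_Icc.mpr hb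
    have hc := Finset.card_le_card hsub
    rw [Int.card_Icc] at hc
    rw [himg]
    have := hmle a ha
    omega
  have hAS : (A.card : ℤ) ≤ ∑ a ∈ S, (M a - m a + 1) := by
    rw [h1]
    push_cast
    exact Finset.sum_le_sum h2
  -- apply the core lemma
  have hcore := core d x0 x1 m M S.card S ∅ rfl hSbnd (by simp)
    (Finset.disjoint_empty_right _) (by simp) hcon
  simp only [Finset.card_empty, Nat.cast_zero, add_zero] at hcore
  have hX0 : (0 : ℤ) ≤ x1 - x0 := by
    have := hSbnd _ (S.min'_mem hSne)
    omega
  have hcardle : (S.card : ℤ) ≤ (x1 - x0) + 1 := by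
    have hsub : S ⊆ Finset.Icc x0 x1 := fun a ha => Finset.mem_Icc.mpr (hSbnd a ha)
    have hc := Finset.card_le_card hsub
    rw [Int.card_Icc] at hc
    omega
  have hF := F2_le (d : ℤ) (x1 - x0) S.card hX0 hcardle
  have h14 : 14 * (A.card : ℤ) ≤ 4 * ((d : ℤ) + 1) * ((d : ℤ) + 2) + 12 := by
    nlinarith [hcore, hF, hAS]
  have h7 : 7 * A.card ≤ 2 * (d + 1) * (d + 2) + 6 := by
    have h7i : 7 * (A.card : ℤ) ≤ 2 * ((d : ℤ) + 1) * ((d : ℤ) + 2) + 6 := by linarith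
    exact_mod_cast (by push_cast; linarith : ((7 * A.card : ℕ) : ℤ) ≤ ((2 * (d + 1) * (d + 2) + 6 : ℕ) : ℤ))
  rw [Nat.le_div_iff_mul_le (by norm_num : 0 < 7)]
  linarith

/-- The maximum cardinality of a tristance anticode of diameter `d` in `ℤ²`
equals `⌈2(d+1)(d+2)/7⌉` (ceiling division). -/
theorem optimal_tristance_anticode_card (d : ℕ) :
    IsGreatest
      {n : ℕ | ∃ A : Finset (ℤ × ℤ),
        (∀ z1 ∈ A, ∀ z2 ∈ A, ∀ z3 ∈ A, tri z1 z2 z3 ≤ (d : ℤ)) ∧ A.card = n}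
      ((2 * (d + 1) * (d + 2) + 6) / 7) := by
  constructor
  · exact ⟨Oct d, Oct_anticode d, Oct_card d⟩
  · rintro n ⟨A, hA, rfl⟩
    exact upper d A hA
end

section
/- For distinct z1,z2,z3 ∈ Z^2, the tristance in the infinity graph satisfies d3*(z1,z2,z3) = ⌈ d3(φ(z1),φ(z2),φ(z3)) / 2 ⌉, where φ(x,y) = (x−y, x+y) and d3 is the grid-graph tristance. -/
/-- The infinity graph on `ℤ²`: edges join points at `L∞`-distance 1. -/
def infGraph : SimpleGraph (ℤ × ℤ) where
  Adj z w := max |z.1 - w.1| |z.2 - w.2| = 1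
  symm := by
    constructor
    intro z w h
    try dsimp only at h ⊢
    rw [abs_sub_comm w.1, abs_sub_comm w.2]
    exact h
  loopless := by constructor; intro z h; simp at h

/-- Tristance in the infinity graph: the minimum number of edges of a subtree
containing the three points. -/
noncomputable def tristanceInf (z1 z2 z3 : ℤ × ℤ) : ℕ :=
  sInf {n : ℕ | ∃ S : Finset (ℤ × ℤ), z1 ∈ S ∧ z2 ∈ S ∧ z3 ∈ S ∧
    (infGraph.induce (S : Set (ℤ × ℤ))).Connected ∧ S.card = n + 1}

/-- The rotation-scaling map `φ(x,y) = (x−y, x+y)`. -/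
def phi (z : ℤ × ℤ) : ℤ × ℤ := (z.1 - z.2, z.1 + z.2)

/-- Chebyshev distance. -/
def cheb (z w : ℤ × ℤ) : ℕ := max (z.1 - w.1).natAbs (z.2 - w.2).natAbs

lemma infGraph_adj_iff {z w : ℤ × ℤ} : infGraph.Adj z w ↔ cheb z w = 1 := by
  show max |z.1 - w.1| |z.2 - w.2| = 1 ↔ _
  rw [Int.abs_eq_natAbs, Int.abs_eq_natAbs]
  unfold cheb
  omega

lemma reachable_induce_of_walk {V : Type*} {G : SimpleGraph V} {s : Set V} :
    ∀ {x y : V} (w : G.Walk x y), (∀ z ∈ w.support, z ∈ s) →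
      ∀ (hx : x ∈ s) (hy : y ∈ s), (G.induce s).Reachable ⟨x, hx⟩ ⟨y, hy⟩ := by
  intro x y w
  induction w with
  | nil => intro _ hx hy; exact SimpleGraph.Reachable.refl _
  | @cons u v t h p ih =>
    intro hw hx hy
    have hv : v ∈ s := hw v (by simp)
    have h1 : (G.induce s).Adj ⟨u, hx⟩ ⟨v, hv⟩ := h
    exact h1.reachable.trans (ih (fun z hz => hw z (by simp [hz])) hv hy)

lemma exists_walk_of_induce {V : Type*} {G : SimpleGraph V} {s : Set V} :
    ∀ {x y : ↥s} (w : (G.induce s).Walk x y),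
      ∃ w' : G.Walk x.1 y.1, ∀ z ∈ w'.support, ∃ z0 ∈ w.support, ↑z0 = z := by
  intro x y w
  induction w with
  | nil => exact ⟨SimpleGraph.Walk.nil, by simp⟩
  | @cons u v t h p ih =>
    obtain ⟨w', hw'⟩ := ih
    refine ⟨SimpleGraph.Walk.cons h w', ?_⟩
    intro z hz
    change z ∈ (u : V) :: w'.support at hz
    rcases List.mem_cons.1 hz with rfl | hz
    · exact ⟨u, by simp, rfl⟩
    · obtain ⟨z0, hz0, rfl⟩ := hw' z hz
      exact ⟨z0, by simp [hz0], rfl⟩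

lemma exists_removable {V : Type*} [DecidableEq V] {G : SimpleGraph V} (S : Finset V)
    (hconn : (G.induce (S : Set V)).Connected) (h2 : 2 ≤ S.card) :
    ∃ v ∈ S, ∃ u ∈ S.erase v, G.Adj v u ∧
      (G.induce ((S.erase v : Finset V) : Set V)).Connected := by
  classical
  obtain ⟨r0, hr0⟩ : S.Nonempty := Finset.card_pos.1 (by omega)
  have hr0' : r0 ∈ (S : Set V) := hr0
  set H := G.induce (S : Set V) with hH
  set r : ↥(S : Set V) := ⟨r0, hr0'⟩ with hr
  obtain ⟨v, -, hvmax⟩ := Finset.exists_max_image (Finset.univ : Finset ↥(S : Set V))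
    (H.dist r) ⟨r, Finset.mem_univ r⟩
  obtain ⟨u0, hu0S, hu0r⟩ := Finset.exists_mem_ne (s := S) (by omega) r0
  have hu0' : u0 ∈ (S : Set V) := hu0S
  have hdru : 0 < H.dist r ⟨u0, hu0'⟩ :=
    hconn.pos_dist_of_ne (by simp [hr, Subtype.ext_iff]; exact fun h => hu0r h.symm)
  have hdrv : 0 < H.dist r v := lt_of_lt_of_le hdru (hvmax _ (Finset.mem_univ _))
  have hvr : v ≠ r := by
    intro h; rw [h] at hdrv; simp [SimpleGraph.dist_self] at hdrv
  -- shortest walks from r avoid v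
  have key : ∀ u : ↥(S : Set V), u ≠ v → ∃ p : H.Walk r u, v ∉ p.support := by
    intro u huv
    obtain ⟨p, hp⟩ := (hconn.preconnected r u).exists_walk_length_eq_dist
    by_cases hvp : v ∈ p.support
    · exfalso
      have h1 := SimpleGraph.dist_le (p.takeUntil v hvp)
      have h2 : (p.dropUntil v hvp).length ≠ 0 := fun h0 =>
        huv (SimpleGraph.Walk.eq_of_length_eq_zero h0).symm
      have h3 : (p.takeUntil v hvp).length + (p.dropUntil v hvp).length = p.length := by
        rw [← SimpleGraph.Walk.length_append, SimpleGraph.Walk.take_spec]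
      have h4 := hvmax u (Finset.mem_univ u)
      omega
    · exact ⟨p, hvp⟩
  -- v has a neighbor in S.erase v
  obtain ⟨p0, hp0⟩ := (hconn.preconnected v r).exists_walk_length_eq_dist
  have hp0pos : p0.length ≠ 0 := by
    have := hconn.pos_dist_of_ne hvr
    omega
  obtain ⟨u, hu, rest⟩ : ∃ u : ↥(S : Set V), H.Adj v u ∧ True := by
    cases p0 with
    | nil => simp at hp0pos
    | cons h q => exact ⟨_, h, trivial⟩
  have huv : (u : V) ≠ (v : V) := fun h => (hu.ne' (Subtype.ext h)).elim
  have huE : (u : V) ∈ S.erase v := Finset.mem_erase.2 ⟨huv, u.2⟩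
  have hvE : (v : V) ∈ S := v.2
  have hrE : r0 ∈ S.erase v := Finset.mem_erase.2 ⟨fun h => hvr (Subtype.ext h.symm), hr0⟩
  have hrE' : r0 ∈ ((S.erase v : Finset V) : Set V) := hrE
  refine ⟨v, hvE, u, huE, hu, ?_⟩
  rw [SimpleGraph.connected_iff]
  constructor
  · -- preconnected
    have claim : ∀ x : ↥((S.erase v : Finset V) : Set V),
        (G.induce ((S.erase v : Finset V) : Set V)).Reachable ⟨r0, hrE'⟩ x := by
      intro x
      have hxS : (x : V) ∈ S := Finset.mem_of_mem_erase x.2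
      have hxv : (x : V) ≠ v := (Finset.mem_erase.1 x.2).1
      obtain ⟨p, hpav⟩ := key ⟨x, hxS⟩ (fun h => hxv (congrArg Subtype.val h))
      obtain ⟨w', hw'⟩ := exists_walk_of_induce p
      have hsub : ∀ z ∈ w'.support, z ∈ ((S.erase v : Finset V) : Set V) := by
        intro z hz
        obtain ⟨z0, hz0, rfl⟩ := hw' z hz
        have hz0v : z0 ≠ v := fun h => hpav (h ▸ hz0)
        exact Finset.mem_coe.2 (Finset.mem_erase.2 ⟨fun h => hz0v (Subtype.ext h), z0.2⟩)
      have := reachable_induce_of_walk w' hsub hrE' (hsub _ w'.end_mem_support)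
      exact this
    intro x y
    exact (claim x).symm.trans (claim y)
  · exact ⟨⟨r0, hrE'⟩⟩

lemma cheb_self (a : ℤ × ℤ) : cheb a a = 0 := by unfold cheb; omega

lemma cheb_comm (a b : ℤ × ℤ) : cheb a b = cheb b a := by unfold cheb; omega

lemma cheb_triangle (a b c : ℤ × ℤ) : cheb a c ≤ cheb a b + cheb b c := by
  unfold cheb; omega

lemma lower_bound_s14 : ∀ (n : ℕ) (S : Finset (ℤ × ℤ)), S.card = n →
    (infGraph.induce (S : Set (ℤ × ℤ))).Connected →
    ∀ a ∈ S, ∀ b ∈ S, ∀ c ∈ S, cheb a b + cheb a c + cheb b c + 2 ≤ 2 * n := by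
  intro n
  induction n using Nat.strong_induction_on with
  | _ n ih =>
    intro S hcard hconn a ha b hb c hc
    rcases Nat.lt_or_ge n 2 with hn | hn
    · have h1 : n = 1 := by
        have := Finset.card_pos.2 ⟨a, ha⟩; omega
      subst h1
      obtain ⟨x, rfl⟩ := Finset.card_eq_one.1 hcard
      rw [Finset.mem_singleton] at ha hb hc
      subst ha; subst hb; subst hc
      unfold cheb; omega
    · obtain ⟨v, hvS, u, huS, hadj, hconn'⟩ := exists_removable S hconn (by omega)
      have hvu : cheb v u = 1 := infGraph_adj_iff.1 hadj
      have hcard' : (S.erase v).card = n - 1 := by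
        rw [Finset.card_erase_of_mem hvS]; omega
      have key : ∀ a' ∈ S.erase v, ∀ b' ∈ S.erase v, ∀ c' ∈ S.erase v,
          cheb a' b' + cheb a' c' + cheb b' c' + 2 ≤ 2 * (n - 1) :=
        fun a' ha' b' hb' c' hc' =>
          ih (n - 1) (by omega) (S.erase v) hcard' hconn' a' ha' b' hb' c' hc'
      have hcuv : cheb u v = 1 := (cheb_comm u v).trans hvu
      by_cases hav : a = v <;> by_cases hbv : b = v <;> by_cases hcv : c = v
      · rw [hav, hbv, hcv]
        have := cheb_self v; omega
      · rw [hav, hbv]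
        have hIH := key u huS u huS c (Finset.mem_erase.2 ⟨hcv, hc⟩)
        have e1 := cheb_self v; have e2 := cheb_self u
        have t1 := cheb_triangle v u c
        omega
      · rw [hav, hcv]
        have hIH := key u huS b (Finset.mem_erase.2 ⟨hbv, hb⟩) u huS
        have e1 := cheb_self v; have e2 := cheb_self u
        have t1 := cheb_triangle v u b
        have t2 := cheb_triangle b u v
        omega
      · rw [hav]
        have hIH := key u huS b (Finset.mem_erase.2 ⟨hbv, hb⟩)
          c (Finset.mem_erase.2 ⟨hcv, hc⟩)
        have t1 := cheb_triangle v u b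
        have t2 := cheb_triangle v u c
        omega
      · rw [hbv, hcv]
        have hIH := key a (Finset.mem_erase.2 ⟨hav, ha⟩) u huS u huS
        have e1 := cheb_self v; have e2 := cheb_self u
        have t1 := cheb_triangle a u v
        omega
      · rw [hbv]
        have hIH := key a (Finset.mem_erase.2 ⟨hav, ha⟩) u huS
          c (Finset.mem_erase.2 ⟨hcv, hc⟩)
        have t1 := cheb_triangle a u v
        have t2 := cheb_triangle v u c
        omega
      · rw [hcv]
        have hIH := key a (Finset.mem_erase.2 ⟨hav, ha⟩)
          b (Finset.mem_erase.2 ⟨hbv, hb⟩) u huS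
        have t1 := cheb_triangle a u v
        have t2 := cheb_triangle b u v
        omega
      · have hIH := key a (Finset.mem_erase.2 ⟨hav, ha⟩)
          b (Finset.mem_erase.2 ⟨hbv, hb⟩) c (Finset.mem_erase.2 ⟨hcv, hc⟩)
        omega

lemma exists_walk_cheb : ∀ (n : ℕ) (m z : ℤ × ℤ), cheb m z = n →
    ∃ w : infGraph.Walk m z, w.length = n := by
  intro n
  induction n with
  | zero =>
    intro m z h
    have h1 : m = z := by
      have : m.1 = z.1 ∧ m.2 = z.2 := by unfold cheb at h; omega
      exact Prod.ext this.1 this.2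
    subst h1
    exact ⟨SimpleGraph.Walk.nil, rfl⟩
  | succ n ihn =>
    intro m z h
    set m' : ℤ × ℤ := (if m.1 < z.1 then m.1 + 1 else if z.1 < m.1 then m.1 - 1 else m.1,
                       if m.2 < z.2 then m.2 + 1 else if z.2 < m.2 then m.2 - 1 else m.2)
      with hm'
    have h1 : cheb m m' = 1 ∧ cheb m' z = n := by
      rw [hm']; unfold cheb at h ⊢; dsimp only; split_ifs <;> omega
    obtain ⟨w, hw⟩ := ihn m' z h1.2
    exact ⟨SimpleGraph.Walk.cons (infGraph_adj_iff.2 h1.1) w, by simp [hw]⟩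

def medi (x y z : ℤ) : ℤ := x + y + z - max x (max y z) - min x (min y z)

def mbA (t x y z : ℤ) : ℤ :=
  if (t + medi x y z) % 2 = 0 then medi x y z
  else if medi x y z < max x (max y z) then medi x y z + 1
  else if min x (min y z) < medi x y z then medi x y z - 1
  else medi x y z

lemma two_cheb (m z : ℤ × ℤ) : 2 * (cheb m z : ℤ) =
    ((((z.1 - z.2) - (m.1 - m.2)).natAbs : ℤ)) + (((z.1 + z.2) - (m.1 + m.2)).natAbs : ℤ) := by
  unfold cheb; omega

lemma sum_abs_lower (b1 b2 b3 t : ℤ) :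
    max b1 (max b2 b3) - min b1 (min b2 b3)
      ≤ ((b1-t).natAbs + (b2-t).natAbs + (b3-t).natAbs : ℤ) := by
  omega

lemma sum_abs_med (b1 b2 b3 t : ℤ) (hlo : min b1 (min b2 b3) ≤ t)
    (hhi : t ≤ max b1 (max b2 b3)) :
    ((b1-t).natAbs + (b2-t).natAbs + (b3-t).natAbs : ℤ)
      = (max b1 (max b2 b3) - min b1 (min b2 b3)) + ((medi b1 b2 b3 - t).natAbs : ℤ) := by
  simp only [medi]; omega

set_option maxHeartbeats 1000000 in
lemma pick_mb (a1 a2 a3 b1 b2 b3 : ℤ) (h1 : (a1+b1) % 2 = 0) (h2 : (a2+b2) % 2 = 0)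
    (h3 : (a3+b3) % 2 = 0) :
    ∃ ma mb : ℤ, (ma + mb) % 2 = 0 ∧
      ((a1-ma).natAbs + (a2-ma).natAbs + (a3-ma).natAbs : ℤ)
        = max a1 (max a2 a3) - min a1 (min a2 a3) ∧
      max b1 (max b2 b3) - min b1 (min b2 b3)
        ≤ ((b1-mb).natAbs + (b2-mb).natAbs + (b3-mb).natAbs : ℤ) ∧
      ((b1-mb).natAbs + (b2-mb).natAbs + (b3-mb).natAbs : ℤ)
        ≤ max b1 (max b2 b3) - min b1 (min b2 b3) + 1 := by
  refine ⟨medi a1 a2 a3, mbA (medi a1 a2 a3) b1 b2 b3, ?_, ?_, ?_, ?_⟩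
  · simp only [mbA, medi]; split_ifs <;> omega
  · simp only [medi]; omega
  · exact sum_abs_lower b1 b2 b3 _
  · have hin : min b1 (min b2 b3) ≤ mbA (medi a1 a2 a3) b1 b2 b3 ∧
        mbA (medi a1 a2 a3) b1 b2 b3 ≤ max b1 (max b2 b3) ∧
        ((medi b1 b2 b3 - mbA (medi a1 a2 a3) b1 b2 b3).natAbs : ℤ) ≤ 1 := by
      simp only [mbA, medi]
      split_ifs <;> omega
    rw [sum_abs_med b1 b2 b3 _ hin.1 hin.2.1]
    have := hin.2.2
    omega

lemma median_exists (p q r : ℤ × ℤ) :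
    ∃ m : ℤ × ℤ,
      tri (phi p) (phi q) (phi r) ≤ 2 * ((cheb m p : ℤ) + cheb m q + cheb m r) ∧
      2 * ((cheb m p : ℤ) + cheb m q + cheb m r) ≤ tri (phi p) (phi q) (phi r) + 1 := by
  obtain ⟨ma, mb, hpar, hA, hB1, hB2⟩ := pick_mb (p.1 - p.2) (q.1 - q.2) (r.1 - r.2)
    (p.1 + p.2) (q.1 + q.2) (r.1 + r.2) (by omega) (by omega) (by omega)
  refine ⟨((ma + mb) / 2, (mb - ma) / 2), ?_, ?_⟩ <;>
  · have e1 : ((ma + mb) / 2 : ℤ) - (mb - ma) / 2 = ma := by omega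
    have e2 : ((ma + mb) / 2 : ℤ) + (mb - ma) / 2 = mb := by omega
    have t1 := two_cheb ((ma + mb) / 2, (mb - ma) / 2) p
    have t2 := two_cheb ((ma + mb) / 2, (mb - ma) / 2) q
    have t3 := two_cheb ((ma + mb) / 2, (mb - ma) / 2) r
    dsimp only at t1 t2 t3
    rw [e1, e2] at t1 t2 t3
    simp only [tri, phi]
    linarith [t1, t2, t3, hA, hB1, hB2]

lemma abs3 (x y z : ℤ) : ((x-y).natAbs + (x-z).natAbs + (y-z).natAbs : ℤ)
    = 2 * (max x (max y z) - min x (min y z)) := by omega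

theorem tristanceInf_formula (z1 z2 z3 : ℤ × ℤ)
    (h12 : z1 ≠ z2) (h13 : z1 ≠ z3) (h23 : z2 ≠ z3) :
    (tristanceInf z1 z2 z3 : ℤ) =
      ⌈(tri (phi z1) (phi z2) (phi z3) : ℚ) / 2⌉ := by
  classical
  obtain ⟨m, hlo, hup⟩ := median_exists z1 z2 z3
  obtain ⟨D, hD⟩ : ∃ D : ℤ, tri (phi z1) (phi z2) (phi z3) = D := ⟨_, rfl⟩
  rw [hD] at hlo hup ⊢
  -- pairwise cheb sum equals D
  have hsum : (cheb z1 z2 : ℤ) + cheb z1 z3 + cheb z2 z3 = D := by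
    have t12 := two_cheb z2 z1
    have t13 := two_cheb z3 z1
    have t23 := two_cheb z3 z2
    have c12 : cheb z1 z2 = cheb z2 z1 := cheb_comm _ _
    have c13 : cheb z1 z3 = cheb z3 z1 := cheb_comm _ _
    have c23 : cheb z2 z3 = cheb z3 z2 := cheb_comm _ _
    have a3 := abs3 (z1.1 - z1.2) (z2.1 - z2.2) (z3.1 - z3.2)
    have b3 := abs3 (z1.1 + z1.2) (z2.1 + z2.2) (z3.1 + z3.2)
    rw [← hD]
    simp only [tri, phi]
    rw [c12, c13, c23]
    push_cast [c12, c13, c23] at *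
    linarith [t12, t13, t23, a3, b3]
  -- the three geodesic walks from m
  obtain ⟨w1, hw1⟩ := exists_walk_cheb (cheb m z1) m z1 rfl
  obtain ⟨w2, hw2⟩ := exists_walk_cheb (cheb m z2) m z2 rfl
  obtain ⟨w3, hw3⟩ := exists_walk_cheb (cheb m z3) m z3 rfl
  set S : Finset (ℤ × ℤ) :=
    w1.support.toFinset ∪ w2.support.toFinset ∪ w3.support.toFinset with hS
  have hm1 : m ∈ w1.support.toFinset := List.mem_toFinset.2 w1.start_mem_support
  have hm2 : m ∈ w2.support.toFinset := List.mem_toFinset.2 w2.start_mem_support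
  have hm3 : m ∈ w3.support.toFinset := List.mem_toFinset.2 w3.start_mem_support
  have hmS : m ∈ S := Finset.mem_union_left _ (Finset.mem_union_left _ hm1)
  have hz1S : z1 ∈ S := Finset.mem_union_left _
    (Finset.mem_union_left _ (List.mem_toFinset.2 w1.end_mem_support))
  have hz2S : z2 ∈ S := Finset.mem_union_left _
    (Finset.mem_union_right _ (List.mem_toFinset.2 w2.end_mem_support))
  have hz3S : z3 ∈ S := Finset.mem_union_right _ (List.mem_toFinset.2 w3.end_mem_support)
  -- connectivity
  have hconnS : (infGraph.induce (S : Set (ℤ × ℤ))).Connected := by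
    have claim : ∀ x (hx : x ∈ (S : Set (ℤ × ℤ))),
        (infGraph.induce (S : Set (ℤ × ℤ))).Reachable ⟨m, hmS⟩ ⟨x, hx⟩ := by
      intro x hx
      have hx' : x ∈ w1.support ∨ x ∈ w2.support ∨ x ∈ w3.support := by
        have : x ∈ S := hx
        rw [hS] at this
        simp only [Finset.mem_union, List.mem_toFinset] at this
        tauto
      rcases hx' with h | h | h
      · exact reachable_induce_of_walk (w1.takeUntil x h)
          (fun z hz => Finset.mem_coe.2 (Finset.mem_union_left _ (Finset.mem_union_left _
            (List.mem_toFinset.2 (w1.support_takeUntil_subset h hz))))) hmS hx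
      · exact reachable_induce_of_walk (w2.takeUntil x h)
          (fun z hz => Finset.mem_coe.2 (Finset.mem_union_left _ (Finset.mem_union_right _
            (List.mem_toFinset.2 (w2.support_takeUntil_subset h hz))))) hmS hx
      · exact reachable_induce_of_walk (w3.takeUntil x h)
          (fun z hz => Finset.mem_coe.2 (Finset.mem_union_right _
            (List.mem_toFinset.2 (w3.support_takeUntil_subset h hz)))) hmS hx
    rw [SimpleGraph.connected_iff]
    exact ⟨fun x y => (claim x.1 x.2).symm.trans (claim y.1 y.2), ⟨⟨m, hmS⟩⟩⟩
  -- cardinality bound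
  have hcardS : S.card ≤ cheb m z1 + cheb m z2 + cheb m z3 + 1 := by
    have hsub : S ⊆ w1.support.toFinset ∪
        (w2.support.toFinset.erase m ∪ w3.support.toFinset.erase m) := by
      intro x hx
      by_cases hxm : x = m
      · subst hxm
        exact Finset.mem_union_left _ hm1
      · rw [hS] at hx
        simp only [Finset.mem_union] at hx ⊢
        rcases hx with (h | h) | h
        · exact Or.inl h
        · exact Or.inr (Or.inl (Finset.mem_erase.2 ⟨hxm, h⟩))
        · exact Or.inr (Or.inr (Finset.mem_erase.2 ⟨hxm, h⟩))
    have h1 := Finset.card_le_card hsub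
    have h2 := Finset.card_union_le w1.support.toFinset
      (w2.support.toFinset.erase m ∪ w3.support.toFinset.erase m)
    have h3 := Finset.card_union_le (w2.support.toFinset.erase m)
      (w3.support.toFinset.erase m)
    have c1 : w1.support.toFinset.card ≤ cheb m z1 + 1 := by
      have := List.toFinset_card_le w1.support
      rw [SimpleGraph.Walk.length_support, hw1] at this
      exact this
    have c2 : (w2.support.toFinset.erase m).card ≤ cheb m z2 := by
      rw [Finset.card_erase_of_mem hm2]
      have := List.toFinset_card_le w2.support
      rw [SimpleGraph.Walk.length_support, hw2] at this
      omega
    have c3 : (w3.support.toFinset.erase m).card ≤ cheb m z3 := by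
      rw [Finset.card_erase_of_mem hm3]
      have := List.toFinset_card_le w3.support
      rw [SimpleGraph.Walk.length_support, hw3] at this
      omega
    omega
  have hScard1 : 1 ≤ S.card := Finset.card_pos.2 ⟨m, hmS⟩
  have hmemset : S.card - 1 ∈ {n : ℕ | ∃ T : Finset (ℤ × ℤ), z1 ∈ T ∧ z2 ∈ T ∧ z3 ∈ T ∧
      (infGraph.induce (T : Set (ℤ × ℤ))).Connected ∧ T.card = n + 1} :=
    ⟨S, hz1S, hz2S, hz3S, hconnS, by omega⟩
  have hub2 : tristanceInf z1 z2 z3 ≤ S.card - 1 := Nat.sInf_le hmemset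
  have hsmem : ∃ T : Finset (ℤ × ℤ), z1 ∈ T ∧ z2 ∈ T ∧ z3 ∈ T ∧
      (infGraph.induce (T : Set (ℤ × ℤ))).Connected ∧
      T.card = tristanceInf z1 z2 z3 + 1 := Nat.sInf_mem ⟨_, hmemset⟩
  obtain ⟨T, hT1, hT2, hT3, hTconn, hTcard⟩ := hsmem
  have hlb := lower_bound_s14 T.card T rfl hTconn z1 hT1 z2 hT2 z3 hT3
  -- final arithmetic
  have key1 : 2 * (tristanceInf z1 z2 z3 : ℤ) ≤ D + 1 := by omega
  have key2 : D ≤ 2 * (tristanceInf z1 z2 z3 : ℤ) := by omega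
  rw [eq_comm, Int.ceil_eq_iff]
  constructor
  · rw [lt_div_iff₀ (by norm_num : (0:ℚ) < 2)]
    have h1 : ((tristanceInf z1 z2 z3 : ℚ) - 1) * 2 < (D:ℚ) := by
      exact_mod_cast (show ((tristanceInf z1 z2 z3 : ℤ) - 1) * 2 < D by omega)
    push_cast
    linarith [h1]
  · rw [div_le_iff₀ (by norm_num : (0:ℚ) < 2)]
    have h1 : (D:ℚ) ≤ (tristanceInf z1 z2 z3 : ℚ) * 2 := by
      exact_mod_cast (show D ≤ (tristanceInf z1 z2 z3 : ℤ) * 2 by omega)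
    push_cast
    linarith [h1]
end

section
/- In the hexagonal graph, the distance between v1=(x1,y1) and v2=(x2,y2) equals max{x1−x2, y1−y2, 0} − min{x1−x2, y1−y2, 0}. -/
/-- The hexagonal graph in Eisenstein coordinates: `(x,y)` is adjacent to
`(x±1,y)`, `(x,y±1)`, `(x+1,y+1)`, `(x−1,y−1)`. -/
def hexGraph : SimpleGraph (ℤ × ℤ) where
  Adj v w :=
    (v.1 - w.1 = 1 ∧ v.2 = w.2) ∨ (v.1 - w.1 = -1 ∧ v.2 = w.2) ∨
    (v.1 = w.1 ∧ v.2 - w.2 = 1) ∨ (v.1 = w.1 ∧ v.2 - w.2 = -1) ∨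
    (v.1 - w.1 = 1 ∧ v.2 - w.2 = 1) ∨ (v.1 - w.1 = -1 ∧ v.2 - w.2 = -1)
  symm := ⟨by intro v w h; omega⟩
  loopless := ⟨by intro v h; omega⟩

/-- The candidate distance value as a natural number. -/
def hexF (a b : ℤ) : ℕ := (max (max a b) 0 - min (min a b) 0).toNat

lemma hexF_eq (a b : ℤ) :
    (hexF a b : ℤ) = max (max a b) 0 - min (min a b) 0 := by
  unfold hexF
  simp only [max_def, min_def]
  split_ifs <;> omega

lemma hex_exists_walk : ∀ (n : ℕ) (v w : ℤ × ℤ),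
    hexF (v.1 - w.1) (v.2 - w.2) = n → ∃ p : hexGraph.Walk v w, p.length = n := by
  intro n
  induction n with
  | zero =>
    intro v w h
    have h1 : v.1 = w.1 ∧ v.2 = w.2 := by
      unfold hexF at h
      simp only [max_def, min_def] at h
      split_ifs at h <;> omega
    have : v = w := Prod.ext h1.1 h1.2
    subst this
    exact ⟨SimpleGraph.Walk.nil, rfl⟩
  | succ n ih =>
    intro v w h
    have key : ∃ v' : ℤ × ℤ, hexGraph.Adj v v' ∧ hexF (v'.1 - w.1) (v'.2 - w.2) = n := by
      by_cases ha : 0 < v.1 - w.1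
      · by_cases hb : 0 < v.2 - w.2
        · refine ⟨(v.1 - 1, v.2 - 1), ?_, ?_⟩
          · show _ ∨ _; simp only [hexGraph]; try norm_num; try omega
          · show hexF (v.1 - 1 - w.1) (v.2 - 1 - w.2) = n
            unfold hexF at h ⊢
            simp only [max_def, min_def] at h ⊢
            split_ifs at h ⊢ <;> omega
        · refine ⟨(v.1 - 1, v.2), ?_, ?_⟩
          · show _ ∨ _; simp only [hexGraph]; try norm_num; try omega
          · show hexF (v.1 - 1 - w.1) (v.2 - w.2) = n
            unfold hexF at h ⊢
            simp only [max_def, min_def] at h ⊢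
            split_ifs at h ⊢ <;> omega
      · by_cases hb : 0 < v.2 - w.2
        · refine ⟨(v.1, v.2 - 1), ?_, ?_⟩
          · show _ ∨ _; simp only [hexGraph]; try norm_num; try omega
          · show hexF (v.1 - w.1) (v.2 - 1 - w.2) = n
            unfold hexF at h ⊢
            simp only [max_def, min_def] at h ⊢
            split_ifs at h ⊢ <;> omega
        · by_cases ha' : v.1 - w.1 < 0
          · by_cases hb' : v.2 - w.2 < 0
            · refine ⟨(v.1 + 1, v.2 + 1), ?_, ?_⟩
              · show _ ∨ _; simp only [hexGraph]; try norm_num; try omega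
              · show hexF (v.1 + 1 - w.1) (v.2 + 1 - w.2) = n
                unfold hexF at h ⊢
                simp only [max_def, min_def] at h ⊢
                split_ifs at h ⊢ <;> omega
            · refine ⟨(v.1 + 1, v.2), ?_, ?_⟩
              · show _ ∨ _; simp only [hexGraph]; try norm_num; try omega
              · show hexF (v.1 + 1 - w.1) (v.2 - w.2) = n
                unfold hexF at h ⊢
                simp only [max_def, min_def] at h ⊢
                split_ifs at h ⊢ <;> omega
          · by_cases hb' : v.2 - w.2 < 0
            · refine ⟨(v.1, v.2 + 1), ?_, ?_⟩
              · show _ ∨ _; simp only [hexGraph]; try norm_num; try omega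
              · show hexF (v.1 - w.1) (v.2 + 1 - w.2) = n
                unfold hexF at h ⊢
                simp only [max_def, min_def] at h ⊢
                split_ifs at h ⊢ <;> omega
            · exfalso
              unfold hexF at h
              simp only [max_def, min_def] at h
              split_ifs at h <;> omega
    obtain ⟨v', hadj, hF⟩ := key
    obtain ⟨p, hp⟩ := ih v' w hF
    exact ⟨SimpleGraph.Walk.cons hadj p, by simp [hp]⟩

lemma hex_walk_le {v w : ℤ × ℤ} (p : hexGraph.Walk v w) :
    hexF (v.1 - w.1) (v.2 - w.2) ≤ p.length := by
  induction p with
  | nil =>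
    unfold hexF
    simp only [max_def, min_def]
    split_ifs <;> omega
  | @cons v u w hadj p ih =>
    have h : (v.1 - u.1 = 1 ∧ v.2 = u.2) ∨ (v.1 - u.1 = -1 ∧ v.2 = u.2) ∨
        (v.1 = u.1 ∧ v.2 - u.2 = 1) ∨ (v.1 = u.1 ∧ v.2 - u.2 = -1) ∨
        (v.1 - u.1 = 1 ∧ v.2 - u.2 = 1) ∨ (v.1 - u.1 = -1 ∧ v.2 - u.2 = -1) := hadj
    have step : hexF (v.1 - w.1) (v.2 - w.2) ≤ hexF (u.1 - w.1) (u.2 - w.2) + 1 := by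
      unfold hexF
      simp only [max_def, min_def]
      split_ifs <;> omega
    simp only [SimpleGraph.Walk.length_cons]
    omega

lemma hex_dist_eq (v w : ℤ × ℤ) :
    hexGraph.dist v w = hexF (v.1 - w.1) (v.2 - w.2) := by
  obtain ⟨p, hp⟩ := hex_exists_walk (hexF (v.1 - w.1) (v.2 - w.2)) v w rfl
  have hle : hexGraph.dist v w ≤ hexF (v.1 - w.1) (v.2 - w.2) := by
    rw [← hp]; exact SimpleGraph.dist_le p
  have hreach : hexGraph.Reachable v w := ⟨p⟩
  obtain ⟨q, hq⟩ := hreach.exists_walk_length_eq_dist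
  have hge : hexF (v.1 - w.1) (v.2 - w.2) ≤ hexGraph.dist v w := by
    rw [← hq]; exact hex_walk_le q
  omega

theorem hex_distance_formula (v w : ℤ × ℤ) :
    (hexGraph.dist v w : ℤ) =
      max (max (v.1 - w.1) (v.2 - w.2)) 0 - min (min (v.1 - w.1) (v.2 - w.2)) 0 := by
  rw [hex_dist_eq, hexF_eq]
end

section
/- For distinct v1,v2,v3 in the hexagonal lattice with coordinates (xi,yi), the hexagonal tristance equals Σ_{i=1}^{3} [ max{xi−x_mid, yi−y_mid, 0} − min{xi−x_mid, yi−y_mid, 0} ], where x_mid and y_mid are the medians of the xi and yi respectively. -/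
/-- Hexagonal tristance: the minimum number of edges of a subtree of the
hexagonal graph containing the three points. -/
noncomputable def hexTristance (v1 v2 v3 : ℤ × ℤ) : ℕ :=
  sInf {n : ℕ | ∃ S : Finset (ℤ × ℤ), v1 ∈ S ∧ v2 ∈ S ∧ v3 ∈ S ∧
    (hexGraph.induce (S : Set (ℤ × ℤ))).Connected ∧ S.card = n + 1}

/-- `max{x,y,0} − min{x,y,0}`. -/
def hexTerm (x y : ℤ) : ℤ := max (max x y) 0 - min (min x y) 0

/-- The median of three integers. -/
def mid3 (a b c : ℤ) : ℤ := max (min a b) (min (max a b) c)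

/-! ### Arithmetic lemmas -/

lemma hexTerm_two (x y : ℤ) : 2 * hexTerm x y = (x.natAbs : ℤ) + y.natAbs + (x-y).natAbs := by
  unfold hexTerm; simp only [max_def, min_def]; split_ifs <;> omega

lemma mid3_cases (a b c : ℤ) :
    (mid3 a b c = a ∧ (b ≤ a ∧ a ≤ c ∨ c ≤ a ∧ a ≤ b)) ∨
    (mid3 a b c = b ∧ (a ≤ b ∧ b ≤ c ∨ c ≤ b ∧ b ≤ a)) ∨
    (mid3 a b c = c ∧ (a ≤ c ∧ c ≤ b ∨ b ≤ c ∧ c ≤ a)) := by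
  unfold mid3; simp only [max_def, min_def]; split_ifs <;> omega

lemma medL1 (x1 x2 x3 s : ℤ) :
    ((x1 - mid3 x1 x2 x3).natAbs : ℤ) + (x2 - mid3 x1 x2 x3).natAbs + (x3 - mid3 x1 x2 x3).natAbs
      + (s - mid3 x1 x2 x3).natAbs
    ≤ ((x1 - s).natAbs : ℤ) + (x2 - s).natAbs + (x3 - s).natAbs := by
  rcases mid3_cases x1 x2 x3 with ⟨h, h'⟩ | ⟨h, h'⟩ | ⟨h, h'⟩ <;> rw [h] <;> omega

lemma slopeL (d1 d2 d3 δ u : ℤ) (h1 : d1 ≤ δ ∨ d2 ≤ δ ∨ d3 ≤ δ)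
    (h2 : δ ≤ d1 ∨ δ ≤ d2 ∨ δ ≤ d3) :
    ((d1 - δ).natAbs : ℤ) + (d2 - δ).natAbs + (d3 - δ).natAbs
    ≤ ((d1 - u).natAbs : ℤ) + (d2 - u).natAbs + (d3 - u).natAbs + (u - δ).natAbs := by
  omega

lemma med_cross (x1 x2 x3 y1 y2 y3 : ℤ) :
    (x1 ≤ mid3 x1 x2 x3 ∧ mid3 y1 y2 y3 ≤ y1) ∨
    (x2 ≤ mid3 x1 x2 x3 ∧ mid3 y1 y2 y3 ≤ y2) ∨
    (x3 ≤ mid3 x1 x2 x3 ∧ mid3 y1 y2 y3 ≤ y3) := by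
  have hx := mid3_cases x1 x2 x3; have hy := mid3_cases y1 y2 y3; omega

lemma med_cross' (x1 x2 x3 y1 y2 y3 : ℤ) :
    (mid3 x1 x2 x3 ≤ x1 ∧ y1 ≤ mid3 y1 y2 y3) ∨
    (mid3 x1 x2 x3 ≤ x2 ∧ y2 ≤ mid3 y1 y2 y3) ∨
    (mid3 x1 x2 x3 ≤ x3 ∧ y3 ≤ mid3 y1 y2 y3) := by
  have hx := mid3_cases x1 x2 x3; have hy := mid3_cases y1 y2 y3; omega

/-- The coordinatewise median minimizes the sum of hexagonal distances. -/
lemma median_opt (x1 y1 x2 y2 x3 y3 s t : ℤ) :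
    hexTerm (x1 - mid3 x1 x2 x3) (y1 - mid3 y1 y2 y3) +
    hexTerm (x2 - mid3 x1 x2 x3) (y2 - mid3 y1 y2 y3) +
    hexTerm (x3 - mid3 x1 x2 x3) (y3 - mid3 y1 y2 y3) ≤
    hexTerm (x1 - s) (y1 - t) + hexTerm (x2 - s) (y2 - t) + hexTerm (x3 - s) (y3 - t) := by
  set mx := mid3 x1 x2 x3 with hmx
  set my := mid3 y1 y2 y3 with hmy
  have e1 := hexTerm_two (x1 - mx) (y1 - my)
  have e2 := hexTerm_two (x2 - mx) (y2 - my)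
  have e3 := hexTerm_two (x3 - mx) (y3 - my)
  have e4 := hexTerm_two (x1 - s) (y1 - t)
  have e5 := hexTerm_two (x2 - s) (y2 - t)
  have e6 := hexTerm_two (x3 - s) (y3 - t)
  have hA := medL1 x1 x2 x3 s
  have hB := medL1 y1 y2 y3 t
  have hC : ((x1 - y1 - (mx - my)).natAbs : ℤ) + (x2 - y2 - (mx - my)).natAbs
        + (x3 - y3 - (mx - my)).natAbs
      ≤ ((x1 - y1 - (s - t)).natAbs : ℤ) + (x2 - y2 - (s - t)).natAbs
        + (x3 - y3 - (s - t)).natAbs + ((s - t) - (mx - my)).natAbs := by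
    have h1 : x1 - y1 ≤ mx - my ∨ x2 - y2 ≤ mx - my ∨ x3 - y3 ≤ mx - my := by
      have := med_cross x1 x2 x3 y1 y2 y3; omega
    have h2 : mx - my ≤ x1 - y1 ∨ mx - my ≤ x2 - y2 ∨ mx - my ≤ x3 - y3 := by
      have := med_cross' x1 x2 x3 y1 y2 y3; omega
    have := slopeL (x1 - y1) (x2 - y2) (x3 - y3) (mx - my) (s - t) h1 h2
    omega
  have htri : ((s - t) - (mx - my)).natAbs ≤ (s - mx).natAbs + (t - my).natAbs := by omega
  have key : 2 * (hexTerm (x1 - mx) (y1 - my) + hexTerm (x2 - mx) (y2 - my) +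
      hexTerm (x3 - mx) (y3 - my)) ≤ 2 * (hexTerm (x1 - s) (y1 - t) +
      hexTerm (x2 - s) (y2 - t) + hexTerm (x3 - s) (y3 - t)) := by
    have r1 : x1 - mx - (y1 - my) = x1 - y1 - (mx - my) := by ring
    have r2 : x2 - mx - (y2 - my) = x2 - y2 - (mx - my) := by ring
    have r3 : x3 - mx - (y3 - my) = x3 - y3 - (mx - my) := by ring
    have r4 : x1 - s - (y1 - t) = x1 - y1 - (s - t) := by ring
    have r5 : x2 - s - (y2 - t) = x2 - y2 - (s - t) := by ring
    have r6 : x3 - s - (y3 - t) = x3 - y3 - (s - t) := by ring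
    rw [r1] at e1; rw [r2] at e2; rw [r3] at e3
    rw [r4] at e4; rw [r5] at e5; rw [r6] at e6
    generalize hexTerm (x1 - mx) (y1 - my) = T1 at *
    generalize hexTerm (x2 - mx) (y2 - my) = T2 at *
    generalize hexTerm (x3 - mx) (y3 - my) = T3 at *
    generalize hexTerm (x1 - s) (y1 - t) = U1 at *
    generalize hexTerm (x2 - s) (y2 - t) = U2 at *
    generalize hexTerm (x3 - s) (y3 - t) = U3 at *
    generalize (x1 - mx).natAbs = a1 at *
    generalize (x2 - mx).natAbs = a2 at *
    generalize (x3 - mx).natAbs = a3 at *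
    generalize (y1 - my).natAbs = b1 at *
    generalize (y2 - my).natAbs = b2 at *
    generalize (y3 - my).natAbs = b3 at *
    generalize (x1 - y1 - (mx - my)).natAbs = c1 at *
    generalize (x2 - y2 - (mx - my)).natAbs = c2 at *
    generalize (x3 - y3 - (mx - my)).natAbs = c3 at *
    generalize (x1 - s).natAbs = p1 at *
    generalize (x2 - s).natAbs = p2 at *
    generalize (x3 - s).natAbs = p3 at *
    generalize (y1 - t).natAbs = q1 at *
    generalize (y2 - t).natAbs = q2 at *
    generalize (y3 - t).natAbs = q3 at *
    generalize (x1 - y1 - (s - t)).natAbs = w1 at *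
    generalize (x2 - y2 - (s - t)).natAbs = w2 at *
    generalize (x3 - y3 - (s - t)).natAbs = w3 at *
    generalize (s - mx).natAbs = ds at *
    generalize (t - my).natAbs = dt at *
    generalize (s - t - (mx - my)).natAbs = dw at *
    omega
  omega

/-! ### The hexagonal distance -/

def D (v w : ℤ × ℤ) : ℤ := hexTerm (v.1 - w.1) (v.2 - w.2)

lemma D_nonneg (v w : ℤ × ℤ) : 0 ≤ D v w := by
  have := hexTerm_two (v.1 - w.1) (v.2 - w.2); unfold D; omega

lemma D_self (v : ℤ × ℤ) : D v v = 0 := by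
  have := hexTerm_two (v.1 - v.1) (v.2 - v.2); unfold D; omega

lemma D_symm (v w : ℤ × ℤ) : D v w = D w v := by
  have h1 := hexTerm_two (v.1 - w.1) (v.2 - w.2)
  have h2 := hexTerm_two (w.1 - v.1) (w.2 - v.2)
  unfold D; omega

lemma D_triangle (u v w : ℤ × ℤ) : D u w ≤ D u v + D v w := by
  have h1 := hexTerm_two (u.1 - w.1) (u.2 - w.2)
  have h2 := hexTerm_two (u.1 - v.1) (u.2 - v.2)
  have h3 := hexTerm_two (v.1 - w.1) (v.2 - w.2)
  unfold D; omega

lemma D_adj {z x : ℤ × ℤ} (h : hexGraph.Adj z x) : D z x ≤ 1 := by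
  have := hexTerm_two (z.1 - x.1) (z.2 - x.2)
  unfold D
  rcases h with h | h | h | h | h | h <;> omega

lemma D_eq_zero {v w : ℤ × ℤ} (h : D v w = 0) : v = w := by
  have := hexTerm_two (v.1 - w.1) (v.2 - w.2)
  unfold D at h
  have h1 : v.1 = w.1 := by omega
  have h2 : v.2 = w.2 := by omega
  exact Prod.ext h1 h2

lemma adj_of (v w : ℤ × ℤ)
    (h : (v.1 - w.1 = 1 ∧ v.2 = w.2) ∨ (v.1 - w.1 = -1 ∧ v.2 = w.2) ∨
    (v.1 = w.1 ∧ v.2 - w.2 = 1) ∨ (v.1 = w.1 ∧ v.2 - w.2 = -1) ∨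
    (v.1 - w.1 = 1 ∧ v.2 - w.2 = 1) ∨ (v.1 - w.1 = -1 ∧ v.2 - w.2 = -1)) :
    hexGraph.Adj v w := h

lemma D_step (v w : ℤ × ℤ) (h : v ≠ w) :
    ∃ v' : ℤ × ℤ, hexGraph.Adj v v' ∧ D v' w = D v w - 1 := by
  have hab : ¬(v.1 - w.1 = 0 ∧ v.2 - w.2 = 0) := by
    intro ⟨h1, h2⟩; exact h (Prod.ext (by omega) (by omega))
  have e0 := hexTerm_two (v.1 - w.1) (v.2 - w.2)
  rcases lt_trichotomy (v.1 - w.1) 0 with hA | hA | hA <;>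
    rcases lt_trichotomy (v.2 - w.2) 0 with hB | hB | hB
  · refine ⟨(v.1 + 1, v.2 + 1), adj_of _ _ (by dsimp only; omega), ?_⟩
    have := hexTerm_two (v.1 + 1 - w.1) (v.2 + 1 - w.2)
    show hexTerm (v.1 + 1 - w.1) (v.2 + 1 - w.2) = hexTerm (v.1 - w.1) (v.2 - w.2) - 1
    omega
  · refine ⟨(v.1 + 1, v.2), adj_of _ _ (by dsimp only; omega), ?_⟩
    have := hexTerm_two (v.1 + 1 - w.1) (v.2 - w.2)
    show hexTerm (v.1 + 1 - w.1) (v.2 - w.2) = hexTerm (v.1 - w.1) (v.2 - w.2) - 1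
    omega
  · refine ⟨(v.1, v.2 - 1), adj_of _ _ (by dsimp only; omega), ?_⟩
    have := hexTerm_two (v.1 - w.1) (v.2 - 1 - w.2)
    show hexTerm (v.1 - w.1) (v.2 - 1 - w.2) = hexTerm (v.1 - w.1) (v.2 - w.2) - 1
    omega
  · refine ⟨(v.1, v.2 + 1), adj_of _ _ (by dsimp only; omega), ?_⟩
    have := hexTerm_two (v.1 - w.1) (v.2 + 1 - w.2)
    show hexTerm (v.1 - w.1) (v.2 + 1 - w.2) = hexTerm (v.1 - w.1) (v.2 - w.2) - 1
    omega
  · exact absurd ⟨hA, hB⟩ hab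
  · refine ⟨(v.1, v.2 - 1), adj_of _ _ (by dsimp only; omega), ?_⟩
    have := hexTerm_two (v.1 - w.1) (v.2 - 1 - w.2)
    show hexTerm (v.1 - w.1) (v.2 - 1 - w.2) = hexTerm (v.1 - w.1) (v.2 - w.2) - 1
    omega
  · refine ⟨(v.1 - 1, v.2), adj_of _ _ (by dsimp only; omega), ?_⟩
    have := hexTerm_two (v.1 - 1 - w.1) (v.2 - w.2)
    show hexTerm (v.1 - 1 - w.1) (v.2 - w.2) = hexTerm (v.1 - w.1) (v.2 - w.2) - 1
    omega
  · refine ⟨(v.1 - 1, v.2), adj_of _ _ (by dsimp only; omega), ?_⟩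
    have := hexTerm_two (v.1 - 1 - w.1) (v.2 - w.2)
    show hexTerm (v.1 - 1 - w.1) (v.2 - w.2) = hexTerm (v.1 - w.1) (v.2 - w.2) - 1
    omega
  · refine ⟨(v.1 - 1, v.2 - 1), adj_of _ _ (by dsimp only; omega), ?_⟩
    have := hexTerm_two (v.1 - 1 - w.1) (v.2 - 1 - w.2)
    show hexTerm (v.1 - 1 - w.1) (v.2 - 1 - w.2) = hexTerm (v.1 - w.1) (v.2 - w.2) - 1
    omega

/-! ### Chains -/

def chainR (S : Finset (ℤ × ℤ)) (a : ℤ × ℤ) : ℕ → (ℤ × ℤ) → Prop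
  | 0, x => x = a
  | (n+1), x => chainR S a n x ∨ (x ∈ S ∧ ∃ z, chainR S a n z ∧ hexGraph.Adj z x)

lemma chainR_mono_S {S T : Finset (ℤ × ℤ)} {a n x} (hST : S ⊆ T)
    (h : chainR S a n x) : chainR T a n x := by
  induction n generalizing x with
  | zero => exact h
  | succ k ih =>
    rcases h with h | ⟨hx, z, hz, hadj⟩
    · exact Or.inl (ih h)
    · exact Or.inr ⟨hST hx, z, ih hz, hadj⟩

lemma chainR_mem {S a n x} (h : chainR S a n x) : x ∈ S ∨ x = a := by
  induction n generalizing x with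
  | zero => exact Or.inr h
  | succ k ih => rcases h with h | ⟨hx, _⟩; exacts [ih h, Or.inl hx]

lemma chainR_step {S a n x z} (h : chainR S a n z) (hx : x ∈ S)
    (hadj : hexGraph.Adj z x) : chainR S a (n+1) x :=
  Or.inr ⟨hx, z, h, hadj⟩

lemma chain_D {S : Finset (ℤ × ℤ)} {a : ℤ × ℤ} :
    ∀ {n x}, chainR S a n x → D a x ≤ (n : ℤ) := by
  intro n
  induction n with
  | zero =>
    intro x h
    have hxa : x = a := h
    simp [hxa, D_self]
  | succ k ih =>
    intro x h
    rcases h with h | ⟨hx, z, hz, hadj⟩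
    · have := ih h; push_cast; omega
    · have h1 := ih hz
      have h2 := D_adj hadj
      have h3 := D_triangle a z x
      push_cast; omega

noncomputable def dd (S : Finset (ℤ × ℤ)) (a x : ℤ × ℤ) : ℕ :=
  sInf {n | chainR S a n x}

lemma dd_spec {S a x} (h : ∃ n, chainR S a n x) : chainR S a (dd S a x) x :=
  Nat.sInf_mem h

lemma dd_le {S a x n} (h : chainR S a n x) : dd S a x ≤ n := Nat.sInf_le h

lemma erase_chains {S : Finset (ℤ × ℤ)} {a u : ℤ × ℤ} (ha : a ∈ S)
    (hmax : ∀ x ∈ S, ∃ n, chainR S a n x ∧ dd S a x ≤ dd S a u) :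
    ∀ x ∈ S, x ≠ u → ∃ n, chainR (S.erase u) a n x := by
  have key : ∀ (k : ℕ), ∀ x ∈ S, x ≠ u → dd S a x = k → ∃ n, chainR (S.erase u) a n x := by
    intro k
    induction k using Nat.strong_induction_on with
    | _ k ih =>
      intro x hx hxu hdx
      obtain ⟨n0, hc0, _⟩ := hmax x hx
      have hcx : chainR S a (dd S a x) x := dd_spec ⟨n0, hc0⟩
      match k, hdx with
      | 0, hdx => rw [hdx] at hcx; exact ⟨0, hcx⟩
      | (m+1), hdx =>
        rw [hdx] at hcx
        rcases hcx with hcx | ⟨hx', z, hz, hadj⟩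
        · exact absurd (dd_le hcx) (by omega)
        · have hdz : dd S a z ≤ m := dd_le hz
          have hzS : z ∈ S := by
            rcases chainR_mem hz with h' | h'
            · exact h'
            · rw [h']; exact ha
          have hzu : z ≠ u := by
            intro hzu'
            obtain ⟨_, _, hle⟩ := hmax x hx
            rw [← hzu'] at hle
            omega
          obtain ⟨n, hn⟩ := ih (dd S a z) (by omega) z hzS hzu rfl
          exact ⟨n + 1, Or.inr ⟨Finset.mem_erase.mpr ⟨hxu, hx⟩, z, hn, hadj⟩⟩
  intro x hx hxu
  exact key (dd S a x) x hx hxu rfl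

/-! ### Bridges between `chainR` and induced-subgraph connectivity -/

lemma induce_adj {S : Finset (ℤ × ℤ)} {u v : (S : Set (ℤ × ℤ))}
    (h : hexGraph.Adj u.val v.val) : (hexGraph.induce (S : Set (ℤ × ℤ))).Adj u v := h

lemma conn_of_chains (S : Finset (ℤ × ℤ)) (a : ℤ × ℤ) (ha : a ∈ S)
    (h : ∀ x ∈ S, ∃ n, chainR S a n x) :
    (hexGraph.induce (S : Set (ℤ × ℤ))).Connected := by
  have key : ∀ (n : ℕ) (x : ℤ × ℤ) (hx : x ∈ S), chainR S a n x →
      (hexGraph.induce (S : Set (ℤ × ℤ))).Reachable ⟨a, by simpa using ha⟩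
        ⟨x, by simpa using hx⟩ := by
    intro n
    induction n with
    | zero => intro x hx hc; cases hc; rfl
    | succ k ih =>
      intro x hx hc
      rcases hc with hc | ⟨hx', z, hz, hadj⟩
      · exact ih x hx hc
      · have hzS : z ∈ S := by
          rcases chainR_mem hz with h' | h'
          · exact h'
          · simpa [h'] using ha
        exact (ih z hzS hz).trans (induce_adj hadj).reachable
  rw [SimpleGraph.connected_iff]
  constructor
  · intro u v
    obtain ⟨n, hn⟩ := h u.val (by simpa using u.property)
    obtain ⟨m, hm⟩ := h v.val (by simpa using v.property)
    have h1 := key n u.val (by simpa using u.property) hn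
    have h2 := key m v.val (by simpa using v.property) hm
    exact (h1.symm.trans h2)
  · exact ⟨⟨a, by simpa using ha⟩⟩

lemma chains_of_conn (S : Finset (ℤ × ℤ)) (a : ℤ × ℤ) (ha : a ∈ S)
    (hconn : (hexGraph.induce (S : Set (ℤ × ℤ))).Connected) :
    ∀ x ∈ S, ∃ n, chainR S a n x := by
  intro x hx
  have hr : (hexGraph.induce (S : Set (ℤ × ℤ))).Reachable ⟨a, by simpa using ha⟩
      ⟨x, by simpa using hx⟩ := hconn.preconnected _ _
  obtain ⟨w⟩ := hr
  have key : ∀ (u v : (S : Set (ℤ × ℤ))) (w : (hexGraph.induce (S : Set (ℤ × ℤ))).Walk u v)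
      (n : ℕ), chainR S a n u.val → ∃ m, chainR S a m v.val := by
    intro u v w
    induction w with
    | nil => exact fun n h => ⟨n, h⟩
    | @cons p q r hpq w ih =>
      intro n h
      have hq : q.val ∈ S := by simpa using q.property
      exact ih (n+1) (chainR_step h hq hpq)
  exact key _ _ w 0 rfl

/-! ### Lower-bound inductions -/

lemma distBound : ∀ (n : ℕ) (S : Finset (ℤ × ℤ)) (a x : ℤ × ℤ), S.card = n → a ∈ S → x ∈ S →
    (∀ y ∈ S, ∃ m, chainR S a m y) → D a x + 1 ≤ (n : ℤ) := by
  intro n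
  induction n using Nat.strong_induction_on with
  | _ n ih =>
    intro S a x hcard ha hx hconn
    by_cases hxa : x = a
    · have h1 : 0 < S.card := Finset.card_pos.mpr ⟨a, ha⟩
      rw [hxa, D_self]
      omega
    · have hn2 : 2 ≤ n := by
        have hsub : ({a, x} : Finset (ℤ × ℤ)) ⊆ S := by
          intro y hy
          rcases Finset.mem_insert.mp hy with h | h
          · exact h ▸ ha
          · exact (Finset.mem_singleton.mp h) ▸ hx
        have := Finset.card_le_card hsub
        rw [Finset.card_pair (fun h => hxa h.symm)] at this
        omega
      obtain ⟨u, hu, hmax⟩ := Finset.exists_max_image S (dd S a) ⟨a, ha⟩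
      have hdda : dd S a a = 0 := Nat.le_zero.mp (dd_le (show chainR S a 0 a from rfl))
      have hua : u ≠ a := by
        intro h
        have h0 : dd S a x = 0 := by have := hmax x hx; rw [h, hdda] at this; omega
        have := dd_spec (hconn x hx)
        rw [h0] at this
        exact hxa this
      have ha' : a ∈ S.erase u := Finset.mem_erase.mpr ⟨fun h => hua h.symm, ha⟩
      have hcard' : (S.erase u).card = n - 1 := by
        rw [Finset.card_erase_of_mem hu, hcard]
      have hchains' : ∀ y ∈ S.erase u, ∃ m, chainR (S.erase u) a m y := by
        intro y hy
        obtain ⟨hy1, hy2⟩ := Finset.mem_erase.mp hy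
        exact erase_chains ha (fun z hz => by
          obtain ⟨m, hm⟩ := hconn z hz
          exact ⟨m, hm, hmax z hz⟩) y hy2 hy1
      by_cases hux : u = x
      · have hddx : dd S a x ≠ 0 := by
          intro h0
          have := dd_spec (hconn x hx)
          rw [h0] at this
          exact hxa this
        obtain ⟨k, hk⟩ : ∃ k, dd S a x = k + 1 := ⟨dd S a x - 1, by omega⟩
        have hcx : chainR S a (k+1) x := by rw [← hk]; exact dd_spec (hconn x hx)
        rcases hcx with hcx | ⟨hx', z, hz, hadj⟩
        · exact absurd (dd_le hcx) (by omega)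
        · have hzS : z ∈ S := (chainR_mem hz).elim id (fun h => h ▸ ha)
          have hzx : z ≠ x := hadj.ne
          have hz' : z ∈ S.erase u := Finset.mem_erase.mpr ⟨hux ▸ hzx, hzS⟩
          have hIH := ih (n-1) (by omega) (S.erase u) a z hcard' ha' hz' hchains'
          have h1 : D z x ≤ 1 := D_adj hadj
          have h2 := D_triangle a z x
          have hc : ((n-1 : ℕ) : ℤ) = (n : ℤ) - 1 := by omega
          rw [hc] at hIH
          omega
      · have hx' : x ∈ S.erase u := Finset.mem_erase.mpr ⟨fun h => hux h.symm, hx⟩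
        have hIH := ih (n-1) (by omega) (S.erase u) a x hcard' ha' hx' hchains'
        have hc : ((n-1 : ℕ) : ℤ) = (n : ℤ) - 1 := by omega
        rw [hc] at hIH
        omega

lemma LB : ∀ (n : ℕ) (S : Finset (ℤ × ℤ)) (a b c : ℤ × ℤ), S.card = n → a ∈ S → b ∈ S →
    c ∈ S → (∀ y ∈ S, ∃ m, chainR S a m y) →
    ∃ v : ℤ × ℤ, D a v + D b v + D c v + 1 ≤ (n : ℤ) := by
  intro n
  induction n using Nat.strong_induction_on with
  | _ n ih =>
    intro S a b c hcard ha hb hc hconn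
    by_cases hab : a = b
    · refine ⟨a, ?_⟩
      have h1 := distBound n S a c hcard ha hc hconn
      have h2 := D_symm a c
      rw [D_self, ← hab, D_self]
      omega
    by_cases hac : a = c
    · refine ⟨a, ?_⟩
      have h1 := distBound n S a b hcard ha hb hconn
      have h2 := D_symm a b
      rw [D_self, ← hac, D_self]
      omega
    by_cases hbc : b = c
    · refine ⟨b, ?_⟩
      have h1 := distBound n S a b hcard ha hb hconn
      rw [D_self, ← hbc, D_self]
      omega
    -- all distinct
    obtain ⟨u, hu, hmax⟩ := Finset.exists_max_image S (dd S a) ⟨a, ha⟩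
    have hdda : dd S a a = 0 := Nat.le_zero.mp (dd_le (show chainR S a 0 a from rfl))
    have hua : u ≠ a := by
      intro h
      have h0 : dd S a b = 0 := by have := hmax b hb; rw [h, hdda] at this; omega
      have := dd_spec (hconn b hb)
      rw [h0] at this
      exact hab this.symm
    have ha' : a ∈ S.erase u := Finset.mem_erase.mpr ⟨fun h => hua h.symm, ha⟩
    have hcard' : (S.erase u).card = n - 1 := by rw [Finset.card_erase_of_mem hu, hcard]
    have hn1 : 1 ≤ n := by have : 0 < S.card := Finset.card_pos.mpr ⟨a, ha⟩; omega
    have hchains' : ∀ y ∈ S.erase u, ∃ m, chainR (S.erase u) a m y := by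
      intro y hy
      obtain ⟨hy1, hy2⟩ := Finset.mem_erase.mp hy
      exact erase_chains ha (fun z hz => by
        obtain ⟨m, hm⟩ := hconn z hz
        exact ⟨m, hm, hmax z hz⟩) y hy2 hy1
    have hcast : ((n-1 : ℕ) : ℤ) = (n : ℤ) - 1 := by omega
    -- find a predecessor of u
    have hddu : dd S a u ≠ 0 := by
      intro h0
      have := dd_spec (hconn u hu)
      rw [h0] at this
      exact hua this
    obtain ⟨k, hk⟩ : ∃ k, dd S a u = k + 1 := ⟨dd S a u - 1, by omega⟩
    have hcu : chainR S a (k+1) u := by rw [← hk]; exact dd_spec (hconn u hu)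
    have hpred : ∃ z ∈ S.erase u, D u z ≤ 1 := by
      rcases hcu with hcu | ⟨hu', z, hz, hadj⟩
      · exact absurd (dd_le hcu) (by omega)
      · have hzS : z ∈ S := (chainR_mem hz).elim id (fun h => h ▸ ha)
        have hzu : z ≠ u := hadj.ne
        refine ⟨z, Finset.mem_erase.mpr ⟨hzu, hzS⟩, ?_⟩
        rw [D_symm]
        exact D_adj hadj
    obtain ⟨z, hz', hDuz⟩ := hpred
    by_cases hub : u = b
    · have hc' : c ∈ S.erase u := Finset.mem_erase.mpr ⟨fun h => hbc (by rw [hub] at h; exact h.symm), hc⟩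
      obtain ⟨v, hv⟩ := ih (n-1) (by omega) (S.erase u) a z c hcard' ha' hz' hc' hchains'
      rw [hcast] at hv
      refine ⟨v, ?_⟩
      have htri := D_triangle b v z
      have h1 : D b z = D u z := by rw [hub]
      have h2 := D_triangle b z v
      have h3 := D_symm z v
      omega
    by_cases huc : u = c
    · have hb' : b ∈ S.erase u := Finset.mem_erase.mpr ⟨fun h => hbc (by rw [huc] at h; exact h), hb⟩
      obtain ⟨v, hv⟩ := ih (n-1) (by omega) (S.erase u) a b z hcard' ha' hb' hz' hchains'
      rw [hcast] at hv
      refine ⟨v, ?_⟩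
      have h1 : D c z = D u z := by rw [huc]
      have h2 := D_triangle c z v
      omega
    · have hb' : b ∈ S.erase u := Finset.mem_erase.mpr ⟨fun h => hub h.symm, hb⟩
      have hc' : c ∈ S.erase u := Finset.mem_erase.mpr ⟨fun h => huc h.symm, hc⟩
      obtain ⟨v, hv⟩ := ih (n-1) (by omega) (S.erase u) a b c hcard' ha' hb' hc' hchains'
      rw [hcast] at hv
      exact ⟨v, by omega⟩

/-! ### Upper bound: geodesic paths -/

lemma path_exists : ∀ (k : ℕ) (v w : ℤ × ℤ), D v w = (k : ℤ) →
    ∃ S : Finset (ℤ × ℤ), w ∈ S ∧ v ∈ S ∧ (∀ x ∈ S, ∃ n, chainR S w n x) ∧ S.card ≤ k + 1 := by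
  intro k
  induction k with
  | zero =>
    intro v w h
    have hvw : v = w := D_eq_zero (by exact_mod_cast h)
    subst hvw
    refine ⟨{v}, Finset.mem_singleton_self v, Finset.mem_singleton_self v, ?_, by simp⟩
    intro x hx
    exact ⟨0, Finset.mem_singleton.mp hx⟩
  | succ k ih =>
    intro v w h
    have hvw : v ≠ w := by
      intro he
      rw [he, D_self] at h
      omega
    obtain ⟨v', hadj, hD⟩ := D_step v w hvw
    have hD' : D v' w = (k : ℤ) := by rw [hD, h]; push_cast; ring
    obtain ⟨S', hw', hv', hch', hc'⟩ := ih v' w hD'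
    refine ⟨insert v S', Finset.mem_insert_of_mem hw', Finset.mem_insert_self v S', ?_, ?_⟩
    · intro x hx
      rcases Finset.mem_insert.mp hx with hx | hx
      · obtain ⟨n, hn⟩ := hch' v' hv'
        subst hx
        exact ⟨n+1, chainR_step (chainR_mono_S (Finset.subset_insert x S') hn)
          (Finset.mem_insert_self x S') hadj.symm⟩
      · obtain ⟨n, hn⟩ := hch' x hx
        exact ⟨n, chainR_mono_S (Finset.subset_insert _ _) hn⟩
    · have := Finset.card_insert_le v S'
      omega

lemma median_opt' (a b c v : ℤ × ℤ) :
    D a (mid3 a.1 b.1 c.1, mid3 a.2 b.2 c.2) + D b (mid3 a.1 b.1 c.1, mid3 a.2 b.2 c.2) +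
      D c (mid3 a.1 b.1 c.1, mid3 a.2 b.2 c.2) ≤ D a v + D b v + D c v :=
  median_opt a.1 a.2 b.1 b.2 c.1 c.2 v.1 v.2

theorem hex_tristance_formula (v1 v2 v3 : ℤ × ℤ)
    (h12 : v1 ≠ v2) (h13 : v1 ≠ v3) (h23 : v2 ≠ v3) :
    (hexTristance v1 v2 v3 : ℤ) =
      hexTerm (v1.1 - mid3 v1.1 v2.1 v3.1) (v1.2 - mid3 v1.2 v2.2 v3.2) +
      hexTerm (v2.1 - mid3 v1.1 v2.1 v3.1) (v2.2 - mid3 v1.2 v2.2 v3.2) +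
      hexTerm (v3.1 - mid3 v1.1 v2.1 v3.1) (v3.2 - mid3 v1.2 v2.2 v3.2) := by
  set m : ℤ × ℤ := (mid3 v1.1 v2.1 v3.1, mid3 v1.2 v2.2 v3.2) with hm
  show (hexTristance v1 v2 v3 : ℤ) = D v1 m + D v2 m + D v3 m
  -- upper bound construction
  set k1 : ℕ := (D v1 m).toNat with hk1
  set k2 : ℕ := (D v2 m).toNat with hk2
  set k3 : ℕ := (D v3 m).toNat with hk3
  have e1 : D v1 m = (k1 : ℤ) := (Int.toNat_of_nonneg (D_nonneg _ _)).symm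
  have e2 : D v2 m = (k2 : ℤ) := (Int.toNat_of_nonneg (D_nonneg _ _)).symm
  have e3 : D v3 m = (k3 : ℤ) := (Int.toNat_of_nonneg (D_nonneg _ _)).symm
  obtain ⟨S1, hm1, hv1, hch1, hc1⟩ := path_exists k1 v1 m e1
  obtain ⟨S2, hm2, hv2, hch2, hc2⟩ := path_exists k2 v2 m e2
  obtain ⟨S3, hm3, hv3, hch3, hc3⟩ := path_exists k3 v3 m e3
  set S : Finset (ℤ × ℤ) := S1 ∪ S2 ∪ S3 with hS
  have hsub1 : S1 ⊆ S := (Finset.subset_union_left).trans Finset.subset_union_left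
  have hsub2 : S2 ⊆ S := (Finset.subset_union_right).trans Finset.subset_union_left
  have hsub3 : S3 ⊆ S := Finset.subset_union_right
  have hmS : m ∈ S := hsub1 hm1
  have hconnS : (hexGraph.induce (S : Set (ℤ × ℤ))).Connected := by
    apply conn_of_chains S m hmS
    intro x hx
    rcases Finset.mem_union.mp hx with hx | hx
    · rcases Finset.mem_union.mp hx with hx | hx
      · obtain ⟨n, hn⟩ := hch1 x hx; exact ⟨n, chainR_mono_S hsub1 hn⟩
      · obtain ⟨n, hn⟩ := hch2 x hx; exact ⟨n, chainR_mono_S hsub2 hn⟩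
    · obtain ⟨n, hn⟩ := hch3 x hx; exact ⟨n, chainR_mono_S hsub3 hn⟩
  have hcardS : S.card ≤ k1 + k2 + k3 + 1 := by
    have hsubT : S ⊆ S1 ∪ (S2.erase m ∪ S3.erase m) := by
      intro x hx
      rcases Finset.mem_union.mp hx with hx | hx
      · rcases Finset.mem_union.mp hx with hx | hx
        · exact Finset.mem_union_left _ hx
        · by_cases hxm : x = m
          · exact Finset.mem_union_left _ (hxm ▸ hm1)
          · exact Finset.mem_union_right _
              (Finset.mem_union_left _ (Finset.mem_erase.mpr ⟨hxm, hx⟩))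
      · by_cases hxm : x = m
        · exact Finset.mem_union_left _ (hxm ▸ hm1)
        · exact Finset.mem_union_right _
            (Finset.mem_union_right _ (Finset.mem_erase.mpr ⟨hxm, hx⟩))
    have h1 := Finset.card_le_card hsubT
    have h2 := Finset.card_union_le S1 (S2.erase m ∪ S3.erase m)
    have h3 := Finset.card_union_le (S2.erase m) (S3.erase m)
    have h4 : (S2.erase m).card = S2.card - 1 := Finset.card_erase_of_mem hm2
    have h5 : (S3.erase m).card = S3.card - 1 := Finset.card_erase_of_mem hm3
    have h6 : 1 ≤ S2.card := Finset.card_pos.mpr ⟨m, hm2⟩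
    have h7 : 1 ≤ S3.card := Finset.card_pos.mpr ⟨m, hm3⟩
    omega
  have hScard1 : 1 ≤ S.card := Finset.card_pos.mpr ⟨m, hmS⟩
  have hmem : (S.card - 1) ∈ {n : ℕ | ∃ T : Finset (ℤ × ℤ), v1 ∈ T ∧ v2 ∈ T ∧ v3 ∈ T ∧
      (hexGraph.induce (T : Set (ℤ × ℤ))).Connected ∧ T.card = n + 1} :=
    ⟨S, hsub1 hv1, hsub2 hv2, hsub3 hv3, hconnS, by omega⟩
  have hupper : hexTristance v1 v2 v3 ≤ S.card - 1 := Nat.sInf_le hmem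
  -- lower bound
  obtain ⟨S0, h1, h2, h3, hconn0, hcard0⟩ := Nat.sInf_mem (⟨S.card - 1, hmem⟩ :
    Set.Nonempty {n : ℕ | ∃ T : Finset (ℤ × ℤ), v1 ∈ T ∧ v2 ∈ T ∧ v3 ∈ T ∧
      (hexGraph.induce (T : Set (ℤ × ℤ))).Connected ∧ T.card = n + 1})
  have hchains0 := chains_of_conn S0 v1 h1 hconn0
  obtain ⟨v, hv⟩ := LB S0.card S0 v1 v2 v3 rfl h1 h2 h3 hchains0
  have hopt := median_opt' v1 v2 v3 v
  rw [← hm] at hopt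
  have hcard0' : S0.card = hexTristance v1 v2 v3 + 1 := hcard0
  have hT : (hexTristance v1 v2 v3 : ℤ) ≤ (S.card : ℤ) - 1 := by
    have := hupper; omega
  have hlow : D v1 m + D v2 m + D v3 m ≤ (hexTristance v1 v2 v3 : ℤ) := by
    have hcast : (S0.card : ℤ) = (hexTristance v1 v2 v3 : ℤ) + 1 := by
      rw [hcard0']; push_cast; ring
    omega
  have hup : (hexTristance v1 v2 v3 : ℤ) ≤ D v1 m + D v2 m + D v3 m := by
    have hcS : (S.card : ℤ) ≤ (k1 : ℤ) + k2 + k3 + 1 := by exact_mod_cast hcardS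
    omega
  omega
end

section
/- The maximum cardinality of a tristance anticode of diameter d in the hexagonal graph equals ⌈(d+1)(d+2)/3⌉. -/
/-- Hexagonal tristance (median formula). -/
def triHex (v1 v2 v3 : ℤ × ℤ) : ℤ :=
  hexTerm (v1.1 - mid3 v1.1 v2.1 v3.1) (v1.2 - mid3 v1.2 v2.2 v3.2) +
  hexTerm (v2.1 - mid3 v1.1 v2.1 v3.1) (v2.2 - mid3 v1.2 v2.2 v3.2) +
  hexTerm (v3.1 - mid3 v1.1 v2.1 v3.1) (v3.2 - mid3 v1.2 v2.2 v3.2)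

section KeyOmega

set_option maxHeartbeats 12000000

theorem tri_lb1' (x1 y1 x2 y2 x3 y3 : ℤ) :
    y2 + (x3 - y3) - x1 ≤
      hexTerm (x1 - mid3 x1 x2 x3) (y1 - mid3 y1 y2 y3) +
      hexTerm (x2 - mid3 x1 x2 x3) (y2 - mid3 y1 y2 y3) +
      hexTerm (x3 - mid3 x1 x2 x3) (y3 - mid3 y1 y2 y3) := by
  unfold hexTerm mid3; omega

theorem tri_lb2' (x1 y1 x2 y2 x3 y3 : ℤ) :
    x1 - y2 - (x3 - y3) ≤
      hexTerm (x1 - mid3 x1 x2 x3) (y1 - mid3 y1 y2 y3) +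
      hexTerm (x2 - mid3 x1 x2 x3) (y2 - mid3 y1 y2 y3) +
      hexTerm (x3 - mid3 x1 x2 x3) (y3 - mid3 y1 y2 y3) := by
  unfold hexTerm mid3; omega

theorem tri_ub' (X Y Aa Bb x1 y1 x2 y2 x3 y3 : ℤ)
    (h1 : 0 ≤ x1 ∧ x1 ≤ X ∧ 0 ≤ y1 ∧ y1 ≤ Y ∧ -Bb ≤ x1 - y1 ∧ x1 - y1 ≤ Aa)
    (h2 : 0 ≤ x2 ∧ x2 ≤ X ∧ 0 ≤ y2 ∧ y2 ≤ Y ∧ -Bb ≤ x2 - y2 ∧ x2 - y2 ≤ Aa)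
    (h3 : 0 ≤ x3 ∧ x3 ≤ X ∧ 0 ≤ y3 ∧ y3 ≤ Y ∧ -Bb ≤ x3 - y3 ∧ x3 - y3 ≤ Aa) :
    hexTerm (x1 - mid3 x1 x2 x3) (y1 - mid3 y1 y2 y3) +
    hexTerm (x2 - mid3 x1 x2 x3) (y2 - mid3 y1 y2 y3) +
    hexTerm (x3 - mid3 x1 x2 x3) (y3 - mid3 y1 y2 y3) ≤ max (Y + Aa) (X + Bb) := by
  unfold hexTerm mid3; omega

end KeyOmega

theorem tri_lb1 (v1 v2 v3 : ℤ × ℤ) :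
    v2.2 + (v3.1 - v3.2) - v1.1 ≤ triHex v1 v2 v3 := by
  obtain ⟨x1, y1⟩ := v1; obtain ⟨x2, y2⟩ := v2; obtain ⟨x3, y3⟩ := v3
  exact tri_lb1' x1 y1 x2 y2 x3 y3

theorem tri_lb2 (v1 v2 v3 : ℤ × ℤ) :
    v1.1 - v2.2 - (v3.1 - v3.2) ≤ triHex v1 v2 v3 := by
  obtain ⟨x1, y1⟩ := v1; obtain ⟨x2, y2⟩ := v2; obtain ⟨x3, y3⟩ := v3
  exact tri_lb2' x1 y1 x2 y2 x3 y3

theorem tri_ub (X Y Aa Bb : ℤ) (v1 v2 v3 : ℤ × ℤ)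
    (h1 : 0 ≤ v1.1 ∧ v1.1 ≤ X ∧ 0 ≤ v1.2 ∧ v1.2 ≤ Y ∧ -Bb ≤ v1.1 - v1.2 ∧ v1.1 - v1.2 ≤ Aa)
    (h2 : 0 ≤ v2.1 ∧ v2.1 ≤ X ∧ 0 ≤ v2.2 ∧ v2.2 ≤ Y ∧ -Bb ≤ v2.1 - v2.2 ∧ v2.1 - v2.2 ≤ Aa)
    (h3 : 0 ≤ v3.1 ∧ v3.1 ≤ X ∧ 0 ≤ v3.2 ∧ v3.2 ≤ Y ∧ -Bb ≤ v3.1 - v3.2 ∧ v3.1 - v3.2 ≤ Aa) :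
    triHex v1 v2 v3 ≤ max (Y + Aa) (X + Bb) := by
  obtain ⟨x1, y1⟩ := v1; obtain ⟨x2, y2⟩ := v2; obtain ⟨x3, y3⟩ := v3
  exact tri_ub' X Y Aa Bb x1 y1 x2 y2 x3 y3 h1 h2 h3

/-- Sum of `max 0 (i - c)` over `i < n`. -/
theorem sum1 (c : ℤ) (hc : 0 ≤ c) : ∀ n : ℕ,
    2 * ∑ i ∈ Finset.range n, max 0 ((i : ℤ) - c) =
      max ((n : ℤ) - 1 - c) 0 * (max ((n : ℤ) - 1 - c) 0 + 1)
  | 0 => by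
    simp only [Finset.sum_range_zero, mul_zero, Nat.cast_zero]
    have h : max ((0:ℤ) - 1 - c) 0 = 0 := by omega
    rw [h]; ring
  | (n + 1) => by
    rw [Finset.sum_range_succ, mul_add, sum1 c hc n]
    rcases le_or_gt ((n : ℤ)) c with h | h
    · have e1 : max ((n : ℤ) - 1 - c) 0 = 0 := by omega
      have e2 : max ((n : ℤ) + 1 - 1 - c) 0 = 0 := by omega
      have e3 : max 0 ((n : ℤ) - c) = 0 := by omega
      push_cast
      rw [e1, e2, e3]; ring
    · have e1 : max ((n : ℤ) - 1 - c) 0 = (n : ℤ) - 1 - c := by omega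
      have e2 : max ((n : ℤ) + 1 - 1 - c) 0 = (n : ℤ) - c := by omega
      have e3 : max 0 ((n : ℤ) - c) = (n : ℤ) - c := by omega
      push_cast
      rw [e1, e2, e3]; ring

/-- Sum of `max 0 (b - i)` over `i < n`. -/
theorem sum2 (b : ℤ) (hb : 0 ≤ b) : ∀ n : ℕ,
    2 * ∑ i ∈ Finset.range n, max 0 (b - (i : ℤ)) =
      b * (b + 1) - max (b - n) 0 * (max (b - n) 0 + 1)
  | 0 => by
    have h : max (b - (0:ℕ)) 0 = b := by push_cast; omega
    rw [h]; simp
  | (n + 1) => by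
    rw [Finset.sum_range_succ, mul_add, sum2 b hb n]
    rcases le_or_gt ((n : ℤ) + 1) b with h | h
    · have e1 : max (b - (n : ℤ)) 0 = b - n := by omega
      have e2 : max (b - ((n : ℤ) + 1)) 0 = b - n - 1 := by omega
      have e3 : max 0 (b - (n : ℤ)) = b - n := by omega
      push_cast
      rw [e1, e2, e3]; ring
    · have e1 : max (b - (n : ℤ)) 0 = 0 := by omega
      have e2 : max (b - ((n : ℤ) + 1)) 0 = 0 := by omega
      have e3 : max 0 (b - (n : ℤ)) = 0 := by omega
      push_cast
      rw [e1, e2, e3]; ring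

theorem sum_Icc_int (g : ℤ → ℤ) (lo : ℤ) : ∀ n : ℕ,
    ∑ x ∈ Finset.Icc lo (lo + n - 1), g x = ∑ i ∈ Finset.range n, g (lo + i)
  | 0 => by
    have h : Finset.Icc lo (lo + (0 : ℕ) - 1) = ∅ := by
      apply Finset.Icc_eq_empty; push_cast; omega
    rw [h]; simp
  | (n + 1) => by
    have h : Finset.Icc lo (lo + (n + 1 : ℕ) - 1) =
        insert (lo + n) (Finset.Icc lo (lo + n - 1)) := by
      ext t; simp only [Finset.mem_Icc, Finset.mem_insert]; push_cast; omega
    rw [h, Finset.sum_insert (by simp only [Finset.mem_Icc]; push_cast; omega),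
      sum_Icc_int g lo n, Finset.sum_range_succ]
    ring

/-- The hexagonal region as a finset. -/
noncomputable def hexSet (xlo xhi ylo yhi zlo zhi : ℤ) : Finset (ℤ × ℤ) :=
  (Finset.Icc xlo xhi ×ˢ Finset.Icc ylo yhi).filter fun v => zlo ≤ v.1 - v.2 ∧ v.1 - v.2 ≤ zhi

theorem mem_hexSet {xlo xhi ylo yhi zlo zhi : ℤ} {v : ℤ × ℤ} :
    v ∈ hexSet xlo xhi ylo yhi zlo zhi ↔
      xlo ≤ v.1 ∧ v.1 ≤ xhi ∧ ylo ≤ v.2 ∧ v.2 ≤ yhi ∧ zlo ≤ v.1 - v.2 ∧ v.1 - v.2 ≤ zhi := by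
  simp only [hexSet, Finset.mem_filter, Finset.mem_product, Finset.mem_Icc]
  tauto

theorem twice_card_hexSet (xlo xhi ylo yhi zlo zhi : ℤ)
    (hx : xlo ≤ xhi) (hy : ylo ≤ yhi) (hz : zlo ≤ zhi)
    (c1 : zlo ≤ xlo - ylo) (c2 : xhi - yhi ≤ zhi)
    (c3 : zhi ≤ xhi - ylo) (c4 : xlo - yhi ≤ zlo)
    (c5 : xlo - ylo ≤ zhi) (c6 : zlo ≤ xhi - yhi) :
    2 * ((hexSet xlo xhi ylo yhi zlo zhi).card : ℤ) =
      2 * (xhi - xlo + 1) * (yhi - ylo + 1)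
        - (xhi - ylo - zhi) * (xhi - ylo - zhi + 1)
        - (yhi + zlo - xlo) * (yhi + zlo - xlo + 1) := by
  classical
  -- decompose into columns
  have hdecomp : hexSet xlo xhi ylo yhi zlo zhi =
      (Finset.Icc xlo xhi).biUnion (fun x =>
        ({x} : Finset ℤ) ×ˢ Finset.Icc (max ylo (x - zhi)) (min yhi (x - zlo))) := by
    ext v
    simp only [mem_hexSet, Finset.mem_biUnion, Finset.mem_Icc, Finset.mem_product,
      Finset.mem_singleton]
    constructor
    · rintro ⟨h1, h2, h3, h4, h5, h6⟩
      exact ⟨v.1, ⟨h1, h2⟩, rfl, by omega⟩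
    · rintro ⟨x, ⟨hx1, hx2⟩, he, hyy⟩
      rw [← he] at hyy
      omega
  have hdisj : ∀ x ∈ Finset.Icc xlo xhi, ∀ y ∈ Finset.Icc xlo xhi, x ≠ y →
      Disjoint (({x} : Finset ℤ) ×ˢ Finset.Icc (max ylo (x - zhi)) (min yhi (x - zlo)))
        (({y} : Finset ℤ) ×ˢ Finset.Icc (max ylo (y - zhi)) (min yhi (y - zlo))) := by
    intro x _ y _ hxy
    rw [Finset.disjoint_left]
    rintro ⟨a, b⟩ ha hb
    simp only [Finset.mem_product, Finset.mem_singleton] at ha hb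
    exact hxy (ha.1 ▸ hb.1 ▸ rfl)
  rw [hdecomp, Finset.card_biUnion hdisj]
  -- cast cards to ℤ
  have hcards : ((∑ x ∈ Finset.Icc xlo xhi,
      (({x} : Finset ℤ) ×ˢ Finset.Icc (max ylo (x - zhi)) (min yhi (x - zlo))).card : ℕ) : ℤ) =
      ∑ x ∈ Finset.Icc xlo xhi, (min yhi (x - zlo) - max ylo (x - zhi) + 1) := by
    push_cast
    refine Finset.sum_congr rfl fun x hx => ?_
    rw [Finset.mem_Icc] at hx
    rw [Finset.card_product, Finset.card_singleton, one_mul, Int.card_Icc]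
    have hnn : 0 ≤ min yhi (x - zlo) - max ylo (x - zhi) + 1 := by omega
    omega
  rw [hcards]
  -- convert to range sum
  have hn : ∃ n : ℕ, xhi = xlo + n - 1 := ⟨(xhi - xlo + 1).toNat, by omega⟩
  obtain ⟨n, hn⟩ := hn
  subst hn
  rw [sum_Icc_int (fun x => min yhi (x - zlo) - max ylo (x - zhi) + 1) xlo n]
  -- pointwise rewrite
  have hpt : ∀ i ∈ Finset.range n,
      min yhi (xlo + (i : ℤ) - zlo) - max ylo (xlo + (i : ℤ) - zhi) + 1 =
        (yhi - ylo + 1) - max 0 ((yhi + zlo - xlo) - i) - max 0 ((i : ℤ) - (zhi + ylo - xlo)) := by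
    intro i _
    omega
  rw [Finset.sum_congr rfl hpt]
  have hsplit : ∑ i ∈ Finset.range n,
      ((yhi - ylo + 1) - max 0 ((yhi + zlo - xlo) - i) - max 0 ((i : ℤ) - (zhi + ylo - xlo))) =
      (n : ℤ) * (yhi - ylo + 1) - (∑ i ∈ Finset.range n, max 0 ((yhi + zlo - xlo) - i))
        - (∑ i ∈ Finset.range n, max 0 ((i : ℤ) - (zhi + ylo - xlo))) := by
    rw [Finset.sum_sub_distrib, Finset.sum_sub_distrib, Finset.sum_const, nsmul_eq_mul,
      Finset.card_range]
  rw [hsplit]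
  have hb0 : (0 : ℤ) ≤ yhi + zlo - xlo := by omega
  have hc0 : (0 : ℤ) ≤ zhi + ylo - xlo := by omega
  have hs2 := sum2 (yhi + zlo - xlo) hb0 n
  have hs1 := sum1 (zhi + ylo - xlo) hc0 n
  -- identities for the carried maxes
  have e2 : max ((yhi + zlo - xlo) - (n : ℤ)) 0 = 0 := by omega
  have e1 : max ((n : ℤ) - 1 - (zhi + ylo - xlo)) 0 = (xlo + n - 1) - ylo - zhi := by omega
  rw [e2] at hs2
  rw [e1] at hs1
  linear_combination (-1 : ℤ) * hs1 - hs2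


theorem opt_bound (C X Y a b D : ℤ)
    (hC : 2 * C = 2 * (X + 1) * (Y + 1) - a * (a + 1) - b * (b + 1))
    (ha0 : 0 ≤ a) (haY : a ≤ Y) (hb0 : 0 ≤ b) (hbX : b ≤ X)
    (hD : 2 * X + 2 * Y - a - b ≤ 2 * D) :
    3 * C ≤ (D + 1) * (D + 2) + 2 := by
  have hX0 : 0 ≤ X := le_trans hb0 hbX
  have hY0 : 0 ≤ Y := le_trans ha0 haY
  have hs0 : 0 ≤ 2 * X + 2 * Y - a - b := by omega
  have e : 4 * ((D + 1) * (D + 2) + 2) - 12 * C =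
      (2 * D - (2 * X + 2 * Y - a - b)) * (2 * D + (2 * X + 2 * Y - a - b) + 6)
      + 2 * (X - Y) ^ 2 + 2 * (X - a - b) ^ 2 + 2 * (Y - a - b) ^ 2 + 3 * (a - b) ^ 2 + 4 := by
    linear_combination (-6 : ℤ) * hC
  nlinarith [e, mul_nonneg (show (0:ℤ) ≤ 2 * D - (2 * X + 2 * Y - a - b) by omega)
      (show (0:ℤ) ≤ 2 * D + (2 * X + 2 * Y - a - b) + 6 by omega),
    sq_nonneg (X - Y), sq_nonneg (X - a - b), sq_nonneg (Y - a - b), sq_nonneg (a - b)]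

theorem card_le_of_anticode (d : ℕ) (A : Finset (ℤ × ℤ))
    (hA : ∀ v1 ∈ A, ∀ v2 ∈ A, ∀ v3 ∈ A, triHex v1 v2 v3 ≤ (d : ℤ)) :
    A.card ≤ ((d + 1) * (d + 2) + 2) / 3 := by
  classical
  rcases A.eq_empty_or_nonempty with rfl | hne
  · simp
  obtain ⟨p1, hp1A, hp1⟩ := A.exists_min_image (fun v => v.1) hne
  obtain ⟨q1, hq1A, hq1⟩ := A.exists_max_image (fun v => v.1) hne
  obtain ⟨q2, hq2A, hq2⟩ := A.exists_min_image (fun v => v.2) hne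
  obtain ⟨p2, hp2A, hp2⟩ := A.exists_max_image (fun v => v.2) hne
  obtain ⟨p3, hp3A, hp3⟩ := A.exists_max_image (fun v => v.1 - v.2) hne
  obtain ⟨q3, hq3A, hq3⟩ := A.exists_min_image (fun v => v.1 - v.2) hne
  set xlo := p1.1 with hxlo
  set xhi := q1.1 with hxhi
  set ylo := q2.2 with hylo
  set yhi := p2.2 with hyhi
  set zhi := p3.1 - p3.2 with hzhi
  set zlo := q3.1 - q3.2 with hzlo
  have hsub : A ⊆ hexSet xlo xhi ylo yhi zlo zhi := by
    intro v hv
    rw [mem_hexSet]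
    exact ⟨hp1 v hv, hq1 v hv, hq2 v hv, hp2 v hv, hq3 v hv, hp3 v hv⟩
  have hcardle : A.card ≤ (hexSet xlo xhi ylo yhi zlo zhi).card := Finset.card_le_card hsub
  -- conditions
  have b_p1 := (mem_hexSet.mp (hsub hp1A))
  have b_p2 := (mem_hexSet.mp (hsub hp2A))
  have b_p3 := (mem_hexSet.mp (hsub hp3A))
  have b_q1 := (mem_hexSet.mp (hsub hq1A))
  have b_q2 := (mem_hexSet.mp (hsub hq2A))
  have b_q3 := (mem_hexSet.mp (hsub hq3A))
  have hx : xlo ≤ xhi := b_p1.2.1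
  have hy : ylo ≤ yhi := b_q2.2.2.2.1
  have hz : zlo ≤ zhi := b_q3.2.2.2.2.2
  have c1 : zlo ≤ xlo - ylo := by
    have h1 := b_p1.2.2.1
    have h2 := b_p1.2.2.2.2.1
    omega
  have c2 : xhi - yhi ≤ zhi := by
    have h1 := b_q1.2.2.2.1
    have h2 := b_q1.2.2.2.2.2
    omega
  have c3 : zhi ≤ xhi - ylo := by
    have h1 := b_p3.2.1
    have h2 := b_p3.2.2.1
    omega
  have c4 : xlo - yhi ≤ zlo := by
    have h1 := b_q3.1
    have h2 := b_q3.2.2.2.1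
    omega
  have c5 : xlo - ylo ≤ zhi := by
    have h1 := b_q2.1
    have h2 := b_q2.2.2.2.2.2
    omega
  have c6 : zlo ≤ xhi - yhi := by
    have h1 := b_p2.2.1
    have h2 := b_p2.2.2.2.2.1
    omega
  have hcount := twice_card_hexSet xlo xhi ylo yhi zlo zhi hx hy hz c1 c2 c3 c4 c5 c6
  -- tristance bounds
  have t1le : triHex p1 p2 p3 ≤ (d : ℤ) := hA p1 hp1A p2 hp2A p3 hp3A
  have t2le : triHex q1 q2 q3 ≤ (d : ℤ) := hA q1 hq1A q2 hq2A q3 hq3A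
  have t1ge : yhi + zhi - xlo ≤ triHex p1 p2 p3 := tri_lb1 p1 p2 p3
  have t2ge : xhi - ylo - zlo ≤ triHex q1 q2 q3 := tri_lb2 q1 q2 q3
  have hsum : (xhi - xlo) + (yhi - ylo) + (zhi - zlo) ≤ 2 * (d : ℤ) := by omega
  -- arithmetic optimization
  have hfin : 3 * ((hexSet xlo xhi ylo yhi zlo zhi).card : ℤ) ≤ ((d : ℤ) + 1) * ((d : ℤ) + 2) + 2 := by
    apply opt_bound _ (xhi - xlo) (yhi - ylo) (xhi - ylo - zhi) (yhi + zlo - xlo) (d : ℤ)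
    · linear_combination hcount
    · omega
    · omega
    · omega
    · omega
    · omega
  have hfin' : 3 * (hexSet xlo xhi ylo yhi zlo zhi).card ≤ (d + 1) * (d + 2) + 2 := by
    exact_mod_cast hfin
  calc A.card ≤ (hexSet xlo xhi ylo yhi zlo zhi).card := hcardle
    _ ≤ ((d + 1) * (d + 2) + 2) / 3 := by
        rw [Nat.le_div_iff_mul_le (by norm_num : 0 < 3)]
        omega

theorem exists_hex_anticode (d : ℕ) (X Y Aa Bb : ℤ)
    (h0A : 0 ≤ Aa) (h0B : 0 ≤ Bb) (hAX : Aa ≤ X) (hBY : Bb ≤ Y)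
    (hc2 : X - Y ≤ Aa) (hc6 : -Bb ≤ X - Y)
    (hd1 : Y + Aa ≤ (d : ℤ)) (hd2 : X + Bb ≤ (d : ℤ))
    (m : ℕ)
    (hm : 2 * (m : ℤ) = 2 * (X + 1) * (Y + 1) - (X - Aa) * (X - Aa + 1) - (Y - Bb) * (Y - Bb + 1)) :
    ∃ A : Finset (ℤ × ℤ),
      (∀ v1 ∈ A, ∀ v2 ∈ A, ∀ v3 ∈ A, triHex v1 v2 v3 ≤ (d : ℤ)) ∧ A.card = m := by
  refine ⟨hexSet 0 X 0 Y (-Bb) Aa, ?_, ?_⟩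
  · intro v1 h1 v2 h2 v3 h3
    rw [mem_hexSet] at h1 h2 h3
    have := tri_ub X Y Aa Bb v1 v2 v3
      (by simpa using h1) (by simpa using h2) (by simpa using h3)
    have hmax : max (Y + Aa) (X + Bb) ≤ (d : ℤ) := by omega
    omega
  · have h0X : (0:ℤ) ≤ X := le_trans h0A hAX
    have h0Y : (0:ℤ) ≤ Y := le_trans h0B hBY
    have hcount := twice_card_hexSet 0 X 0 Y (-Bb) Aa h0X h0Y (by omega)
      (by omega) (by omega) (by omega) (by omega) (by omega) (by omega)
    have h2 : 2 * ((hexSet 0 X 0 Y (-Bb) Aa).card : ℤ) = 2 * (m : ℤ) := by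
      linear_combination hcount - hm
    have h3 : ((hexSet 0 X 0 Y (-Bb) Aa).card : ℤ) = (m : ℤ) := by omega
    exact_mod_cast h3
  
/-- The maximum cardinality of a tristance anticode of diameter `d` in the
hexagonal graph equals `⌈(d+1)(d+2)/3⌉` (ceiling division). -/
theorem optimal_hex_tristance_anticode_card (d : ℕ) :
    IsGreatest
      {n : ℕ | ∃ A : Finset (ℤ × ℤ),
        (∀ v1 ∈ A, ∀ v2 ∈ A, ∀ v3 ∈ A, triHex v1 v2 v3 ≤ (d : ℤ)) ∧ A.card = n}
      (((d + 1) * (d + 2) + 2) / 3) := by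
  constructor
  · -- membership: construction
    set k := d / 3 with hk
    have hr : d % 3 = 0 ∨ d % 3 = 1 ∨ d % 3 = 2 := by omega
    rcases hr with h | h | h
    · have hd : d = 3 * k := by omega
      have hN : ((d + 1) * (d + 2) + 2) / 3 = 3 * k * k + 3 * k + 1 := by
        have h3 : (d + 1) * (d + 2) + 2 = 3 * (3 * k * k + 3 * k + 1) + 1 := by
          rw [hd]; ring
        rw [h3, Nat.mul_add_div (by norm_num)]
      rw [hN]
      exact exists_hex_anticode d (2*k) (2*k) k k (by positivity) (by positivity)
        (by omega) (by omega) (by omega) (by omega)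
        (by push_cast; omega) (by push_cast; omega)
        (3 * k * k + 3 * k + 1) (by push_cast; ring)
    · have hd : d = 3 * k + 1 := by omega
      have hN : ((d + 1) * (d + 2) + 2) / 3 = 3 * k * k + 5 * k + 2 := by
        have h3 : (d + 1) * (d + 2) + 2 = 3 * (3 * k * k + 5 * k + 2) + 2 := by
          rw [hd]; ring
        rw [h3, Nat.mul_add_div (by norm_num)]
      rw [hN]
      exact exists_hex_anticode d (2*k) (2*k+1) k (k+1) (by positivity) (by positivity)
        (by omega) (by omega) (by omega) (by omega)
        (by push_cast; omega) (by push_cast; omega)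
        (3 * k * k + 5 * k + 2) (by push_cast; ring)
    · have hd : d = 3 * k + 2 := by omega
      have hN : ((d + 1) * (d + 2) + 2) / 3 = 3 * k * k + 7 * k + 4 := by
        have h3 : (d + 1) * (d + 2) + 2 = 3 * (3 * k * k + 7 * k + 4) + 2 := by
          rw [hd]; ring
        rw [h3, Nat.mul_add_div (by norm_num)]
      rw [hN]
      exact exists_hex_anticode d (2*k+1) (2*k+1) (k+1) (k+1) (by positivity) (by positivity)
        (by omega) (by omega) (by omega) (by omega)
        (by push_cast; omega) (by push_cast; omega)
        (3 * k * k + 7 * k + 4) (by push_cast; ring)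
  · -- upper bound
    rintro n ⟨A, hA, rfl⟩
    exact card_le_of_anticode d A hA
end

section
/- For distinct points v, v', v'' in Z^n, the tristance (minimum number of edges in a subtree of the grid graph of Z^n containing all three points) equals Σ_{i=1}^{n} ( max{v_i, v'_i, v''_i} − min{v_i, v'_i, v''_i} ). -/
/-- The grid graph of `ℤⁿ`: edges join points at `L₁`-distance 1. -/
def gridGraphN (n : ℕ) : SimpleGraph (Fin n → ℤ) where
  Adj v w := ∑ i, |v i - w i| = 1
  symm := by
    constructor
    intro v w h
    rw [← h]
    exact Finset.sum_congr rfl fun i _ => abs_sub_comm _ _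
  loopless := by constructor; intro v h; simp at h

/-- Tristance in `ℤⁿ`: the minimum number of edges of a subtree of the grid
graph containing the three points. -/
noncomputable def tristanceN (n : ℕ) (v v' v'' : Fin n → ℤ) : ℕ :=
  sInf {m : ℕ | ∃ S : Finset (Fin n → ℤ), v ∈ S ∧ v' ∈ S ∧ v'' ∈ S ∧
    ((gridGraphN n).induce (S : Set (Fin n → ℤ))).Connected ∧ S.card = m + 1}

section Aux

open SimpleGraph

lemma width_step_int (a y A B C D : ℤ) (h1 : C ≤ max a A) (h2 : min a B ≤ D)
    (h3 : B ≤ y) (h4 : y ≤ A) : C - D ≤ (A - B) + |a - y| := by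
  rw [abs_sub_comm, ← Int.natCast_natAbs]
  omega

lemma three_point_width_int (a b c A B : ℤ) (hs1 : a ≤ A) (hs2 : b ≤ A) (hs3 : c ≤ A)
    (hi1 : B ≤ a) (hi2 : B ≤ b) (hi3 : B ≤ c) :
    max a (max b c) - min a (min b c) ≤ A - B := by omega

/-- In a finite connected induced graph with at least 2 vertices, there is a vertex
whose removal keeps the induced graph connected, and which has a neighbor. -/
lemma exists_erase_connected {V : Type*} [DecidableEq V] {G : SimpleGraph V}
    {S : Finset V} (hconn : (G.induce (S : Set V)).Connected) (h2 : 2 ≤ S.card) :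
    ∃ x ∈ S, (∃ y ∈ S.erase x, G.Adj x y) ∧
      (G.induce ((S.erase x : Finset V) : Set V)).Connected := by
  classical
  set H : SimpleGraph (↑S : Set V) := G.induce (S : Set V) with hH
  obtain ⟨a⟩ := hconn.nonempty
  obtain ⟨x, -, hx⟩ := Finset.exists_max_image Finset.univ (H.dist a) ⟨a, Finset.mem_univ a⟩
  have hx' : ∀ w : (↑S : Set V), H.dist a w ≤ H.dist a x := fun w => hx w (Finset.mem_univ w)
  obtain ⟨b, hb, hba⟩ : ∃ b ∈ S, b ≠ (a : V) := by
    by_contra hc; push_neg at hc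
    have hsub : S ⊆ {(a : V)} := fun z hz => Finset.mem_singleton.mpr (hc z hz)
    have := Finset.card_le_card hsub
    simp only [Finset.card_singleton] at this; omega
  have hxa : x ≠ a := by
    intro h
    have hne : a ≠ (⟨b, hb⟩ : (↑S : Set V)) := by
      intro hh; exact hba (congrArg Subtype.val hh).symm
    have h1 : 0 < H.dist a ⟨b, hb⟩ := hconn.pos_dist_of_ne hne
    have h2' := hx' ⟨b, hb⟩
    rw [h, SimpleGraph.dist_self] at h2'
    omega
  have key : ∀ (w : (↑S : Set V)), w ≠ x → ∀ (p : H.Walk a w),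
      p.length = H.dist a w → x ∉ p.support := by
    intro w hw p hp hxs
    have h1 := SimpleGraph.dist_le (p.takeUntil x hxs)
    have h2' := SimpleGraph.dist_le (p.dropUntil x hxs)
    have h3 : (p.takeUntil x hxs).length + (p.dropUntil x hxs).length = p.length := by
      rw [← SimpleGraph.Walk.length_append, p.take_spec hxs]
    have h4 := hx' w
    have h5 : H.dist x w = 0 := by omega
    rcases SimpleGraph.dist_eq_zero_iff_eq_or_not_reachable.mp h5 with h | h
    · exact hw h.symm
    · exact h (hconn.preconnected x w)
  obtain ⟨p, hp⟩ := hconn.exists_walk_length_eq_dist a x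
  obtain ⟨y, hadj, q, hq⟩ := SimpleGraph.Walk.exists_eq_cons_of_ne hxa p.reverse
  refine ⟨(x : V), x.2, ⟨(y : V), ?_, hadj⟩, ?_⟩
  · refine Finset.mem_erase.mpr ⟨?_, y.2⟩
    intro h; exact hadj.ne' (Subtype.ext h)
  · apply SimpleGraph.induce_connected_of_patches (a : V)
    · refine Finset.mem_coe.mpr (Finset.mem_erase.mpr ⟨?_, a.2⟩)
      intro h; exact hxa (Subtype.ext h.symm)
    · intro w hw
      have hw' := Finset.mem_coe.mp hw
      have hwS : w ∈ S := Finset.mem_of_mem_erase hw'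
      have hwx : w ≠ (x : V) := Finset.ne_of_mem_erase hw'
      obtain ⟨pw, hpw⟩ := hconn.exists_walk_length_eq_dist a ⟨w, hwS⟩
      have hxnot : x ∉ pw.support :=
        key ⟨w, hwS⟩ (fun h => hwx (congrArg Subtype.val h)) pw hpw
      let f : H →g G := (SimpleGraph.Embedding.induce (S : Set V)).toHom
      let pm := pw.map f
      have hsupp : ∀ z ∈ pm.support, z ∈ ((S.erase (x : V) : Finset V) : Set V) := by
        intro z hz
        simp only [pm, SimpleGraph.Walk.support_map, List.mem_map] at hz
        obtain ⟨z', hz', rfl⟩ := hz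
        refine Finset.mem_coe.mpr (Finset.mem_erase.mpr ⟨?_, z'.2⟩)
        intro h
        exact hxnot (by rwa [show z' = x from Subtype.ext h] at hz')
      refine ⟨{z | z ∈ pm.support}, hsupp, pm.start_mem_support, pm.end_mem_support, ?_⟩
      exact (pm.connected_induce_support).preconnected _ _

lemma width_le {n : ℕ} (S : Finset (Fin n → ℤ)) :
    ∀ (hne : S.Nonempty), ((gridGraphN n).induce (S : Set (Fin n → ℤ))).Connected →
    ∑ i, (S.sup' hne (fun z => z i) - S.inf' hne (fun z => z i)) ≤ (S.card : ℤ) - 1 := by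
  classical
  induction S using Finset.strongInductionOn with
  | _ S ih =>
  intro hne hconn
  rcases le_or_gt S.card 1 with hcard | hcard
  · have h1 : S.card = 1 := le_antisymm hcard (Finset.card_pos.mpr hne)
    obtain ⟨a, rfl⟩ := Finset.card_eq_one.mp h1
    simp
  · obtain ⟨x, hxS, ⟨y, hy, hadj⟩, hconn'⟩ := exists_erase_connected hconn hcard
    have hne' : (S.erase x).Nonempty := ⟨y, hy⟩
    have IH := ih (S.erase x) (Finset.erase_ssubset hxS) hne' hconn'
    have hcard' : (S.erase x).card = S.card - 1 := Finset.card_erase_of_mem hxS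
    have hadj1 : ∑ i, |x i - y i| = 1 := hadj
    have step : ∀ i : Fin n, S.sup' hne (fun z => z i) - S.inf' hne (fun z => z i)
        ≤ ((S.erase x).sup' hne' (fun z => z i) - (S.erase x).inf' hne' (fun z => z i))
          + |x i - y i| := by
      intro i
      have h1 : S.sup' hne (fun z => z i) ≤ max (x i) ((S.erase x).sup' hne' (fun z => z i)) := by
        apply Finset.sup'_le
        intro z hz
        rcases eq_or_ne z x with rfl | hzx
        · exact le_max_left _ _
        · exact le_max_of_le_right (Finset.le_sup' (fun z => z i) (Finset.mem_erase.mpr ⟨hzx, hz⟩))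
      have h2 : min (x i) ((S.erase x).inf' hne' (fun z => z i)) ≤ S.inf' hne (fun z => z i) := by
        apply Finset.le_inf'
        intro z hz
        rcases eq_or_ne z x with rfl | hzx
        · exact min_le_left _ _
        · exact min_le_of_right_le (Finset.inf'_le (fun z => z i) (Finset.mem_erase.mpr ⟨hzx, hz⟩))
      have h3 : (S.erase x).inf' hne' (fun z => z i) ≤ y i := Finset.inf'_le (fun z => z i) hy
      have h4 : y i ≤ (S.erase x).sup' hne' (fun z => z i) := Finset.le_sup' (fun z => z i) hy
      exact width_step_int _ _ _ _ _ _ h1 h2 h3 h4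
    have hsum : ∑ i, (S.sup' hne (fun z => z i) - S.inf' hne (fun z => z i))
        ≤ (∑ i, ((S.erase x).sup' hne' (fun z => z i) - (S.erase x).inf' hne' (fun z => z i))) + 1 := by
      have h' := Finset.sum_le_sum (s := (Finset.univ : Finset (Fin n)))
        (fun i _ => step i)
      rw [Finset.sum_add_distrib, hadj1] at h'
      exact h'
    have hc : ((S.erase x).card : ℤ) = (S.card : ℤ) - 1 := by
      rw [hcard', Nat.cast_sub hcard.le, Nat.cast_one]
    linarith [IH, hsum]

lemma exists_walk_grid {n : ℕ} : ∀ (k : ℕ) (x y : Fin n → ℤ),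
    ∑ i, (x i - y i).natAbs = k → ∃ p : (gridGraphN n).Walk x y, p.length = k := by
  intro k
  induction k with
  | zero =>
    intro x y h
    have hxy : x = y := by
      funext i
      have := Finset.sum_eq_zero_iff.mp h i (Finset.mem_univ i)
      omega
    subst hxy
    exact ⟨SimpleGraph.Walk.nil, rfl⟩
  | succ k ih =>
    intro x y h
    have hne : ∃ i, x i ≠ y i := by
      by_contra hc; push_neg at hc
      have : ∑ i, (x i - y i).natAbs = 0 := Finset.sum_eq_zero fun i _ => by
        rw [hc i]; simp
      omega
    obtain ⟨i, hi⟩ := hne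
    set d : ℤ := if x i < y i then 1 else -1 with hd
    set x' := Function.update x i (x i + d) with hx'
    have hadj : (gridGraphN n).Adj x x' := by
      show ∑ j, |x j - x' j| = 1
      rw [Finset.sum_eq_single i]
      · rw [hx', Function.update_self]
        by_cases hlt : x i < y i <;> simp [hd, hlt]
      · intro j _ hj
        rw [hx', Function.update_of_ne hj]; simp
      · intro hmem; exact absurd (Finset.mem_univ i) hmem
    have hsum : ∑ j, (x' j - y j).natAbs = k := by
      have e1 : ∑ j ∈ Finset.univ.erase i, (x' j - y j).natAbs + (x' i - y i).natAbs
          = ∑ j, (x' j - y j).natAbs := Finset.sum_erase_add _ _ (Finset.mem_univ i)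
      have e2 : ∑ j ∈ Finset.univ.erase i, (x j - y j).natAbs + (x i - y i).natAbs
          = ∑ j, (x j - y j).natAbs := Finset.sum_erase_add _ _ (Finset.mem_univ i)
      have e3 : ∑ j ∈ Finset.univ.erase i, (x' j - y j).natAbs
          = ∑ j ∈ Finset.univ.erase i, (x j - y j).natAbs :=
        Finset.sum_congr rfl fun j hj => by
          rw [hx', Function.update_of_ne (Finset.ne_of_mem_erase hj)]
      have e4 : x' i = x i + d := by rw [hx', Function.update_self]
      by_cases hlt : x i < y i
      · rw [hd, if_pos hlt] at e4; omega
      · rw [hd, if_neg hlt] at e4; omega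
    obtain ⟨p, hp⟩ := ih x' y hsum
    exact ⟨SimpleGraph.Walk.cons hadj p, by simp [hp]⟩

end Aux

theorem tristanceN_formula (n : ℕ) (v v' v'' : Fin n → ℤ)
    (h1 : v ≠ v') (h2 : v ≠ v'') (h3 : v' ≠ v'') :
    (tristanceN n v v' v'' : ℤ) =
      ∑ i, (max (v i) (max (v' i) (v'' i)) - min (v i) (min (v' i) (v'' i))) := by
  classical
  set G := gridGraphN n with hG
  set Dn : ℕ := ∑ i, (max (v i) (max (v' i) (v'' i)) - min (v i) (min (v' i) (v'' i))).toNat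
    with hDn
  have hcast : (Dn : ℤ) = ∑ i, (max (v i) (max (v' i) (v'' i)) - min (v i) (min (v' i) (v'' i))) := by
    rw [hDn, Nat.cast_sum]
    refine Finset.sum_congr rfl fun i _ => ?_
    have : min (v i) (min (v' i) (v'' i)) ≤ max (v i) (max (v' i) (v'' i)) :=
      le_trans (min_le_left _ _) (le_max_left _ _)
    omega
  -- the median point
  set m : Fin n → ℤ := fun i => v i + v' i + v'' i - max (v i) (max (v' i) (v'' i))
      - min (v i) (min (v' i) (v'' i)) with hm
  obtain ⟨p1, hp1⟩ := exists_walk_grid (∑ i, (v i - m i).natAbs) v m rfl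
  obtain ⟨p2, hp2⟩ := exists_walk_grid (∑ i, (v' i - m i).natAbs) v' m rfl
  obtain ⟨p3, hp3⟩ := exists_walk_grid (∑ i, (v'' i - m i).natAbs) v'' m rfl
  have hmed : (∑ i, (v i - m i).natAbs) + (∑ i, (v' i - m i).natAbs)
      + (∑ i, (v'' i - m i).natAbs) = Dn := by
    rw [hDn, ← Finset.sum_add_distrib, ← Finset.sum_add_distrib]
    refine Finset.sum_congr rfl fun i _ => ?_
    simp only [hm]; omega
  set S : Finset (Fin n → ℤ) :=
    p1.support.toFinset ∪ p2.support.toFinset ∪ p3.support.toFinset with hS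
  have hvS : v ∈ S := by
    simp only [hS, Finset.mem_union, List.mem_toFinset]
    exact Or.inl (Or.inl p1.start_mem_support)
  have hv'S : v' ∈ S := by
    simp only [hS, Finset.mem_union, List.mem_toFinset]
    exact Or.inl (Or.inr p2.start_mem_support)
  have hv''S : v'' ∈ S := by
    simp only [hS, Finset.mem_union, List.mem_toFinset]
    exact Or.inr p3.start_mem_support
  have hm1 : m ∈ p1.support.toFinset := List.mem_toFinset.mpr p1.end_mem_support
  have hm2 : m ∈ p2.support.toFinset := List.mem_toFinset.mpr p2.end_mem_support
  have hm3 : m ∈ p3.support.toFinset := List.mem_toFinset.mpr p3.end_mem_support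
  have hic : ∀ {u w : Fin n → ℤ} (p : G.Walk u w),
      (G.induce ((p.support.toFinset : Finset (Fin n → ℤ)) : Set (Fin n → ℤ))).Connected := by
    intro u w p
    rw [List.coe_toFinset]
    exact p.connected_induce_support
  have hAB : (G.induce ((p1.support.toFinset ∪ p2.support.toFinset : Finset (Fin n → ℤ)) :
      Set (Fin n → ℤ))).Connected := by
    rw [Finset.coe_union]
    exact SimpleGraph.induce_union_connected (hic p1).preconnected (hic p2).preconnected
      ⟨m, Set.mem_inter (Finset.mem_coe.mpr hm1) (Finset.mem_coe.mpr hm2)⟩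
  have hconn : (G.induce (S : Set (Fin n → ℤ))).Connected := by
    rw [hS, Finset.coe_union]
    exact SimpleGraph.induce_union_connected hAB.preconnected (hic p3).preconnected
      ⟨m, Set.mem_inter (Finset.mem_coe.mpr (Finset.mem_union_left _ hm1))
        (Finset.mem_coe.mpr hm3)⟩
  have hScard : S.card ≤ Dn + 1 := by
    have hsub : S ⊆ p1.support.toFinset ∪ (p2.support.toFinset.erase m)
        ∪ (p3.support.toFinset.erase m) := by
      intro z hz
      simp only [hS, Finset.mem_union] at hz
      simp only [Finset.mem_union, Finset.mem_erase]
      rcases hz with (hz | hz) | hz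
      · exact Or.inl (Or.inl hz)
      · rcases eq_or_ne z m with rfl | hzm
        · exact Or.inl (Or.inl hm1)
        · exact Or.inl (Or.inr ⟨hzm, hz⟩)
      · rcases eq_or_ne z m with rfl | hzm
        · exact Or.inl (Or.inl hm1)
        · exact Or.inr ⟨hzm, hz⟩
    have hc1 : p1.support.toFinset.card ≤ (∑ i, (v i - m i).natAbs) + 1 := by
      calc p1.support.toFinset.card ≤ p1.support.length := p1.support.toFinset_card_le
        _ = p1.length + 1 := p1.length_support
        _ = _ := by rw [hp1]
    have hc2 : p2.support.toFinset.card ≤ (∑ i, (v' i - m i).natAbs) + 1 := by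
      calc p2.support.toFinset.card ≤ p2.support.length := p2.support.toFinset_card_le
        _ = p2.length + 1 := p2.length_support
        _ = _ := by rw [hp2]
    have hc3 : p3.support.toFinset.card ≤ (∑ i, (v'' i - m i).natAbs) + 1 := by
      calc p3.support.toFinset.card ≤ p3.support.length := p3.support.toFinset_card_le
        _ = p3.length + 1 := p3.length_support
        _ = _ := by rw [hp3]
    have he2 : (p2.support.toFinset.erase m).card = p2.support.toFinset.card - 1 :=
      Finset.card_erase_of_mem hm2
    have he3 : (p3.support.toFinset.erase m).card = p3.support.toFinset.card - 1 :=
      Finset.card_erase_of_mem hm3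
    have := Finset.card_le_card hsub
    have hu := Finset.card_union_le (p1.support.toFinset ∪ p2.support.toFinset.erase m)
      (p3.support.toFinset.erase m)
    have hu2 := Finset.card_union_le p1.support.toFinset (p2.support.toFinset.erase m)
    have hm2pos : 1 ≤ p2.support.toFinset.card := Finset.card_pos.mpr ⟨m, hm2⟩
    have hm3pos : 1 ≤ p3.support.toFinset.card := Finset.card_pos.mpr ⟨m, hm3⟩
    omega
  -- lower bound for all members
  have hlow : ∀ k ∈ {k : ℕ | ∃ S : Finset (Fin n → ℤ), v ∈ S ∧ v' ∈ S ∧ v'' ∈ S ∧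
      (G.induce (S : Set (Fin n → ℤ))).Connected ∧ S.card = k + 1}, Dn ≤ k := by
    rintro k ⟨T, hv1, hv2, hv3, hTconn, hTcard⟩
    have hTne : T.Nonempty := ⟨v, hv1⟩
    have hw := width_le T hTne hTconn
    have hpt : (Dn : ℤ) ≤ ∑ i, (T.sup' hTne (fun z => z i) - T.inf' hTne (fun z => z i)) := by
      rw [hcast]
      refine Finset.sum_le_sum fun i _ => ?_
      have hs1 : v i ≤ T.sup' hTne (fun z => z i) := Finset.le_sup' (fun z => z i) hv1
      have hs2 : v' i ≤ T.sup' hTne (fun z => z i) := Finset.le_sup' (fun z => z i) hv2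
      have hs3 : v'' i ≤ T.sup' hTne (fun z => z i) := Finset.le_sup' (fun z => z i) hv3
      have hi1 : T.inf' hTne (fun z => z i) ≤ v i := Finset.inf'_le (fun z => z i) hv1
      have hi2 : T.inf' hTne (fun z => z i) ≤ v' i := Finset.inf'_le (fun z => z i) hv2
      have hi3 : T.inf' hTne (fun z => z i) ≤ v'' i := Finset.inf'_le (fun z => z i) hv3
      exact three_point_width_int _ _ _ _ _ hs1 hs2 hs3 hi1 hi2 hi3
    have hfin : (Dn : ℤ) ≤ (T.card : ℤ) - 1 := le_trans hpt hw
    rw [hTcard] at hfin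
    push_cast at hfin
    exact_mod_cast (by linarith : (Dn : ℤ) ≤ (k : ℤ))
  have hSpos : 1 ≤ S.card := Finset.card_pos.mpr ⟨v, hvS⟩
  have hmem : S.card - 1 ∈ {k : ℕ | ∃ S : Finset (Fin n → ℤ), v ∈ S ∧ v' ∈ S ∧ v'' ∈ S ∧
      (G.induce (S : Set (Fin n → ℤ))).Connected ∧ S.card = k + 1} :=
    ⟨S, hvS, hv'S, hv''S, hconn, by omega⟩
  have htri : tristanceN n v v' v'' = Dn := by
    refine le_antisymm ?_ ?_
    · have h := Nat.sInf_le hmem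
      have : S.card - 1 ≤ Dn := by omega
      exact le_trans h this
    · exact le_csInf ⟨_, hmem⟩ hlow
  rw [htri, hcast]
end
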